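/- arXiv:2507.12748 — 8 statements merged into one kernel-verified Lean document; each statement's English description precedes it below -/
import Mathlib

section
/- Let κ₁, …, κₙ ≥ 0 be integers summing to m, let p, p' : Fin m → Fin n be (m,n)-partitions with shape (κ₁, …, κₙ), and let t ∈ ℕ. Then the following are equivalent: (a) there exists a resolution of (p, p') of length t, i.e., a sequence (p₀, …, p_t) of functions Fin m → Fin n with p₀ = p, p_t = p', and for each 1 ≤ i ≤ t there is a p_{i−1}-cycle τ_i with p_i = p_{i−1} ∘ τ_i; (b) there exists a p-cycle decomposition of (p, p') of length t, i.e., p-cycles σ₁, …, σ_t with p' = p ∘ σ_t ∘ ⋯ ∘ σ₁. -/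
/-- The support of a permutation of `Fin m`, as a set. -/
def psupp {m : ℕ} (π : Equiv.Perm (Fin m)) : Set (Fin m) := {x | π x ≠ x}

/-- A permutation `π` is `p`-balanced if `p` is injective on the support of `π`. -/
def IsBalanced {m n : ℕ} (p : Fin m → Fin n) (π : Equiv.Perm (Fin m)) : Prop :=
  Set.InjOn p (psupp π)

/-- A `p`-cycle is a `p`-balanced permutation that is the identity or a cycle. -/
def IsPCycle {m n : ℕ} (p : Fin m → Fin n) (π : Equiv.Perm (Fin m)) : Prop :=
  IsBalanced p π ∧ (π = 1 ∨ π.IsCycle)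

/-- The size of the fiber of `p` over `i`. -/
def fiberCard {m n : ℕ} (p : Fin m → Fin n) (i : Fin n) : ℕ :=
  (Finset.univ.filter fun x => p x = i).card

lemma isPCycle_conj {m n : ℕ} (p : Fin m → Fin n) (π σ : Equiv.Perm (Fin m))
    (h : IsPCycle p σ) : IsPCycle (p ∘ ⇑π) (π⁻¹ * σ * π) := by
  constructor
  · intro x hx y hy hxy
    have hx' : π x ∈ psupp σ := by
      simp only [psupp, Set.mem_setOf_eq, Equiv.Perm.mul_apply, ne_eq] at hx ⊢
      intro hc; exact hx (by rw [hc]; simp)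
    have hy' : π y ∈ psupp σ := by
      simp only [psupp, Set.mem_setOf_eq, Equiv.Perm.mul_apply, ne_eq] at hy ⊢
      intro hc; exact hy (by rw [hc]; simp)
    exact π.injective (h.1 hx' hy' hxy)
  · rcases h.2 with h1 | hc
    · left; simp [h1]
    · right; simpa using hc.conj (g := π⁻¹)

lemma isPCycle_conj' {m n : ℕ} (p : Fin m → Fin n) (π τ : Equiv.Perm (Fin m))
    (h : IsPCycle (p ∘ ⇑π) τ) : IsPCycle p (π * τ * π⁻¹) := by
  have := isPCycle_conj (p ∘ ⇑π) π⁻¹ τ h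
  have e1 : (p ∘ ⇑π) ∘ ⇑π⁻¹ = p := by funext x; simp
  have e2 : π⁻¹⁻¹ * τ * π⁻¹ = π * τ * π⁻¹ := by group
  rwa [e1, e2] at this

def Res {m n : ℕ} (t : ℕ) (p p' : Fin m → Fin n) : Prop :=
  ∃ q : Fin (t + 1) → Fin m → Fin n,
      q 0 = p ∧ q (Fin.last t) = p' ∧
      ∀ i : Fin t, ∃ τ : Equiv.Perm (Fin m),
        IsPCycle (q i.castSucc) τ ∧ q i.succ = q i.castSucc ∘ ⇑τ

def Dec {m n : ℕ} (t : ℕ) (p p' : Fin m → Fin n) : Prop :=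
  ∃ L : List (Equiv.Perm (Fin m)),
      L.length = t ∧ (∀ σ ∈ L, IsPCycle p σ) ∧ p' = p ∘ ⇑L.prod

lemma res_zero {m n : ℕ} (p p' : Fin m → Fin n) : Res 0 p p' ↔ p = p' := by
  constructor
  · rintro ⟨q, h0, hl, -⟩
    rw [← h0, ← hl]; rfl
  · rintro rfl
    exact ⟨fun _ => p, rfl, rfl, fun i => i.elim0⟩

lemma res_succ {m n : ℕ} (t : ℕ) (p p' : Fin m → Fin n) :
    Res (t + 1) p p' ↔
      ∃ p'' : Fin m → Fin n, Res t p p'' ∧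
        ∃ τ : Equiv.Perm (Fin m), IsPCycle p'' τ ∧ p' = p'' ∘ ⇑τ := by
  constructor
  · rintro ⟨q, h0, hl, hstep⟩
    refine ⟨q (Fin.last t).castSucc, ⟨q ∘ Fin.castSucc, by simpa using h0, rfl, ?_⟩, ?_⟩
    · intro i
      obtain ⟨τ, hτ1, hτ2⟩ := hstep i.castSucc
      refine ⟨τ, by simpa using hτ1, ?_⟩
      have : (i.castSucc : Fin (t+1)).succ = (i.succ).castSucc := by
        exact (Fin.succ_castSucc i).symm
      show q i.succ.castSucc = q i.castSucc.castSucc ∘ ⇑τ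
      rw [← this, hτ2]
    · obtain ⟨τ, hτ1, hτ2⟩ := hstep (Fin.last t)
      refine ⟨τ, hτ1, ?_⟩
      rw [← hl, ← hτ2, Fin.succ_last]
  · rintro ⟨p'', ⟨q, h0, hl, hstep⟩, τ, hτ1, hτ2⟩
    refine ⟨Fin.snoc q p', ?_, by simp, ?_⟩
    · rw [show (0 : Fin (t+2)) = (0 : Fin (t+1)).castSucc by simp, Fin.snoc_castSucc, h0]
    intro i
    induction i using Fin.lastCases with
    | last =>
      refine ⟨τ, ?_, ?_⟩
      · have : (Fin.snoc q p' : Fin (t+2) → _) (Fin.last t).castSucc = p'' := by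
          rw [Fin.snoc_castSucc, hl]
        rw [this]; exact hτ1
      · rw [Fin.succ_last, Fin.snoc_last, Fin.snoc_castSucc, hl]; exact hτ2
    | cast j =>
      obtain ⟨σ, hσ1, hσ2⟩ := hstep j
      refine ⟨σ, ?_, ?_⟩
      · rw [show (j.castSucc : Fin (t+1)).castSucc = (j.castSucc).castSucc from rfl,
          Fin.snoc_castSucc]
        exact hσ1
      · rw [show (j.castSucc : Fin (t+1)).succ = (j.succ).castSucc from (Fin.succ_castSucc j).symm]
        rw [Fin.snoc_castSucc, Fin.snoc_castSucc, hσ2]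

lemma res_iff_dec {m n : ℕ} (t : ℕ) (p : Fin m → Fin n) :
    ∀ p' : Fin m → Fin n, Res t p p' ↔ Dec t p p' := by
  induction t with
  | zero =>
    intro p'
    rw [res_zero]
    constructor
    · rintro rfl
      exact ⟨[], rfl, by simp, by simp⟩
    · rintro ⟨L, hL, -, rfl⟩
      rw [List.length_eq_zero_iff] at hL
      subst hL; simp
  | succ t ih =>
    intro p'
    rw [res_succ]
    constructor
    · rintro ⟨p'', hres, τ, hτ1, hτ2⟩
      obtain ⟨L, hL, hLc, hLp⟩ := (ih p'').mp hres
      subst hLp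
      refine ⟨(L.prod * τ * L.prod⁻¹) :: L, by simp [hL], ?_, ?_⟩
      · intro σ hσ
        rcases List.mem_cons.mp hσ with rfl | h
        · exact isPCycle_conj' p L.prod τ hτ1
        · exact hLc σ h
      · rw [hτ2]
        funext x
        simp [Function.comp, Equiv.Perm.mul_apply]
    · rintro ⟨L, hL, hLc, hLp⟩
      obtain ⟨σ, L', rfl⟩ : ∃ σ L', L = σ :: L' := by
        cases L with
        | nil => simp at hL
        | cons a l => exact ⟨a, l, rfl⟩
      simp only [List.length_cons, Nat.succ_inj] at hL
      refine ⟨p ∘ ⇑L'.prod, (ih _).mpr ⟨L', hL, fun τ h => hLc τ (List.mem_cons_of_mem _ h), rfl⟩,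
        L'.prod⁻¹ * σ * L'.prod, ?_, ?_⟩
      · have := isPCycle_conj p L'.prod σ (hLc σ List.mem_cons_self)
        simpa using this
      · rw [hLp]
        funext x
        simp [Function.comp, Equiv.Perm.mul_apply]

/-- Resolutions of `(p, p')` of length `t` exist iff `p`-cycle decompositions of
`(p, p')` of length `t` exist. -/
theorem resolution_iff_pCycle_decomposition
    (m n t : ℕ) (κ : Fin n → ℕ) (hsum : ∑ i, κ i = m)
    (p p' : Fin m → Fin n)
    (hp : ∀ i, fiberCard p i = κ i) (hp' : ∀ i, fiberCard p' i = κ i) :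
    (∃ q : Fin (t + 1) → Fin m → Fin n,
        q 0 = p ∧ q (Fin.last t) = p' ∧
        ∀ i : Fin t, ∃ τ : Equiv.Perm (Fin m),
          IsPCycle (q i.castSucc) τ ∧ q i.succ = q i.castSucc ∘ ⇑τ) ↔
    (∃ L : List (Equiv.Perm (Fin m)),
        L.length = t ∧ (∀ σ ∈ L, IsPCycle p σ) ∧ p' = p ∘ ⇑L.prod) := by
  exact res_iff_dec t p p'
end

section
/- Let κ₁ ≥ ⋯ ≥ κₙ ≥ 0 be integers summing to m, and let p, p' : Fin m → Fin n be (m,n)-partitions with shape (κ₁, …, κₙ). Then there exist p-cycles σ₁, …, σ_{κ₁−κ₂} of Fin m and p-balanced permutations π₁, …, π_{κ₂} of Fin m, all with pairwise disjoint supports, such that p' = p ∘ σ_{κ₁−κ₂} ∘ ⋯ ∘ σ₁ ∘ π_{κ₂} ∘ ⋯ ∘ π₁. -/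
namespace BD

variable {m n : ℕ}

/-- Disjointness of supports. -/
def PD {m : ℕ} (a b : Equiv.Perm (Fin m)) : Prop := Disjoint (psupp a) (psupp b)

lemma psupp_one : psupp (1 : Equiv.Perm (Fin m)) = ∅ := by
  ext z; simp [psupp]

lemma apply_ne {π : Equiv.Perm (Fin m)} {z} (h : π z ≠ z) : π (π z) ≠ π z :=
  fun H => h (π.injective H)

lemma prod_eq_self {L : List (Equiv.Perm (Fin m))} {z} (h : ∀ ρ ∈ L, ρ z = z) :
    L.prod z = z := by
  induction L with
  | nil => simp
  | cons a t ih =>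
    rw [List.prod_cons, Equiv.Perm.mul_apply, ih (fun ρ hρ => h ρ (by simp [hρ]))]
    exact h a (by simp)

lemma prod_apply_eq {L : List (Equiv.Perm (Fin m))} (hpw : L.Pairwise PD) {ρ} (hρ : ρ ∈ L)
    {z} (hz : ρ z ≠ z) : L.prod z = ρ z := by
  induction L with
  | nil => simp at hρ
  | cons a t ih =>
    obtain ⟨ha, ht⟩ := List.pairwise_cons.mp hpw
    rw [List.prod_cons, Equiv.Perm.mul_apply]
    rcases List.mem_cons.mp hρ with rfl | hρt
    · rw [prod_eq_self (fun b hb => ?_)]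
      by_contra hb'
      exact (Set.disjoint_left.mp (ha b hb) hz) hb'
    · rw [ih ht hρt]
      by_contra hb'
      exact (Set.disjoint_left.mp (ha ρ hρt) hb') (apply_ne hz)



/-- number of elements of `S` with `q`-value `i` -/
def deg (q : Fin m → Fin n) (S : Finset (Fin m)) (i : Fin n) : ℕ :=
  (S.filter fun z => q z = i).card

def Mv (p p' : Fin m → Fin n) (S : Finset (Fin m)) : Prop := ∀ z ∈ S, p z ≠ p' z

def Bal (p p' : Fin m → Fin n) (S : Finset (Fin m)) : Prop :=
  ∀ i, deg p S i = deg p' S i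

/-- decomposition data for `S` -/
def Good (p p' : Fin m → Fin n) (S : Finset (Fin m)) (L : List (Equiv.Perm (Fin m))) : Prop :=
  (∀ ρ ∈ L, IsBalanced p ρ) ∧
  (∀ ρ ∈ L, ∀ z : Fin m, ρ z ≠ z → z ∈ S ∧ p (ρ z) = p' z) ∧
  L.Pairwise PD ∧
  (∀ z ∈ S, ∃ ρ ∈ L, ρ z ≠ z)

lemma deg_split (q : Fin m → Fin n) {S C : Finset (Fin m)} (hC : C ⊆ S) (i : Fin n) :
    deg q (S \ C) i + deg q C i = deg q S i := by
  unfold deg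
  rw [← Finset.card_union_of_disjoint, ← Finset.filter_union,
    Finset.sdiff_union_of_subset hC]
  exact Finset.disjoint_filter_filter Finset.sdiff_disjoint

lemma deg_C_eq (p p' : Fin m → Fin n) {C : Finset (Fin m)} (ρ : Equiv.Perm (Fin m))
    (hmem : ∀ z, z ∈ C ↔ ρ z ≠ z) (hcor : ∀ z ∈ C, p (ρ z) = p' z) (i : Fin n) :
    deg p' C i = deg p C i := by
  have hCinv : ∀ z ∈ C, ρ z ∈ C := fun z hz => (hmem _).mpr (apply_ne ((hmem z).mp hz))
  have hCinv' : ∀ w ∈ C, ρ.symm w ∈ C := by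
    intro w hw
    by_contra h
    have : ρ (ρ.symm w) = ρ.symm w := by
      by_contra h2
      exact h ((hmem _).mpr h2)
    rw [Equiv.apply_symm_apply] at this
    exact h (this ▸ hw)
  apply Finset.card_bij (fun z _ => ρ z)
  · intro z hz
    simp only [Finset.mem_filter] at hz ⊢
    exact ⟨hCinv z hz.1, by rw [hcor z hz.1, hz.2]⟩
  · intro a ha b hb hab
    exact ρ.injective hab
  · intro w hw
    simp only [Finset.mem_filter] at hw ⊢
    refine ⟨ρ.symm w, ⟨hCinv' w hw.1, ?_⟩, by simp⟩
    rw [← hcor _ (hCinv' w hw.1), Equiv.apply_symm_apply]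
    exact hw.2

/-- removing a correct "part" `C` keeps the configuration balanced -/
lemma remove_part {p p' : Fin m → Fin n} {S C : Finset (Fin m)} (hC : C ⊆ S)
    (ρ : Equiv.Perm (Fin m))
    (hmem : ∀ z, z ∈ C ↔ ρ z ≠ z) (hcor : ∀ z ∈ C, p (ρ z) = p' z)
    (hMv : Mv p p' S) (hBal : Bal p p' S) :
    Mv p p' (S \ C) ∧ Bal p p' (S \ C) ∧
      ∀ i, deg p (S \ C) i + deg p C i = deg p S i := by
  refine ⟨fun z hz => hMv z (Finset.mem_sdiff.mp hz).1, fun i => ?_, fun i => deg_split p hC i⟩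
  have h1 := deg_split p hC i
  have h2 := deg_split p' hC i
  have h3 := deg_C_eq p p' ρ hmem hcor i
  have h4 := hBal i
  omega

lemma good_pad {p p' : Fin m → Fin n} {S : Finset (Fin m)} {L : List (Equiv.Perm (Fin m))}
    (h : Good p p' S L) (j : ℕ) : Good p p' S (L ++ List.replicate j 1) := by
  obtain ⟨h1, h2, h3, h4⟩ := h
  have hone : ∀ ρ ∈ List.replicate j (1 : Equiv.Perm (Fin m)), ρ = 1 :=
    fun ρ hρ => List.eq_of_mem_replicate hρ
  refine ⟨?_, ?_, ?_, ?_⟩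
  · intro ρ hρ
    rcases List.mem_append.mp hρ with h | h
    · exact h1 ρ h
    · rw [hone ρ h]
      intro x hx
      simp [psupp_one] at hx
  · intro ρ hρ z hz
    rcases List.mem_append.mp hρ with h | h
    · exact h2 ρ h z hz
    · rw [hone ρ h] at hz; simp at hz
  · rw [List.pairwise_append]
    refine ⟨h3, ?_, ?_⟩
    · apply List.pairwise_replicate.mpr
      right
      unfold PD
      rw [psupp_one]
      exact Set.disjoint_empty _
    · intro a _ b hb
      rw [hone b hb]
      unfold PD
      rw [psupp_one]
      exact Set.disjoint_empty _
  · intro z hz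
    obtain ⟨ρ, hρ, h⟩ := h4 z hz
    exact ⟨ρ, List.mem_append.mpr (Or.inl hρ), h⟩

lemma good_union {p p' : Fin m → Fin n} {S S' : Finset (Fin m)}
    {L1 L2 : List (Equiv.Perm (Fin m))} (hS' : S' ⊆ S)
    (h1 : Good p p' (S \ S') L1) (h2 : Good p p' S' L2) : Good p p' S (L1 ++ L2) := by
  obtain ⟨a1, b1, c1, d1⟩ := h1
  obtain ⟨a2, b2, c2, d2⟩ := h2
  refine ⟨?_, ?_, ?_, ?_⟩
  · intro ρ hρ
    rcases List.mem_append.mp hρ with h | h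
    exacts [a1 ρ h, a2 ρ h]
  · intro ρ hρ z hz
    rcases List.mem_append.mp hρ with h | h
    · exact ⟨(Finset.mem_sdiff.mp (b1 ρ h z hz).1).1, (b1 ρ h z hz).2⟩
    · exact ⟨hS' (b2 ρ h z hz).1, (b2 ρ h z hz).2⟩
  · rw [List.pairwise_append]
    refine ⟨c1, c2, fun a ha b hb => Set.disjoint_left.mpr fun z hza hzb => ?_⟩
    exact (Finset.mem_sdiff.mp (b1 a ha z hza).1).2 (b2 b hb z hzb).1
  · intro z hz
    by_cases h : z ∈ S'
    · obtain ⟨ρ, hρ, hh⟩ := d2 z h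
      exact ⟨ρ, List.mem_append.mpr (Or.inr hρ), hh⟩
    · obtain ⟨ρ, hρ, hh⟩ := d1 z (Finset.mem_sdiff.mpr ⟨hz, h⟩)
      exact ⟨ρ, List.mem_append.mpr (Or.inl hρ), hh⟩

lemma good_eval {p p' : Fin m → Fin n} {S : Finset (Fin m)} {L : List (Equiv.Perm (Fin m))}
    (hS : ∀ z, z ∉ S → p z = p' z) (h : Good p p' S L) :
    p' = p ∘ ⇑L.prod := by
  obtain ⟨_, b1, c1, d1⟩ := h
  funext z
  simp only [Function.comp_apply]
  by_cases hz : ∃ ρ ∈ L, ρ z ≠ z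
  · obtain ⟨ρ, hρ, hne⟩ := hz
    rw [prod_apply_eq c1 hρ hne, (b1 ρ hρ z hne).2]
  · push_neg at hz
    rw [prod_eq_self hz]
    by_cases hzS : z ∈ S
    · obtain ⟨ρ, hρ, h⟩ := d1 z hzS
      exact absurd (hz ρ hρ) h
    · exact (hS z hzS).symm


/-- a simple cycle datum inside `S` -/
def Cyc (p p' : Fin m → Fin n) (S : Finset (Fin m)) (l : List (Fin m)) : Prop :=
  l ≠ [] ∧ (∀ z ∈ l, z ∈ S) ∧ (l.map p).Nodup ∧
  l.Chain' (fun a b => p' a = p b) ∧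
  ∀ (h : l ≠ []), p' (l.getLast h) = p (l.head h)

lemma cyc_nodup {p p' : Fin m → Fin n} {S l} (hc : Cyc p p' S l) : l.Nodup :=
  List.Nodup.of_map p hc.2.2.1

lemma cyc_two_le {p p' : Fin m → Fin n} {S l} (hMv : Mv p p' S) (hc : Cyc p p' S l) :
    2 ≤ l.length := by
  obtain ⟨hne, hmem, _, _, hcl⟩ := hc
  rcases l with _ | ⟨a, _ | ⟨b, t⟩⟩
  · exact absurd rfl hne
  · exact absurd (hcl hne).symm (hMv a (hmem a (by simp)))
  · simp

lemma cyc_getElem {p p' : Fin m → Fin n} {S l} (hc : Cyc p p' S l) {i : ℕ}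
    (h : i < l.length) :
    p' l[i] = p (l[(i+1) % l.length]'(Nat.mod_lt _ (by omega))) := by
  obtain ⟨hne, hmem, hnd, hch, hcl⟩ := hc
  rcases Nat.lt_or_ge (i+1) l.length with h2 | h2
  · have := List.isChain_iff_getElem.mp hch i (by omega)
    simp only [Nat.mod_eq_of_lt h2]
    exact this
  · have hi : i = l.length - 1 := by omega
    have h0 : (i+1) % l.length = 0 := by
      have : i + 1 = l.length := by omega
      rw [this, Nat.mod_self]
    have := hcl hne
    rw [List.getLast_eq_getElem, List.head_eq_getElem] at this
    simp_rw [h0, hi]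
    exact this

lemma cyc_perm {p p' : Fin m → Fin n} {S l} (hMv : Mv p p' S) (hc : Cyc p p' S l) :
    ∃ ρ : Equiv.Perm (Fin m), ρ.IsCycle ∧ (∀ z, z ∈ l ↔ ρ z ≠ z) ∧
      ∀ z ∈ l, p (ρ z) = p' z := by
  have hnd := cyc_nodup hc
  have h2 := cyc_two_le hMv hc
  refine ⟨l.formPerm, List.isCycle_formPerm hnd h2, fun z => ⟨fun hz => ?_, fun hz => ?_⟩, ?_⟩
  · obtain ⟨i, hi, rfl⟩ := List.mem_iff_getElem.mp hz
    rw [List.formPerm_apply_getElem _ hnd i hi]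
    intro hEq
    have hii := (List.Nodup.getElem_inj_iff hnd).mp hEq
    rcases Nat.lt_or_ge (i+1) l.length with hlt | hge
    · rw [Nat.mod_eq_of_lt hlt] at hii; omega
    · have hh : i + 1 = l.length := by omega
      rw [hh, Nat.mod_self] at hii
      omega
  · exact List.mem_of_formPerm_apply_ne hz
  · intro z hz
    obtain ⟨i, hi, rfl⟩ := List.mem_iff_getElem.mp hz
    rw [List.formPerm_apply_getElem _ hnd i hi]
    exact (cyc_getElem hc hi).symm


lemma cyc_mono {p p' : Fin m → Fin n} {S S' : Finset (Fin m)} {l} (hS : S' ⊆ S)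
    (hc : Cyc p p' S' l) : Cyc p p' S l :=
  ⟨hc.1, fun z hz => hS (hc.2.1 z hz), hc.2.2⟩

lemma exists_cyc_aux {p p' : Fin m → Fin n} {S : Finset (Fin m)}
    (hMv : Mv p p' S) (hBal : Bal p p' S) :
    ∀ (fuel : ℕ) (l : List (Fin m)), l ≠ [] → (∀ z ∈ l, z ∈ S) → (l.map p).Nodup →
      l.Chain' (fun a b => p' a = p b) → S.card ≤ l.length + fuel →
      ∃ c, Cyc p p' S c := by
  intro fuel
  induction fuel with
  | zero =>
    intro l hne hmem hnd hch hcard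
    by_cases hcmem : p' (l.getLast hne) ∈ l.map p
    · -- close up a cycle
      obtain ⟨i, hi, hpi⟩ := List.mem_iff_getElem.mp hcmem
      rw [List.getElem_map] at hpi
      have hilen : i < l.length := by simpa using hi
      have hdne : l.drop i ≠ [] := by
        apply List.ne_nil_of_length_pos
        rw [List.length_drop]
        omega
      refine ⟨l.drop i, hdne, fun z hz => hmem z (List.mem_of_mem_drop hz), ?_, hch.drop i, ?_⟩
      · exact List.Nodup.sublist ((List.drop_sublist i l).map p) hnd
      · intro hh
        rw [List.getLast_drop, List.head_drop]
        exact (List.getLast_congr _ _ rfl ▸ hpi.symm)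
    · -- extension impossible: cardinality contradiction
      exfalso
      have hlnd : l.Nodup := List.Nodup.of_map p hnd
      have htS : l.getLast hne ∈ S := hmem _ (List.getLast_mem hne)
      have h1 : 0 < deg p' S (p' (l.getLast hne)) :=
        Finset.card_pos.mpr ⟨l.getLast hne, Finset.mem_filter.mpr ⟨htS, rfl⟩⟩
      have h2 : 0 < deg p S (p' (l.getLast hne)) := by rw [hBal]; exact h1
      obtain ⟨z', hz'⟩ := Finset.card_pos.mp h2
      rw [Finset.mem_filter] at hz'
      have hz'l : z' ∉ l := fun h => hcmem (List.mem_map.mpr ⟨z', h, hz'.2⟩)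
      have hsub : insert z' l.toFinset ⊆ S := by
        intro w hw
        rcases Finset.mem_insert.mp hw with rfl | hw
        · exact hz'.1
        · exact hmem w (List.mem_toFinset.mp hw)
      have := Finset.card_le_card hsub
      rw [Finset.card_insert_of_notMem (fun h => hz'l (List.mem_toFinset.mp h)),
        List.toFinset_card_of_nodup hlnd] at this
      omega
  | succ f ih =>
    intro l hne hmem hnd hch hcard
    by_cases hcmem : p' (l.getLast hne) ∈ l.map p
    · obtain ⟨i, hi, hpi⟩ := List.mem_iff_getElem.mp hcmem
      rw [List.getElem_map] at hpi
      have hilen : i < l.length := by simpa using hi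
      have hdne : l.drop i ≠ [] := by
        apply List.ne_nil_of_length_pos
        rw [List.length_drop]
        omega
      refine ⟨l.drop i, hdne, fun z hz => hmem z (List.mem_of_mem_drop hz), ?_, hch.drop i, ?_⟩
      · exact List.Nodup.sublist ((List.drop_sublist i l).map p) hnd
      · intro hh
        rw [List.getLast_drop, List.head_drop]
        exact (List.getLast_congr _ _ rfl ▸ hpi.symm)
    · have hlnd : l.Nodup := List.Nodup.of_map p hnd
      have htS : l.getLast hne ∈ S := hmem _ (List.getLast_mem hne)
      have h1 : 0 < deg p' S (p' (l.getLast hne)) :=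
        Finset.card_pos.mpr ⟨l.getLast hne, Finset.mem_filter.mpr ⟨htS, rfl⟩⟩
      have h2 : 0 < deg p S (p' (l.getLast hne)) := by rw [hBal]; exact h1
      obtain ⟨z', hz'⟩ := Finset.card_pos.mp h2
      rw [Finset.mem_filter] at hz'
      have hz'l : z' ∉ l := fun h => hcmem (List.mem_map.mpr ⟨z', h, hz'.2⟩)
      apply ih (l ++ [z'])
      · simp
      · intro z hz
        rcases List.mem_append.mp hz with h | h
        · exact hmem z h
        · rw [List.mem_singleton.mp h]; exact hz'.1
      · rw [List.map_append]
        apply List.Nodup.append hnd (by simp)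
        intro a ha hb
        simp only [List.map_cons, List.map_nil, List.mem_singleton] at hb
        rw [hb, hz'.2] at ha
        exact hcmem ha
      · rw [List.Chain', List.isChain_append]
        refine ⟨hch, by simp, fun x hx y hy => ?_⟩
        rw [List.getLast?_eq_getLast hne, Option.mem_def, Option.some_inj] at hx
        simp only [List.head?_cons, Option.mem_def, Option.some_inj] at hy
        rw [← hx, ← hy] at *
        rw [hz'.2]
      · rw [List.length_append]
        simp only [List.length_cons, List.length_nil]
        omega

lemma exists_cyc {p p' : Fin m → Fin n} :
    ∀ (N : ℕ) (S : Finset (Fin m)), S.card ≤ N → Mv p p' S → Bal p p' S →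
      ∀ z₀ ∈ S, ∃ c, Cyc p p' S c ∧ z₀ ∈ c := by
  intro N
  induction N with
  | zero =>
    intro S hcard _ _ z₀ hz₀
    rw [Nat.le_zero, Finset.card_eq_zero] at hcard
    subst hcard
    simp at hz₀
  | succ N ih =>
    intro S hcard hMv hBal z₀ hz₀
    obtain ⟨c, hc⟩ := exists_cyc_aux hMv hBal S.card [z₀] (by simp)
      (by simpa using hz₀) (by simp) (List.isChain_singleton _) (by simp)
    by_cases hz : z₀ ∈ c
    · exact ⟨c, hc, hz⟩
    · obtain ⟨ρ, hcyc, hiff, hcor⟩ := cyc_perm hMv hc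
      have hCS : c.toFinset ⊆ S := fun z hz => hc.2.1 z (List.mem_toFinset.mp hz)
      have hmem : ∀ z, z ∈ c.toFinset ↔ ρ z ≠ z := fun z => (List.mem_toFinset).trans (hiff z)
      obtain ⟨hMv', hBal', _⟩ := remove_part hCS ρ hmem
        (fun z hz => hcor z (List.mem_toFinset.mp hz)) hMv hBal
      have hz₀' : z₀ ∈ S \ c.toFinset :=
        Finset.mem_sdiff.mpr ⟨hz₀, fun h => hz (List.mem_toFinset.mp h)⟩
      have hCne : 0 < c.toFinset.card := by
        apply Finset.card_pos.mpr
        exact ⟨c.head hc.1, List.mem_toFinset.mpr (List.head_mem hc.1)⟩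
      have hlt : (S \ c.toFinset).card ≤ N := by
        have h1 : (S \ c.toFinset).card = S.card - c.toFinset.card := Finset.card_sdiff_of_subset hCS
        have h2 := Finset.card_le_card hCS
        omega
      obtain ⟨c₂, hc₂, hzc₂⟩ := ih (S \ c.toFinset) hlt hMv' hBal' z₀ hz₀'
      exact ⟨c₂, cyc_mono Finset.sdiff_subset hc₂, hzc₂⟩


lemma peel {p p' : Fin m → Fin n} (i0 : Fin n) (b : ℕ) :
    ∀ (k : ℕ) (S : Finset (Fin m)), Mv p p' S → Bal p p' S →
      (∀ i, i ≠ i0 → deg p S i ≤ b) → deg p S i0 ≤ b + k →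
      ∃ (L : List (Equiv.Perm (Fin m))) (S' : Finset (Fin m)),
        S' ⊆ S ∧ Mv p p' S' ∧ Bal p p' S' ∧ (∀ i, deg p S' i ≤ b) ∧
        L.length ≤ k ∧ (∀ ρ ∈ L, ρ = 1 ∨ ρ.IsCycle) ∧ Good p p' (S \ S') L := by
  intro k
  induction k with
  | zero =>
    intro S hMv hBal hdeg hdeg0
    refine ⟨[], S, Finset.Subset.refl S, hMv, hBal, ?_, le_refl 0, by simp, ?_, ?_, ?_, ?_⟩
    · intro i
      by_cases h : i = i0
      · subst h; simpa using hdeg0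
      · exact hdeg i h
    all_goals simp [Good]
  | succ k ih =>
    intro S hMv hBal hdeg hdeg0
    by_cases hb : deg p S i0 ≤ b
    · refine ⟨[], S, Finset.Subset.refl S, hMv, hBal, ?_, by simp, by simp, ?_, ?_, ?_, ?_⟩
      · intro i
        by_cases h : i = i0
        · subst h; exact hb
        · exact hdeg i h
      all_goals simp [Good]
    · -- find a cycle through colour i0
      have hpos : 0 < deg p S i0 := by omega
      obtain ⟨z₀, hz₀⟩ := Finset.card_pos.mp hpos
      rw [Finset.mem_filter] at hz₀
      obtain ⟨c, hc, hz₀c⟩ := exists_cyc S.card S (le_refl _) hMv hBal z₀ hz₀.1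
      obtain ⟨ρ, hcyc, hiff, hcor⟩ := cyc_perm hMv hc
      have hCS : c.toFinset ⊆ S := fun z hz => hc.2.1 z (List.mem_toFinset.mp hz)
      have hmem : ∀ z, z ∈ c.toFinset ↔ ρ z ≠ z := fun z => (List.mem_toFinset).trans (hiff z)
      have hcor' : ∀ z ∈ c.toFinset, p (ρ z) = p' z := fun z hz => hcor z (List.mem_toFinset.mp hz)
      obtain ⟨hMv1, hBal1, hdeg1⟩ := remove_part hCS ρ hmem hcor' hMv hBal
      set S1 := S \ c.toFinset with hS1def
      have hdec : ∀ i, deg p S1 i ≤ deg p S i := fun i => by have := hdeg1 i; omega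
      have hdec0 : deg p S1 i0 + 1 ≤ deg p S i0 := by
        have h1 := hdeg1 i0
        have h2 : 0 < deg p c.toFinset i0 :=
          Finset.card_pos.mpr ⟨z₀, Finset.mem_filter.mpr ⟨List.mem_toFinset.mpr hz₀c, hz₀.2⟩⟩
        omega
      obtain ⟨L, S', hS'sub, hMv', hBal', hdeg', hlen, hcycs, hGood⟩ :=
        ih S1 hMv1 hBal1 (fun i hi => le_trans (hdec i) (hdeg i hi)) (by omega)
      refine ⟨ρ :: L, S', le_trans hS'sub Finset.sdiff_subset, hMv', hBal', hdeg', by simpa using hlen,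
        ?_, ?_, ?_, ?_, ?_⟩
      · intro σ hσ
        rcases List.mem_cons.mp hσ with rfl | h
        · exact Or.inr hcyc
        · exact hcycs σ h
      · -- Good: balanced
        intro σ hσ
        rcases List.mem_cons.mp hσ with rfl | h
        · intro a ha a' ha' hpa
          exact List.inj_on_of_nodup_map hc.2.2.1 ((hiff a).mpr ha) ((hiff a').mpr ha') hpa
        · exact hGood.1 σ h
      · -- Good: correctness and membership
        intro σ hσ z hz
        rcases List.mem_cons.mp hσ with rfl | h
        · have hzc : z ∈ c.toFinset := (hmem z).mpr hz
          refine ⟨Finset.mem_sdiff.mpr ⟨hCS hzc, fun hzS' => ?_⟩, hcor' z hzc⟩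
          · exact (Finset.mem_sdiff.mp (hS'sub hzS')).2 hzc
        · obtain ⟨hzm, hzc⟩ := hGood.2.1 σ h z hz
          rw [Finset.mem_sdiff] at hzm
          exact ⟨Finset.mem_sdiff.mpr ⟨(Finset.mem_sdiff.mp hzm.1).1, hzm.2⟩, hzc⟩
      · -- Good: pairwise
        apply List.pairwise_cons.mpr
        refine ⟨fun σ hσ => Set.disjoint_left.mpr fun z hzρ hzσ => ?_, hGood.2.2.1⟩
        have h1 : z ∈ c.toFinset := (hmem z).mpr hzρ
        have h2 := (hGood.2.1 σ hσ z hzσ).1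
        exact (Finset.mem_sdiff.mp ((Finset.sdiff_subset).trans (fun _ h => h) h2 : z ∈ S1)).2 h1
      · -- Good: coverage
        intro z hz
        rw [Finset.mem_sdiff] at hz
        by_cases hzc : z ∈ c.toFinset
        · exact ⟨ρ, by simp, (hmem z).mp hzc⟩
        · obtain ⟨σ, hσ, hh⟩ := hGood.2.2.2 z (Finset.mem_sdiff.mpr ⟨Finset.mem_sdiff.mpr ⟨hz.1, hzc⟩, hz.2⟩)
          exact ⟨σ, by simp [hσ], hh⟩


lemma part_perm {p p' : Fin m → Fin n} (P : Finset (Fin m))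
    (hMvP : ∀ z ∈ P, p z ≠ p' z)
    (h1 : Set.InjOn p ↑P) (h2 : Set.InjOn p' ↑P) (h3 : P.image p = P.image p') :
    ∃ ρ : Equiv.Perm (Fin m), (∀ z, z ∈ P ↔ ρ z ≠ z) ∧ ∀ z ∈ P, p (ρ z) = p' z := by
  classical
  have hex : ∀ x : {z // z ∈ P}, ∃! w, w ∈ P ∧ p w = p' x.1 := by
    intro x
    have hmm : p' x.1 ∈ P.image p := by
      rw [h3]; exact Finset.mem_image_of_mem p' x.2
    obtain ⟨w, hw, hpw⟩ := Finset.mem_image.mp hmm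
    refine ⟨w, ⟨hw, hpw⟩, ?_⟩
    rintro w' ⟨hw', hpw'⟩
    exact h1 (Finset.mem_coe.mpr hw') (Finset.mem_coe.mpr hw) (hpw'.trans hpw.symm)
  let f : {z // z ∈ P} → {z // z ∈ P} := fun x =>
    ⟨Finset.choose _ _ (hex x), Finset.choose_mem _ _ (hex x)⟩
  have hf : ∀ x, p (f x).1 = p' x.1 := fun x => Finset.choose_property _ _ (hex x)
  have hfinj : Function.Injective f := by
    intro x y hxy
    have hp' : p' x.1 = p' y.1 := by rw [← hf x, ← hf y, hxy]
    exact Subtype.ext (h2 (Finset.mem_coe.mpr x.2) (Finset.mem_coe.mpr y.2) hp')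
  have hbij := Finite.injective_iff_bijective.mp hfinj
  let e := Equiv.ofBijective f hbij
  let ρ := Equiv.Perm.extendDomain e (Equiv.refl {z // z ∈ P})
  have hρP : ∀ z (hz : z ∈ P), ρ z = (e ⟨z, hz⟩).1 := by
    intro z hz
    show Equiv.Perm.extendDomain e (Equiv.refl {z // z ∈ P}) z = _
    rw [Equiv.Perm.extendDomain_apply_subtype e (Equiv.refl {z // z ∈ P}) hz]
    rfl
  have hρP' : ∀ z, z ∉ P → ρ z = z := by
    intro z hz
    exact Equiv.Perm.extendDomain_apply_not_subtype e (Equiv.refl {z // z ∈ P}) hz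
  have hcor : ∀ z (hz : z ∈ P), p (ρ z) = p' z := by
    intro z hz
    rw [hρP z hz]
    exact hf ⟨z, hz⟩
  refine ⟨ρ, fun z => ⟨fun hz => ?_, fun hz => ?_⟩, fun z hz => hcor z hz⟩
  · intro hρz
    apply hMvP z hz
    rw [← hcor z hz, hρz]
  · by_contra h
    exact hz (hρP' z h)

lemma matching {p p' : Fin m → Fin n} (b : ℕ) (S : Finset (Fin m))
    (hMv : Mv p p' S) (hBal : Bal p p' S) (hdeg : ∀ i, deg p S i ≤ b + 1) :
    ∃ P : Finset (Fin m), P ⊆ S ∧ Set.InjOn p ↑P ∧ Set.InjOn p' ↑P ∧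
      P.image p = P.image p' ∧ ∀ i, deg p S i = b + 1 → i ∈ P.image p := by
  classical
  set r : Fin n → Finset (Fin n) := fun i =>
    ((S.filter fun z => p z = i).image p') ∪ (if deg p S i ≤ b then {i} else ∅) with hr
  have hall : ∀ A : Finset (Fin n), A.card ≤ (A.biUnion r).card := by
    intro A
    set B := A.biUnion r with hB
    have hrB : ∀ i ∈ A, r i ⊆ B := fun i hi => Finset.subset_biUnion_of_mem r hi
    have hedge : ∀ (q : Fin m → Fin n) (X : Finset (Fin n)),
        (S.filter fun z => q z ∈ X).card = ∑ i ∈ X, deg q S i := by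
      intro q X
      rw [Finset.card_eq_sum_card_fiberwise (f := q) (s := S.filter fun z => q z ∈ X) (t := X)
        (fun x hx => (Finset.mem_filter.mp hx).2)]
      apply Finset.sum_congr rfl
      intro i hi
      unfold deg
      congr 1
      ext z
      simp only [Finset.mem_filter]
      constructor
      · rintro ⟨⟨hz1, _⟩, hz2⟩; exact ⟨hz1, hz2⟩
      · rintro ⟨hz1, hz2⟩; exact ⟨⟨hz1, hz2 ▸ hi⟩, hz2⟩
    have hsub : (S.filter fun z => p z ∈ A) ⊆ (S.filter fun z => p' z ∈ B) := by
      intro z hz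
      rw [Finset.mem_filter] at hz ⊢
      refine ⟨hz.1, hrB _ hz.2 ?_⟩
      rw [hr]
      exact Finset.mem_union_left _ (Finset.mem_image_of_mem p'
        (Finset.mem_filter.mpr ⟨hz.1, rfl⟩))
    have h1 : ∑ i ∈ A, deg p S i ≤ ∑ i ∈ B, deg p S i := by
      calc ∑ i ∈ A, deg p S i = (S.filter fun z => p z ∈ A).card := (hedge p A).symm
        _ ≤ (S.filter fun z => p' z ∈ B).card := Finset.card_le_card hsub
        _ = ∑ i ∈ B, deg p' S i := hedge p' B
        _ = ∑ i ∈ B, deg p S i := Finset.sum_congr rfl (fun i _ => (hBal i).symm)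
    have h2 : ∑ i ∈ A, (b + 1 - deg p S i) ≤ ∑ i ∈ B, (b + 1 - deg p S i) := by
      have hstep : ∑ i ∈ A, (b + 1 - deg p S i)
          = ∑ i ∈ A.filter (fun i => deg p S i ≤ b), (b + 1 - deg p S i) := by
        symm
        apply Finset.sum_subset (Finset.filter_subset _ A)
        intro i hi hni
        rw [Finset.mem_filter] at hni
        push_neg at hni
        have hh := hni hi
        have := hdeg i
        omega
      rw [hstep]
      apply Finset.sum_le_sum_of_subset
      intro i hi
      rw [Finset.mem_filter] at hi
      apply hrB i hi.1
      rw [hr]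
      apply Finset.mem_union_right
      rw [if_pos hi.2]
      exact Finset.mem_singleton_self i
    have hsplit : ∀ (X : Finset (Fin n)),
        ∑ i ∈ X, deg p S i + ∑ i ∈ X, (b + 1 - deg p S i) = (b+1) * X.card := by
      intro X
      rw [← Finset.sum_add_distrib]
      have : ∀ i ∈ X, deg p S i + (b + 1 - deg p S i) = b + 1 := by
        intro i _
        have := hdeg i
        omega
      rw [Finset.sum_congr rfl this, Finset.sum_const, smul_eq_mul, mul_comm]
    have hAB : (b+1) * A.card ≤ (b+1) * B.card := by
      rw [← hsplit A, ← hsplit B]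
      omega
    exact Nat.le_of_mul_le_mul_left hAB (Nat.succ_pos b)
  obtain ⟨f, hfinj, hfr⟩ := (Finset.all_card_le_biUnion_card_iff_exists_injective r).mp hall
  have hne : ∀ i, f i ≠ i → ∃ z, z ∈ S ∧ p z = i ∧ p' z = f i := by
    intro i hfi
    have hfri := hfr i
    rw [hr] at hfri
    rcases Finset.mem_union.mp hfri with h | h
    · obtain ⟨z, hz, hpz⟩ := Finset.mem_image.mp h
      rw [Finset.mem_filter] at hz
      exact ⟨z, hz.1, hz.2, hpz⟩
    · exfalso
      by_cases hd : deg p S i ≤ b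
      · rw [if_pos hd] at h; exact hfi (Finset.mem_singleton.mp h)
      · rw [if_neg hd] at h; exact absurd h (Finset.notMem_empty _)
  have hfix : ∀ i, deg p S i = b + 1 → f i ≠ i := by
    intro i hd hfi
    have hfri := hfr i
    rw [hr] at hfri
    rcases Finset.mem_union.mp hfri with h | h
    · rw [hfi] at h
      obtain ⟨z, hz, hpz⟩ := Finset.mem_image.mp h
      rw [Finset.mem_filter] at hz
      exact hMv z hz.1 (by rw [hz.2, hpz])
    · rw [if_neg (by omega)] at h
      exact absurd h (Finset.notMem_empty _)
  set T := Finset.univ.filter (fun i => f i ≠ i) with hT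
  have hfT : ∀ i ∈ T, f i ∈ T := by
    intro i hi
    rw [hT, Finset.mem_filter] at hi ⊢
    exact ⟨Finset.mem_univ _, fun h => hi.2 (hfinj h)⟩
  have hfTim : T.image f = T := by
    apply Finset.eq_of_subset_of_card_le
    · intro j hj
      obtain ⟨i, hi, rfl⟩ := Finset.mem_image.mp hj
      exact hfT i hi
    · rw [Finset.card_image_of_injective _ hfinj]
  have hchoice : ∀ x : {i // i ∈ T}, ∃ z, z ∈ S ∧ p z = x.1 ∧ p' z = f x.1 :=
    fun x => hne x.1 (Finset.mem_filter.mp x.2).2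
  set g : {i // i ∈ T} → Fin m := fun x => (hchoice x).choose with hgdef
  have hg : ∀ x, g x ∈ S ∧ p (g x) = x.1 ∧ p' (g x) = f x.1 := fun x => (hchoice x).choose_spec
  set P := T.attach.image g with hP
  have hmemP : ∀ z ∈ P, ∃ x : {i // i ∈ T}, g x = z := by
    intro z hz
    obtain ⟨x, _, rfl⟩ := Finset.mem_image.mp hz
    exact ⟨x, rfl⟩
  have him : P.image p = T := by
    rw [hP, Finset.image_image]
    have hc : (p ∘ g) = fun x : {i // i ∈ T} => x.1 := funext fun x => (hg x).2.1
    rw [hc, Finset.attach_image_val]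
  have him' : P.image p' = T := by
    rw [hP, Finset.image_image]
    have hc : (p' ∘ g) = f ∘ (fun x : {i // i ∈ T} => x.1) := funext fun x => (hg x).2.2
    rw [hc, ← Finset.image_image, Finset.attach_image_val, hfTim]
  refine ⟨P, ?_, ?_, ?_, by rw [him, him'], ?_⟩
  · intro z hz
    obtain ⟨x, rfl⟩ := hmemP z hz
    exact (hg x).1
  · intro z hz w hw hpzw
    obtain ⟨x, rfl⟩ := hmemP z (Finset.mem_coe.mp hz)
    obtain ⟨y, rfl⟩ := hmemP w (Finset.mem_coe.mp hw)
    rw [(hg x).2.1, (hg y).2.1] at hpzw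
    rw [Subtype.ext hpzw]
  · intro z hz w hw hpzw
    obtain ⟨x, rfl⟩ := hmemP z (Finset.mem_coe.mp hz)
    obtain ⟨y, rfl⟩ := hmemP w (Finset.mem_coe.mp hw)
    rw [(hg x).2.2, (hg y).2.2] at hpzw
    rw [Subtype.ext (hfinj hpzw)]
  · intro i hdi
    rw [him, hT, Finset.mem_filter]
    exact ⟨Finset.mem_univ _, hfix i hdi⟩

lemma decomp {p p' : Fin m → Fin n} :
    ∀ (Δ : ℕ) (S : Finset (Fin m)), Mv p p' S → Bal p p' S → (∀ i, deg p S i ≤ Δ) →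
      ∃ L, Good p p' S L ∧ L.length = Δ := by
  intro Δ
  induction Δ with
  | zero =>
    intro S hMv hBal hdeg
    have hS : S = ∅ := by
      by_contra h
      obtain ⟨z, hz⟩ := Finset.nonempty_iff_ne_empty.mpr h
      have h1 : 0 < deg p S (p z) := Finset.card_pos.mpr ⟨z, Finset.mem_filter.mpr ⟨hz, rfl⟩⟩
      have h2 := hdeg (p z)
      omega
    subst hS
    exact ⟨[], ⟨by simp, by simp, by simp, by simp⟩, rfl⟩
  | succ Δ ih =>
    intro S hMv hBal hdeg
    obtain ⟨P, hPS, hinj1, hinj2, him, hcov⟩ := matching Δ S hMv hBal hdeg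
    have hPMv : ∀ z ∈ P, p z ≠ p' z := fun z hz => hMv z (hPS hz)
    obtain ⟨ρ, hiff, hcor⟩ := part_perm P hPMv hinj1 hinj2 him
    obtain ⟨hMv1, hBal1, hdeg1⟩ := remove_part hPS ρ hiff hcor hMv hBal
    have hdegS1 : ∀ i, deg p (S \ P) i ≤ Δ := by
      intro i
      have h1 := hdeg1 i
      by_cases h : deg p S i = Δ + 1
      · obtain ⟨z, hzP, hpz⟩ := Finset.mem_image.mp (hcov i h)
        have h2 : 0 < deg p P i := Finset.card_pos.mpr ⟨z, Finset.mem_filter.mpr ⟨hzP, hpz⟩⟩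
        omega
      · have := hdeg i; omega
    obtain ⟨L, hGood, hlen⟩ := ih (S \ P) hMv1 hBal1 hdegS1
    refine ⟨ρ :: L, ⟨?_, ?_, ?_, ?_⟩, by simp [hlen]⟩
    · intro σ hσ
      rcases List.mem_cons.mp hσ with rfl | h
      · intro a ha a' ha' hpa
        exact hinj1 (Finset.mem_coe.mpr ((hiff a).mpr ha)) (Finset.mem_coe.mpr ((hiff a').mpr ha')) hpa
      · exact hGood.1 σ h
    · intro σ hσ z hz
      rcases List.mem_cons.mp hσ with rfl | h
      · exact ⟨hPS ((hiff z).mpr hz), hcor z ((hiff z).mpr hz)⟩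
      · obtain ⟨hzm, hzc⟩ := hGood.2.1 σ h z hz
        exact ⟨(Finset.mem_sdiff.mp hzm).1, hzc⟩
    · apply List.pairwise_cons.mpr
      refine ⟨fun σ hσ => Set.disjoint_left.mpr fun z hzρ hzσ => ?_, hGood.2.2.1⟩
      have hzP : z ∈ P := (hiff z).mpr hzρ
      have hzS1 := (hGood.2.1 σ hσ z hzσ).1
      exact (Finset.mem_sdiff.mp hzS1).2 hzP
    · intro z hz
      by_cases hzP : z ∈ P
      · exact ⟨ρ, by simp, (hiff z).mp hzP⟩
      · obtain ⟨σ, hσ, hh⟩ := hGood.2.2.2 z (Finset.mem_sdiff.mpr ⟨hz, hzP⟩)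
        exact ⟨σ, by simp [hσ], hh⟩


end BD

/-- Any two partitions with the same nonincreasing shape `κ` differ by
`κ₁ - κ₂` `p`-cycles and `κ₂` `p`-balanced permutations, all with pairwise
disjoint supports. -/
theorem decomposition_into_balanced_permutations
    (m n : ℕ) (hn : 2 ≤ n) (κ : Fin n → ℕ) (hmono : Antitone κ)
    (hsum : ∑ i, κ i = m) (p p' : Fin m → Fin n)
    (hp : ∀ i, fiberCard p i = κ i) (hp' : ∀ i, fiberCard p' i = κ i) :
    ∃ (σ : Fin (κ ⟨0, by omega⟩ - κ ⟨1, by omega⟩) → Equiv.Perm (Fin m))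
      (π : Fin (κ ⟨1, by omega⟩) → Equiv.Perm (Fin m)),
      (∀ i, IsPCycle p (σ i)) ∧
      (∀ j, IsBalanced p (π j)) ∧
      (∀ i j, i ≠ j → Disjoint (psupp (σ i)) (psupp (σ j))) ∧
      (∀ i j, i ≠ j → Disjoint (psupp (π i)) (psupp (π j))) ∧
      (∀ i j, Disjoint (psupp (σ i)) (psupp (π j))) ∧
      p' = p ∘ ⇑(List.ofFn σ).prod ∘ ⇑(List.ofFn π).prod := by
  classical
  set i0 : Fin n := ⟨0, by omega⟩ with hi0
  set i1 : Fin n := ⟨1, by omega⟩ with hi1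
  set S : Finset (Fin m) := Finset.univ.filter fun z => p z ≠ p' z with hS
  have hMv : BD.Mv p p' S := fun z hz => (Finset.mem_filter.mp hz).2
  have key : ∀ i, BD.deg p S i + (Finset.univ.filter fun z => p z = i ∧ p' z = i).card = κ i := by
    intro i
    have h0 := Finset.card_filter_add_card_filter_not
      (s := Finset.univ.filter fun z => p z = i) (p := fun z => p' z = i)
    have e1 : (Finset.univ.filter fun z : Fin m => p z = i).filter (fun z => p' z = i)
        = Finset.univ.filter fun z => p z = i ∧ p' z = i := by
      rw [Finset.filter_filter]
    have e2 : (Finset.univ.filter fun z : Fin m => p z = i).filter (fun z => ¬ p' z = i)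
        = S.filter fun z => p z = i := by
      rw [Finset.filter_filter, hS, Finset.filter_filter]
      apply Finset.filter_congr
      intro z _
      constructor
      · rintro ⟨h1, h2⟩
        refine ⟨?_, h1⟩
        intro h
        apply h2
        rw [← h, h1]
      · rintro ⟨h1, h2⟩
        refine ⟨h2, ?_⟩
        intro h
        apply h1
        rw [h2, h]
    rw [e1, e2] at h0
    rw [← hp i]
    unfold fiberCard BD.deg
    omega
  have key' : ∀ i, BD.deg p' S i + (Finset.univ.filter fun z => p z = i ∧ p' z = i).card = κ i := by
    intro i
    have h0 := Finset.card_filter_add_card_filter_not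
      (s := Finset.univ.filter fun z : Fin m => p' z = i) (p := fun z => p z = i)
    have e1 : (Finset.univ.filter fun z : Fin m => p' z = i).filter (fun z => p z = i)
        = Finset.univ.filter fun z => p z = i ∧ p' z = i := by
      rw [Finset.filter_filter]
      apply Finset.filter_congr
      intro z _
      exact and_comm
    have e2 : (Finset.univ.filter fun z : Fin m => p' z = i).filter (fun z => ¬ p z = i)
        = S.filter fun z => p' z = i := by
      rw [Finset.filter_filter, hS, Finset.filter_filter]
      apply Finset.filter_congr
      intro z _
      constructor
      · rintro ⟨h1, h2⟩
        refine ⟨?_, h1⟩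
        intro h
        apply h2
        rw [h, h1]
      · rintro ⟨h1, h2⟩
        refine ⟨h2, ?_⟩
        intro h
        apply h1
        rw [h, h2]
    rw [e1, e2] at h0
    rw [← hp' i]
    unfold fiberCard BD.deg
    omega
  have hBal : BD.Bal p p' S := by
    intro i
    have h1 := key i
    have h2 := key' i
    omega
  have hdeg : ∀ i, BD.deg p S i ≤ κ i := by
    intro i
    have := key i
    omega
  obtain ⟨Lσ, S', hS'S, hMv', hBal', hdeg', hlenσ, hcycσ, hGoodσ⟩ :=
    BD.peel i0 (κ i1) (κ i0 - κ i1) S hMv hBal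
      (by
        intro i hi
        refine le_trans (hdeg i) (hmono ?_)
        have hne0 : i.val ≠ 0 := by
          intro h
          apply hi
          rw [hi0]
          exact Fin.ext h
        rw [hi1, Fin.le_def]
        show 1 ≤ i.val
        omega)
      (by
        have h1 := hdeg i0
        have h2 : κ i1 ≤ κ i0 := hmono (by rw [hi0, hi1, Fin.mk_le_mk]; omega)
        omega)
  obtain ⟨Lπ, hGoodπ, hlenπ⟩ := BD.decomp (κ i1) S' hMv' hBal' hdeg'
  set Lσp := Lσ ++ List.replicate (κ i0 - κ i1 - Lσ.length) 1 with hLσp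
  have hGoodσp := BD.good_pad hGoodσ (κ i0 - κ i1 - Lσ.length)
  have hlenσp : Lσp.length = κ i0 - κ i1 := by
    rw [hLσp, List.length_append, List.length_replicate]
    omega
  have hcycσp : ∀ ρ ∈ Lσp, ρ = 1 ∨ ρ.IsCycle := by
    intro ρ hρ
    rcases List.mem_append.mp hρ with h | h
    · exact hcycσ ρ h
    · exact Or.inl (List.eq_of_mem_replicate h)
  have hGoodK := BD.good_union hS'S hGoodσp hGoodπ
  refine ⟨fun i => Lσp.get (Fin.cast hlenσp.symm i), fun j => Lπ.get (Fin.cast hlenπ.symm j),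
    ?_, ?_, ?_, ?_, ?_, ?_⟩
  · intro i
    exact ⟨hGoodσp.1 _ (List.get_mem Lσp (Fin.cast hlenσp.symm i)),
      hcycσp _ (List.get_mem Lσp (Fin.cast hlenσp.symm i))⟩
  · intro j
    exact hGoodπ.1 _ (List.get_mem Lπ (Fin.cast hlenπ.symm j))
  · intro i j hij
    have hpw := List.pairwise_iff_getElem.mp hGoodσp.2.2.1
    rcases lt_trichotomy i.val j.val with h | h | h
    · exact hpw i.val j.val (by rw [hlenσp]; exact i.2) (by rw [hlenσp]; exact j.2) h
    · exact absurd (Fin.ext h) hij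
    · exact (hpw j.val i.val (by rw [hlenσp]; exact j.2) (by rw [hlenσp]; exact i.2) h).symm
  · intro i j hij
    have hpw := List.pairwise_iff_getElem.mp hGoodπ.2.2.1
    rcases lt_trichotomy i.val j.val with h | h | h
    · exact hpw i.val j.val (by rw [hlenπ]; exact i.2) (by rw [hlenπ]; exact j.2) h
    · exact absurd (Fin.ext h) hij
    · exact (hpw j.val i.val (by rw [hlenπ]; exact j.2) (by rw [hlenπ]; exact i.2) h).symm
  · intro i j
    have hcross := (List.pairwise_append.mp hGoodK.2.2.1).2.2
    exact hcross _ (List.get_mem Lσp (Fin.cast hlenσp.symm i)) _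
      (List.get_mem Lπ (Fin.cast hlenπ.symm j))
  · have hofnσ : List.ofFn (fun i => Lσp.get (Fin.cast hlenσp.symm i)) = Lσp := by
      apply List.ext_getElem
      · simp [hlenσp]
      · intro j h1 h2
        simp [List.getElem_ofFn]
    have hofnπ : List.ofFn (fun j => Lπ.get (Fin.cast hlenπ.symm j)) = Lπ := by
      apply List.ext_getElem
      · simp [hlenπ]
      · intro j h1 h2
        simp [List.getElem_ofFn]
    have heval := BD.good_eval (p := p) (p' := p') (S := S) ?_ hGoodK
    · rw [hofnσ, hofnπ, heval]
      funext z
      simp only [Function.comp_apply]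
      rw [List.prod_append, Equiv.Perm.mul_apply]
    · intro z hz
      rw [hS] at hz
      simp only [Finset.mem_filter, Finset.mem_univ, true_and] at hz
      exact not_not.mp hz
end

section
/- Let G be a simple graph on a finite vertex type in which every vertex has even degree, and suppose the maximum degree of G is at most 2k. Then the edge set of G can be partitioned into k sets E₁, …, E_k such that each E_i is a polycycle, i.e., every vertex is incident to either 0 or 2 edges of E_i. Moreover, for any integer 0 ≤ t ≤ k, if at most one vertex of G has degree greater than 2t, then E_{t+1}, …, E_k can additionally be chosen so that each of them is either empty or the edge set of a single cycle (a connected subgraph in which every non-isolated vertex has degree 2). -/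
/-- The degree of a vertex, as the cardinality of its neighbor set. -/
noncomputable def degS {α : Type*} (G : SimpleGraph α) (v : α) : ℕ := (G.neighborSet v).ncard

/-- A polycycle: every vertex has degree 0 or 2 (every component is a cycle). -/
def IsPolycycle {α : Type*} (G : SimpleGraph α) : Prop :=
  ∀ v, degS G v = 0 ∨ degS G v = 2

/-- A cycle graph: a nonempty connected graph in which every non-isolated vertex
has degree 2. -/
def IsCycleGraph {α : Type*} (G : SimpleGraph α) : Prop :=
  G ≠ ⊥ ∧ (∀ v, degS G v = 0 ∨ degS G v = 2) ∧
    ∀ u v, 0 < degS G u → 0 < degS G v → G.Reachable u v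

/-- A path graph: a graph whose edge set forms a nontrivial path. -/
def IsPathGraph {α : Type*} (G : SimpleGraph α) : Prop :=
  G ≠ ⊥ ∧ G.IsAcyclic ∧ (∀ v, degS G v ≤ 2) ∧
    ∀ u v, 0 < degS G u → 0 < degS G v → G.Reachable u v

/-- A linear forest: an acyclic graph of maximum degree at most 2. -/
def IsLinearForest {α : Type*} (G : SimpleGraph α) : Prop :=
  G.IsAcyclic ∧ ∀ v, degS G v ≤ 2

/-- The symmetric difference of a family (list) of graphs: an edge belongs to it
iff it belongs to an odd number of members. -/
def listSymmDiff {α : Type*} (L : List (SimpleGraph α)) : SimpleGraph α :=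
  L.foldr symmDiff ⊥

namespace PolyDecomp
open SimpleGraph Finset
open scoped Classical
variable {α : Type*}

/-- neighbors of `v` along the edges of a walk -/
def wNbr {G : SimpleGraph α} {u₀ : α} (c : G.Walk u₀ u₀) (v : α) : Set α :=
  {w | s(v, w) ∈ c.edges}

section CycleFacts

variable {G : SimpleGraph α} {u₀ : α} {c : G.Walk u₀ u₀}

lemma tail_eq_body (c : G.Walk u₀ u₀) (hc : ¬ c.Nil) :
    c.support.tail = c.support.tail.dropLast ++ [u₀] := by
  rcases c with _ | ⟨h, p⟩
  · simp at hc
  · have h1 : (p.support).getLast p.support_ne_nil = u₀ := p.getLast_support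
    have := List.dropLast_append_getLast p.support_ne_nil
    rw [h1] at this
    simpa using this.symm

lemma dropLast_support_eq (c : G.Walk u₀ u₀) (hc : ¬ c.Nil) :
    c.support.dropLast = u₀ :: c.support.tail.dropLast := by
  conv_lhs => rw [c.support_eq_cons, tail_eq_body c hc]
  rw [← List.cons_append, List.dropLast_concat]

lemma mem_dropLast_support_iff (c : G.Walk u₀ u₀) (hc : ¬ c.Nil) {v : α} :
    v ∈ c.support.dropLast ↔ v ∈ c.support := by
  have h1 : c.support = u₀ :: (c.support.tail.dropLast ++ [u₀]) := by
    conv_lhs => rw [c.support_eq_cons, tail_eq_body c hc]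
  rw [dropLast_support_eq c hc]
  conv_rhs => rw [h1]
  simp only [List.mem_cons, List.mem_append, List.mem_singleton]
  tauto

lemma mem_tail_support_iff (c : G.Walk u₀ u₀) (hc : ¬ c.Nil) {v : α} :
    v ∈ c.support.tail ↔ v ∈ c.support := by
  have h1 : c.support = u₀ :: (c.support.tail.dropLast ++ [u₀]) := by
    conv_lhs => rw [c.support_eq_cons, tail_eq_body c hc]
  conv_lhs => rw [tail_eq_body c hc]
  conv_rhs => rw [h1]
  simp only [List.mem_cons, List.mem_append, List.mem_singleton]
  tauto

lemma dropLast_support_nodup (hc : c.IsCycle) : c.support.dropLast.Nodup := by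
  rw [dropLast_support_eq c hc.not_nil]
  have ht := hc.support_nodup
  rw [tail_eq_body c hc.not_nil] at ht
  have hd := List.Nodup.sublist (List.dropLast_sublist _) ht
  rw [List.dropLast_concat] at hd
  refine List.nodup_cons.2 ⟨fun hmem => ?_, hd⟩
  rcases List.nodup_append.1 ht with ⟨_, _, hdisj⟩
  exact hdisj _ hmem _ (by simp) rfl

lemma darts_map_fst_nodup (hc : c.IsCycle) : (c.darts.map (·.fst)).Nodup := by
  rw [c.map_fst_darts]; exact dropLast_support_nodup hc

lemma darts_map_snd_nodup (hc : c.IsCycle) : (c.darts.map (·.snd)).Nodup := by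
  rw [c.map_snd_darts]; exact hc.support_nodup

lemma exists_out_dart (c : G.Walk u₀ u₀) (hc : ¬ c.Nil) {v : α} (hv : v ∈ c.support) :
    ∃ d ∈ c.darts, d.fst = v := by
  have : v ∈ c.darts.map (·.fst) := by
    rw [c.map_fst_darts]; exact (mem_dropLast_support_iff c hc).2 hv
  obtain ⟨d, hd, hfst⟩ := List.mem_map.1 this
  exact ⟨d, hd, hfst⟩

lemma exists_in_dart (c : G.Walk u₀ u₀) (hc : ¬ c.Nil) {v : α} (hv : v ∈ c.support) :
    ∃ d ∈ c.darts, d.snd = v := by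
  have : v ∈ c.darts.map (·.snd) := by
    rw [c.map_snd_darts]; exact (mem_tail_support_iff c hc).2 hv
  obtain ⟨d, hd, hfst⟩ := List.mem_map.1 this
  exact ⟨d, hd, hfst⟩

lemma out_dart_unique (hc : c.IsCycle) {d d' : G.Dart} (hd : d ∈ c.darts)
    (hd' : d' ∈ c.darts) (h : d.fst = d'.fst) : d = d' :=
  List.inj_on_of_nodup_map (darts_map_fst_nodup hc) hd hd' h

lemma in_dart_unique (hc : c.IsCycle) {d d' : G.Dart} (hd : d ∈ c.darts)
    (hd' : d' ∈ c.darts) (h : d.snd = d'.snd) : d = d' :=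
  List.inj_on_of_nodup_map (darts_map_snd_nodup hc) hd hd' h

lemma edge_dart_unique (hc : c.IsCycle) {d d' : G.Dart} (hd : d ∈ c.darts)
    (hd' : d' ∈ c.darts) (h : d.edge = d'.edge) : d = d' :=
  List.inj_on_of_nodup_map (hc.edges_nodup) hd hd' h

lemma dart_edge_eq (d : G.Dart) : d.edge = s(d.fst, d.snd) := rfl

lemma wNbr_subset (c : G.Walk u₀ u₀) (v : α) : wNbr c v ⊆ G.neighborSet v :=
  fun _ hw => (G.mem_edgeSet).1 (c.edges_subset_edgeSet hw)

lemma wNbr_of_not_mem_support (c : G.Walk u₀ u₀) {v : α} (hv : v ∉ c.support) :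
    wNbr c v = ∅ := by
  ext w
  simp only [wNbr, Set.mem_setOf_eq, Set.mem_empty_iff_false, iff_false]
  intro he
  exact hv (c.fst_mem_support_of_mem_edges he)

lemma wNbr_eq_pair (hc : c.IsCycle) {v : α} (hv : v ∈ c.support) :
    ∃ d₁ ∈ c.darts, ∃ d₂ ∈ c.darts, d₁.fst = v ∧ d₂.snd = v ∧
      d₁.snd ≠ d₂.fst ∧ wNbr c v = {d₁.snd, d₂.fst} := by
  obtain ⟨d₁, hd₁, hfst₁⟩ := exists_out_dart c hc.not_nil hv
  obtain ⟨d₂, hd₂, hsnd₂⟩ := exists_in_dart c hc.not_nil hv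
  have hedge₁ : d₁.edge = s(v, d₁.snd) := by rw [dart_edge_eq, hfst₁]
  have hedge₂ : d₂.edge = s(d₂.fst, v) := by rw [dart_edge_eq, hsnd₂]
  have hadj₁ : G.Adj v d₁.snd := hfst₁ ▸ d₁.adj
  have hadj₂ : G.Adj d₂.fst v := hsnd₂ ▸ d₂.adj
  have hne₁ : d₁.snd ≠ v := fun h => G.irrefl (h ▸ hadj₁)
  have hne₂ : d₂.fst ≠ v := fun h => G.irrefl (h ▸ hadj₂)
  have hnedd : d₁ ≠ d₂ := by
    intro h; rw [h] at hfst₁ hne₁; exact hne₁ hsnd₂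
  have hne12 : d₁.snd ≠ d₂.fst := by
    intro h
    apply hnedd
    apply edge_dart_unique hc hd₁ hd₂
    rw [hedge₁, hedge₂, h, Sym2.eq_swap]
  refine ⟨d₁, hd₁, d₂, hd₂, hfst₁, hsnd₂, hne12, ?_⟩
  ext w
  simp only [wNbr, Set.mem_setOf_eq, Set.mem_insert_iff, Set.mem_singleton_iff]
  constructor
  · intro he
    obtain ⟨d, hd, hedge⟩ := List.mem_map.1 he
    have hedge' : (s(d.fst, d.snd) : Sym2 α) = s(v, w) := hedge
    rw [Sym2.eq_iff] at hedge'
    rcases hedge' with ⟨h1, h2⟩ | ⟨h1, h2⟩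
    · left
      have : d = d₁ := out_dart_unique hc hd hd₁ (by rw [h1, hfst₁])
      rw [← this, h2]
    · right
      have : d = d₂ := in_dart_unique hc hd hd₂ (by rw [h2, hsnd₂])
      rw [← this, h1]
  · rintro (rfl | rfl)
    · have := List.mem_map_of_mem (f := Dart.edge) hd₁
      rwa [hedge₁] at this
    · have := List.mem_map_of_mem (f := Dart.edge) hd₂
      rw [Sym2.eq_swap]
      rwa [hedge₂] at this

lemma wNbr_ncard (hc : c.IsCycle) (v : α) :
    (wNbr c v).ncard = if v ∈ c.support then 2 else 0 := by
  by_cases hv : v ∈ c.support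
  · obtain ⟨d₁, _, d₂, _, _, _, hne, heq⟩ := wNbr_eq_pair hc hv
    rw [if_pos hv, heq, Set.ncard_pair hne]
  · rw [if_neg hv, wNbr_of_not_mem_support c hv, Set.ncard_empty]

end CycleFacts
lemma degS_eq_degree [Fintype α] (G : SimpleGraph α) [DecidableRel G.Adj] (v : α) :
    degS G v = G.degree v := by
  rw [degS, ← Nat.card_coe_set_eq, Nat.card_eq_fintype_card,
    G.card_neighborSet_eq_degree]

lemma degS_pos_iff [Fintype α] {G : SimpleGraph α} {v : α} :
    0 < degS G v ↔ (G.neighborSet v).Nonempty := by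
  rw [degS, Set.ncard_pos (Set.toFinite _)]

lemma eq_bot_of_degS [Fintype α] {G : SimpleGraph α} (h : ∀ v, degS G v = 0) : G = ⊥ := by
  ext v w
  simp only [bot_adj, iff_false]
  intro hadj
  have h2 := degS_pos_iff.2 ⟨w, hadj⟩
  have h3 := h v
  omega

lemma exists_cycle_through [Fintype α] {G : SimpleGraph α} (hE : ∀ v, Even (degS G v))
    {v₀ : α} (h : 0 < degS G v₀) : ∃ c : G.Walk v₀ v₀, c.IsCycle := by
  obtain ⟨w, hw⟩ := degS_pos_iff.1 h
  rw [mem_neighborSet] at hw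
  have hvw : v₀ ≠ w := G.ne_of_adj hw
  set G' := G.deleteEdges {s(v₀, w)} with hG'
  have hnv : G'.neighborSet v₀ = G.neighborSet v₀ \ {w} := by
    ext u
    simp only [hG', mem_neighborSet, deleteEdges_adj, Set.mem_diff, Set.mem_singleton_iff,
      Sym2.eq_iff]
    tauto
  have hnw : G'.neighborSet w = G.neighborSet w \ {v₀} := by
    ext u
    simp only [hG', mem_neighborSet, deleteEdges_adj, Set.mem_diff, Set.mem_singleton_iff,
      Sym2.eq_iff]
    have := hvw
    tauto
  have hnother : ∀ x, x ≠ v₀ → x ≠ w → G'.neighborSet x = G.neighborSet x := by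
    intro x hx1 hx2
    ext u
    simp only [hG', mem_neighborSet, deleteEdges_adj, Set.mem_singleton_iff, Sym2.eq_iff]
    constructor
    · exact fun h' => h'.1
    · intro h'
      refine ⟨h', fun hcon => ?_⟩
      rcases hcon with ⟨h1, _⟩ | ⟨h1, _⟩
      · exact hx1 h1
      · exact hx2 h1
  have hdv : degS G' v₀ = degS G v₀ - 1 := by
    rw [degS, degS, hnv, Set.ncard_diff_singleton_of_mem (by simpa using hw)]
  have hdw : degS G' w = degS G w - 1 := by
    rw [degS, degS, hnw, Set.ncard_diff_singleton_of_mem (by simpa using hw.symm)]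
  have hoddv : Odd (degS G' v₀) := by
    rw [hdv]
    exact Nat.Even.sub_odd h (hE v₀) odd_one
  have hoddw : Odd (degS G' w) := by
    have hwpos : 0 < degS G w := degS_pos_iff.2 ⟨v₀, by simpa using hw.symm⟩
    rw [hdw]
    exact Nat.Even.sub_odd hwpos (hE w) odd_one
  -- the component of w in G'
  set R : Set α := {x | G'.Reachable w x} with hR
  have hmemR : ∀ {x u : α}, x ∈ R → G'.Adj x u → u ∈ R := fun hx ha => hx.trans ha.reachable
  set H : SimpleGraph R := G'.induce R with hH
  have hdegH : ∀ (x : α) (hx : x ∈ R), degS H ⟨x, hx⟩ = degS G' x := by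
    intro x hx
    have himg : Subtype.val '' (H.neighborSet ⟨x, hx⟩) = G'.neighborSet x := by
      ext u
      simp only [Set.mem_image, mem_neighborSet]
      constructor
      · rintro ⟨⟨u', hu'⟩, hadj, rfl⟩
        exact hadj
      · intro hadj
        exact ⟨⟨u, hmemR hx hadj⟩, hadj, rfl⟩
    rw [degS, degS, ← himg, Set.ncard_image_of_injective _ Subtype.val_injective]
  have hwR : w ∈ R := by exact Reachable.refl w
  have heven := H.even_card_odd_degree_vertices
  have hwmem : (⟨w, hwR⟩ : R) ∈ univ.filter (fun x => Odd (H.degree x)) := by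
    rw [mem_filter]
    exact ⟨mem_univ _, by rwa [← degS_eq_degree, hdegH]⟩
  have hlt : 1 < (univ.filter (fun x : R => Odd (H.degree x))).card := by
    have hpos : 0 < (univ.filter (fun x : R => Odd (H.degree x))).card :=
      card_pos.2 ⟨_, hwmem⟩
    rcases heven with ⟨m, hm⟩
    omega
  obtain ⟨x', hx'mem, hx'ne⟩ := exists_mem_ne hlt ⟨w, hwR⟩
  have hxodd : Odd (degS G' x'.1) := by
    rw [mem_filter] at hx'mem
    rw [← hdegH x'.1 x'.2, degS_eq_degree]
    exact hx'mem.2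
  have hxw : x'.1 ≠ w := fun hcon => hx'ne (Subtype.ext hcon)
  have hxv : x'.1 = v₀ := by
    by_contra hcon
    rw [degS, hnother x'.1 hcon hxw, ← degS] at hxodd
    exact (Nat.not_even_iff_odd.2 hxodd) (hE x'.1)
  have hreach : G'.Reachable w v₀ := hxv ▸ x'.2
  obtain ⟨q0⟩ := hreach
  set p : G'.Path w v₀ := q0.toPath with hp
  have hsub : ∀ e ∈ (p : G'.Walk w v₀).edges, e ∈ G.edgeSet := fun e he =>
    (G.edgeSet_deleteEdges {s(v₀, w)} ▸ Walk.edges_subset_edgeSet _ he).1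
  set pm : G.Walk w v₀ := (p : G'.Walk w v₀).transfer G hsub with hpm
  have hpmpath : pm.IsPath := p.2.transfer hsub
  have hpmedges : pm.edges = (p : G'.Walk w v₀).edges := Walk.edges_transfer _ hsub
  have hnotmem : s(v₀, w) ∉ pm.edges := by
    rw [hpmedges]
    intro hmem
    have := Walk.edges_subset_edgeSet _ hmem
    rw [hG', edgeSet_deleteEdges] at this
    exact this.2 rfl
  exact ⟨Walk.cons hw pm, (Walk.cons_isCycle_iff pm hw).2 ⟨hpmpath, hnotmem⟩⟩

section DartInd
variable {G : SimpleGraph α} {u₀ : α} {c : G.Walk u₀ u₀}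

/-- indicator of the dart `(v, w)` occurring in the walk `c` -/
noncomputable def dartInd (c : G.Walk u₀ u₀) (v w : α) : ℕ :=
  if ∃ d ∈ c.darts, d.toProd = (v, w) then 1 else 0

lemma dartInd_diag (c : G.Walk u₀ u₀) (v : α) : dartInd c v v = 0 := by
  rw [dartInd, if_neg]
  rintro ⟨d, hd, hp⟩
  have hadj := d.adj
  rw [hp] at hadj
  exact G.irrefl hadj

lemma mem_edges_iff {v w : α} : s(v, w) ∈ c.edges ↔
    (∃ d ∈ c.darts, d.toProd = (v, w)) ∨ (∃ d ∈ c.darts, d.toProd = (w, v)) := by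
  show s(v, w) ∈ c.darts.map Dart.edge ↔ _
  rw [List.mem_map]
  constructor
  · rintro ⟨d, hd, hedge⟩
    have hedge' : (s(d.fst, d.snd) : Sym2 α) = s(v, w) := hedge
    rw [Sym2.eq_iff] at hedge'
    rcases hedge' with ⟨h1, h2⟩ | ⟨h1, h2⟩
    · exact Or.inl ⟨d, hd, Prod.ext h1 h2⟩
    · exact Or.inr ⟨d, hd, Prod.ext h1 h2⟩
  · rintro (⟨d, hd, hp⟩ | ⟨d, hd, hp⟩) <;> refine ⟨d, hd, ?_⟩
    · show (s(d.fst, d.snd) : Sym2 α) = s(v, w)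
      rw [Sym2.eq_iff]
      exact Or.inl ⟨congrArg Prod.fst hp, congrArg Prod.snd hp⟩
    · show (s(d.fst, d.snd) : Sym2 α) = s(v, w)
      rw [Sym2.eq_iff]
      exact Or.inr ⟨congrArg Prod.fst hp, congrArg Prod.snd hp⟩

lemma not_both_darts (hc : c.IsCycle) {v w : α} (hvw : v ≠ w)
    (h1 : ∃ d ∈ c.darts, d.toProd = (v, w)) (h2 : ∃ d ∈ c.darts, d.toProd = (w, v)) :
    False := by
  obtain ⟨d, hd, hp⟩ := h1
  obtain ⟨d', hd', hp'⟩ := h2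
  have hf : d.fst = v := congrArg Prod.fst hp
  have hs : d.snd = w := congrArg Prod.snd hp
  have hf' : d'.fst = w := congrArg Prod.fst hp'
  have hs' : d'.snd = v := congrArg Prod.snd hp'
  have heq : d = d' := edge_dart_unique hc hd hd' (by
    show (s(d.fst, d.snd) : Sym2 α) = s(d'.fst, d'.snd)
    rw [hf, hs, hf', hs']
    exact Sym2.eq_swap)
  rw [heq] at hf
  exact hvw (hf.symm.trans hf')

lemma dartInd_add (hc : c.IsCycle) {v w : α} (hvw : v ≠ w) :
    dartInd c v w + dartInd c w v = if s(v, w) ∈ c.edges then 1 else 0 := by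
  by_cases hmem : s(v, w) ∈ c.edges
  · rw [if_pos hmem]
    rcases mem_edges_iff.1 hmem with ⟨d, hd, hp⟩ | ⟨d, hd, hp⟩
    · rw [dartInd, if_pos ⟨d, hd, hp⟩, dartInd, if_neg]
      exact fun h2 => not_both_darts hc hvw ⟨d, hd, hp⟩ h2
    · have h0 : dartInd c v w = 0 := by
        rw [dartInd, if_neg]
        exact fun h2 => not_both_darts hc hvw h2 ⟨d, hd, hp⟩
      have h1 : dartInd c w v = 1 := by rw [dartInd, if_pos ⟨d, hd, hp⟩]
      omega
  · rw [if_neg hmem, dartInd, if_neg, dartInd, if_neg]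
    · rintro ⟨d, hd, hp⟩
      exact hmem (mem_edges_iff.2 (Or.inr ⟨d, hd, hp⟩))
    · rintro ⟨d, hd, hp⟩
      exact hmem (mem_edges_iff.2 (Or.inl ⟨d, hd, hp⟩))


lemma dartInd_row [Fintype α] (hc : c.IsCycle) (v : α) :
    ∑ w, dartInd c v w = if v ∈ c.support then 1 else 0 := by
  by_cases hv : v ∈ c.support
  · obtain ⟨d₁, hd₁, hfst₁⟩ := exists_out_dart c hc.not_nil hv
    have key : ∀ w, dartInd c v w = if w = d₁.snd then 1 else 0 := by
      intro w
      by_cases hw : w = d₁.snd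
      · subst hw
        rw [dartInd, if_pos ⟨d₁, hd₁, Prod.ext hfst₁ rfl⟩, if_pos rfl]
      · rw [dartInd, if_neg, if_neg hw]
        rintro ⟨d, hd, hp⟩
        apply hw
        have : d = d₁ := out_dart_unique hc hd hd₁ (by
          rw [show d.fst = v from congrArg Prod.fst hp, hfst₁])
        have h2 : d.snd = w := congrArg Prod.snd hp
        rw [← this, ← h2]
    rw [if_pos hv]
    simp_rw [key]
    rw [Finset.sum_ite_eq' univ d₁.snd (fun _ => 1), if_pos (mem_univ _)]
  · rw [if_neg hv]
    apply Finset.sum_eq_zero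
    intro w _
    rw [dartInd, if_neg]
    rintro ⟨d, hd, hp⟩
    have h2 : d.fst = v := congrArg Prod.fst hp
    exact hv (h2 ▸ Walk.dart_fst_mem_support_of_mem_darts c hd)

lemma dartInd_col [Fintype α] (hc : c.IsCycle) (v : α) :
    ∑ w, dartInd c w v = if v ∈ c.support then 1 else 0 := by
  by_cases hv : v ∈ c.support
  · obtain ⟨d₂, hd₂, hsnd₂⟩ := exists_in_dart c hc.not_nil hv
    have key : ∀ w, dartInd c w v = if w = d₂.fst then 1 else 0 := by
      intro w
      by_cases hw : w = d₂.fst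
      · subst hw
        rw [dartInd, if_pos ⟨d₂, hd₂, Prod.ext rfl hsnd₂⟩, if_pos rfl]
      · rw [dartInd, if_neg, if_neg hw]
        rintro ⟨d, hd, hp⟩
        apply hw
        have : d = d₂ := in_dart_unique hc hd hd₂ (by
          rw [show d.snd = v from congrArg Prod.snd hp, hsnd₂])
        have h2 : d.fst = w := congrArg Prod.fst hp
        rw [← this, ← h2]
    rw [if_pos hv]
    simp_rw [key]
    rw [Finset.sum_ite_eq' univ d₂.fst (fun _ => 1), if_pos (mem_univ _)]
  · rw [if_neg hv]
    apply Finset.sum_eq_zero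
    intro w _
    rw [dartInd, if_neg]
    rintro ⟨d, hd, hp⟩
    have h2 : d.snd = v := congrArg Prod.snd hp
    exact hv (h2 ▸ Walk.dart_snd_mem_support_of_mem_darts c hd)

lemma neighborSet_deleteEdges_walk (c : G.Walk u₀ u₀) (v : α) :
    (G.deleteEdges {e | e ∈ c.edges}).neighborSet v = G.neighborSet v \ wNbr c v := by
  ext w
  simp only [mem_neighborSet, deleteEdges_adj, Set.mem_diff, Set.mem_setOf_eq, wNbr]

lemma degS_deleteEdges [Fintype α] (hc : c.IsCycle) (v : α) :
    degS (G.deleteEdges {e | e ∈ c.edges}) v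
      = degS G v - (if v ∈ c.support then 2 else 0) := by
  rw [degS, degS, neighborSet_deleteEdges_walk c v,
    Set.ncard_diff (wNbr_subset c v) (Set.toFinite _), wNbr_ncard hc]


lemma two_le_degS_of_mem_support [Fintype α] (hc : c.IsCycle) {v : α} (hv : v ∈ c.support) :
    2 ≤ degS G v := by
  have h1 := Set.ncard_le_ncard (wNbr_subset c v) (Set.toFinite _)
  rw [wNbr_ncard hc, if_pos hv] at h1
  exact h1

lemma cycle_edges_ssubset [Fintype α] (hc : c.IsCycle) :
    (G.deleteEdges {e | e ∈ c.edges}).edgeSet.ncard < G.edgeSet.ncard := by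
  apply Set.ncard_lt_ncard _ (Set.toFinite _)
  rw [edgeSet_deleteEdges]
  constructor
  · exact Set.diff_subset
  · intro hsub
    have hne : c.edges ≠ [] := by
      intro h0
      have := c.length_edges
      rw [h0] at this
      exact hc.not_nil (Walk.nil_iff_length_eq.2 (by simpa using this.symm))
    obtain ⟨e, he⟩ := List.exists_mem_of_ne_nil _ hne
    have heG : e ∈ G.edgeSet := c.edges_subset_edgeSet he
    exact (hsub heG).2 he

theorem orient [Fintype α] :
    ∀ (n : ℕ) (G : SimpleGraph α), G.edgeSet.ncard ≤ n → (∀ v, Even (degS G v)) →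
    ∃ M : α → α → ℕ, (∀ v, M v v = 0) ∧
      (∀ v w, v ≠ w → M v w + M w v = if G.Adj v w then 1 else 0) ∧
      (∀ v, ∑ w, M v w = ∑ w, M w v) := by
  intro n
  induction n with
  | zero =>
    intro G hn hE
    have hbot : G = ⊥ := by
      rw [← edgeSet_eq_empty]
      exact (Set.ncard_eq_zero (Set.toFinite _)).1 (Nat.le_zero.1 hn)
    subst hbot
    exact ⟨fun _ _ => 0, fun v => rfl, fun v w hvw => by simp, fun v => rfl⟩
  | succ n ih =>
    intro G hn hE
    by_cases hbot : G = ⊥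
    · subst hbot
      exact ⟨fun _ _ => 0, fun v => rfl, fun v w hvw => by simp, fun v => rfl⟩
    · obtain ⟨v₀, w₀, hadj⟩ : ∃ v w, G.Adj v w := by
        by_contra hcon
        push_neg at hcon
        exact hbot (by ext v w; simpa using hcon v w)
      obtain ⟨c, hc⟩ := exists_cycle_through hE (degS_pos_iff.2 ⟨w₀, hadj⟩)
      set G' := G.deleteEdges {e | e ∈ c.edges} with hG'
      have hEd : ∀ v, Even (degS G' v) := by
        intro v
        rw [hG', degS_deleteEdges hc]
        by_cases hv : v ∈ c.support
        · rw [if_pos hv]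
          rw [Nat.even_sub (two_le_degS_of_mem_support hc hv)]
          simp [hE v]
        · rw [if_neg hv]
          exact hE v
      have hcard : G'.edgeSet.ncard ≤ n := by
        have h5 := cycle_edges_ssubset (G := G) hc
        rw [← hG'] at h5
        omega
      obtain ⟨M', h1', h2', h3'⟩ := ih G' hcard hEd
      refine ⟨fun v w => dartInd c v w + M' v w, ?_, ?_, ?_⟩
      · intro v
        show dartInd c v v + M' v v = 0
        rw [dartInd_diag, h1']
      · intro v w hvw
        show dartInd c v w + M' v w + (dartInd c w v + M' w v) = _
        have key := dartInd_add hc hvw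
        have key' := h2' v w hvw
        by_cases hmem : s(v, w) ∈ c.edges
        · have hGa : G.Adj v w := (G.mem_edgeSet).1 (c.edges_subset_edgeSet hmem)
          have hG'a : ¬ G'.Adj v w := by
            rw [hG', deleteEdges_adj]
            exact fun h => h.2 hmem
          rw [if_pos hmem] at key
          rw [if_neg hG'a] at key'
          rw [if_pos hGa]
          omega
        · have hiff : (if G.Adj v w then 1 else 0) = (if G'.Adj v w then 1 else 0) := by
            by_cases hGa : G.Adj v w
            · rw [if_pos hGa, if_pos (by rw [hG', deleteEdges_adj]; exact ⟨hGa, hmem⟩)]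
            · rw [if_neg hGa, if_neg (by rw [hG', deleteEdges_adj]; exact fun h => hGa h.1)]
          rw [if_neg hmem] at key
          rw [hiff]
          by_cases hG'a : G'.Adj v w <;> simp only [hG'a, ↓reduceIte] at key' ⊢ <;> omega
      · intro v
        show (∑ w, (dartInd c v w + M' v w)) = ∑ w, (dartInd c w v + M' w v)
        rw [Finset.sum_add_distrib, Finset.sum_add_distrib, dartInd_row hc,
          dartInd_col hc, h3' v]

end DartInd
theorem birkhoff [Fintype α] [DecidableEq α] :
    ∀ (k : ℕ) (M : α → α → ℕ), (∀ v, ∑ w, M v w = k) → (∀ w, ∑ v, M v w = k) →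
    ∃ σ : Fin k → Equiv.Perm α, ∀ v w, M v w = ∑ i, if σ i v = w then 1 else 0 := by
  intro k
  induction k with
  | zero =>
    intro M hr _
    refine ⟨fun i => i.elim0, fun v w => ?_⟩
    have h0 : M v w = 0 := by
      have := hr v
      have h2 : M v w ≤ ∑ w, M v w := Finset.single_le_sum (fun _ _ => Nat.zero_le _) (mem_univ w)
      omega
    rw [h0]
    exact (Finset.sum_eq_zero fun i _ => i.elim0).symm
  | succ k ih =>
    intro M hr hc
    -- Hall's condition for the relation `0 < M v w`
    have hall : ∀ s : Finset α, s.card ≤ (s.biUnion fun v => univ.filter fun w => 0 < M v w).card := by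
      intro s
      have h1 : (k + 1) * s.card = ∑ v ∈ s, ∑ w, M v w := by
        rw [Finset.sum_congr rfl fun v _ => hr v, Finset.sum_const, smul_eq_mul, mul_comm]
      have h2 : ∀ v ∈ s, ∑ w, M v w = ∑ w ∈ s.biUnion (fun v => univ.filter fun w => 0 < M v w), M v w := by
        intro v hv
        apply (Finset.sum_subset (Finset.subset_univ _) _).symm
        intro w _ hw
        by_contra h0
        exact hw (Finset.mem_biUnion.2 ⟨v, hv, Finset.mem_filter.2 ⟨mem_univ _, Nat.pos_of_ne_zero h0⟩⟩)
      have h3 : (k + 1) * s.card ≤ (k + 1) * (s.biUnion fun v => univ.filter fun w => 0 < M v w).card := by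
        rw [h1, Finset.sum_congr rfl h2, Finset.sum_comm]
        calc ∑ w ∈ s.biUnion (fun v => univ.filter fun w => 0 < M v w), ∑ v ∈ s, M v w
            ≤ ∑ w ∈ s.biUnion (fun v => univ.filter fun w => 0 < M v w), ∑ v, M v w := by
              apply Finset.sum_le_sum
              intro w _
              exact Finset.sum_le_sum_of_subset (Finset.subset_univ s)
          _ = ∑ w ∈ s.biUnion (fun v => univ.filter fun w => 0 < M v w), (k+1) := by
              exact Finset.sum_congr rfl fun w _ => hc w
          _ = _ := by rw [Finset.sum_const, smul_eq_mul, mul_comm]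
      exact Nat.le_of_mul_le_mul_left h3 (Nat.succ_pos k)
    obtain ⟨f, hfinj, hf⟩ := (Finset.all_card_le_biUnion_card_iff_exists_injective _).1 hall
    have hfpos : ∀ v, 0 < M v (f v) := fun v => (Finset.mem_filter.1 (hf v)).2
    have hfbij : Function.Bijective f := (Finite.injective_iff_bijective).1 hfinj
    set σ₀ : Equiv.Perm α := Equiv.ofBijective f hfbij with hσ₀
    set M' : α → α → ℕ := fun v w => M v w - (if f v = w then 1 else 0) with hM'
    have hsplit : ∀ v w, M v w = M' v w + (if f v = w then 1 else 0) := by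
      intro v w
      show M v w = M v w - (if f v = w then 1 else 0) + (if f v = w then 1 else 0)
      by_cases hfw : f v = w
      · rw [if_pos hfw]
        have := hfpos v
        rw [hfw] at this
        omega
      · rw [if_neg hfw]
        omega
    have hr' : ∀ v, ∑ w, M' v w = k := by
      intro v
      have : ∑ w, M v w = (∑ w, M' v w) + ∑ w, (if f v = w then 1 else 0) := by
        rw [← Finset.sum_add_distrib]
        exact Finset.sum_congr rfl fun w _ => hsplit v w
      rw [hr v] at this
      rw [Finset.sum_ite_eq univ (f v) (fun _ => 1), if_pos (mem_univ _)] at this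
      omega
    have hc' : ∀ w, ∑ v, M' v w = k := by
      intro w
      have : ∑ v, M v w = (∑ v, M' v w) + ∑ v, (if f v = w then 1 else 0) := by
        rw [← Finset.sum_add_distrib]
        exact Finset.sum_congr rfl fun v _ => hsplit v w
      rw [hc w] at this
      have hone : ∑ v, (if f v = w then 1 else 0) = 1 := by
        have : ∀ v, (if f v = w then 1 else 0) = if v = σ₀.symm w then 1 else 0 := by
          intro v
          by_cases hv : f v = w
          · rw [if_pos hv, if_pos]
            apply_fun σ₀.symm at hv
            rw [← hv]
            exact (Equiv.symm_apply_apply σ₀ v).symm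
          · rw [if_neg hv, if_neg]
            intro hcon
            apply hv
            rw [hcon]
            exact σ₀.apply_symm_apply w
        simp_rw [this]
        rw [Finset.sum_ite_eq' univ (σ₀.symm w) (fun _ => 1), if_pos (mem_univ _)]
      rw [hone] at this
      omega
    obtain ⟨σ', hσ'⟩ := ih M' hr' hc'
    refine ⟨Fin.cons σ₀ σ', fun v w => ?_⟩
    rw [Fin.sum_univ_succ]
    simp only [Fin.cons_zero, Fin.cons_succ]
    have h6 : (if (σ₀ : Equiv.Perm α) v = w then 1 else 0) = (if f v = w then 1 else 0) := rfl
    rw [h6, hsplit v w, hσ' v w]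
    omega

theorem polycycle_decomp [Fintype α] (G : SimpleGraph α) (k : ℕ)
    (hE : ∀ v, Even (degS G v)) (hdeg : ∀ v, degS G v ≤ 2 * k) :
    ∃ E : Fin k → SimpleGraph α,
      (∀ i j, i ≠ j → Disjoint (E i) (E j)) ∧ (⨆ i, E i) = G ∧ ∀ i, IsPolycycle (E i) := by
  classical
  obtain ⟨M₀, hdiag, hsum, hrc⟩ := orient G.edgeSet.ncard G le_rfl hE
  have hdge : ∀ v, 2 * (∑ w, M₀ v w) = degS G v := by
    intro v
    have h1 : (∑ w, M₀ v w) + (∑ w, M₀ w v) = ∑ w, (if G.Adj v w then 1 else 0) := by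
      rw [← Finset.sum_add_distrib]
      apply Finset.sum_congr rfl
      intro w _
      by_cases hw : v = w
      · subst hw
        rw [hdiag v, if_neg (G.irrefl)]
      · exact hsum v w hw
    have h2 : ∑ w, (if G.Adj v w then 1 else 0) = degS G v := by
      rw [Finset.sum_boole, degS]
      have h3 : G.neighborSet v = ↑(univ.filter fun w => G.Adj v w) := by
        ext w; simp
      rw [h3, Set.ncard_coe_finset]
      simp
    rw [two_mul, ← h2, ← h1, hrc v]
  have hrow_le : ∀ v, ∑ w, M₀ v w ≤ k := by
    intro v
    have h1 := hdge v
    have h2 := hdeg v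
    omega
  set M : α → α → ℕ := fun v w => M₀ v w + if v = w then k - (∑ u, M₀ v u) else 0 with hM
  have hMr : ∀ v, ∑ w, M v w = k := by
    intro v
    show (∑ w, (M₀ v w + if v = w then k - (∑ u, M₀ v u) else 0)) = k
    rw [Finset.sum_add_distrib, Finset.sum_ite_eq univ v (fun _ => k - (∑ u, M₀ v u)),
      if_pos (mem_univ _)]
    have := hrow_le v
    omega
  have hMc : ∀ w, ∑ v, M v w = k := by
    intro w
    show (∑ v, (M₀ v w + if v = w then k - (∑ u, M₀ v u) else 0)) = k
    rw [Finset.sum_add_distrib]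
    have h4 : ∑ v, (if v = w then k - (∑ u, M₀ v u) else 0) = k - (∑ u, M₀ w u) := by
      rw [Finset.sum_ite_eq' univ w (fun v => k - (∑ u, M₀ v u)), if_pos (mem_univ _)]
    rw [h4]
    have h5 : ∑ v, M₀ v w = ∑ u, M₀ w u := (hrc w).symm
    rw [h5]
    have := hrow_le w
    omega
  obtain ⟨σ, hσ⟩ := birkhoff k M hMr hMc
  have hM01 : ∀ v w, v ≠ w → M₀ v w + M₀ w v ≤ 1 := by
    intro v w hvw
    rw [hsum v w hvw]
    split <;> omega
  have hMoff : ∀ v w, v ≠ w → M v w = M₀ v w := by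
    intro v w hvw
    show M₀ v w + (if v = w then _ else 0) = M₀ v w
    rw [if_neg hvw, add_zero]
  have hperm_pos : ∀ (i : Fin k) v w, v ≠ w → σ i v = w → 1 ≤ M₀ v w := by
    intro i v w hvw hiv
    have h1 : (1 : ℕ) ≤ ∑ j, if σ j v = w then 1 else 0 :=
      calc (1:ℕ) = (if σ i v = w then (1:ℕ) else 0) := (if_pos hiv).symm
        _ ≤ _ := Finset.single_le_sum (f := fun j => if σ j v = w then (1:ℕ) else 0)
          (fun j _ => Nat.zero_le _) (mem_univ i)
    rw [← hσ v w, hMoff v w hvw] at h1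
    exact h1
  have hadj_of_pos : ∀ v w, 1 ≤ M₀ v w → G.Adj v w := by
    intro v w h1
    have hvw : v ≠ w := by
      intro h
      subst h
      rw [hdiag v] at h1
      omega
    have h2 := hsum v w hvw
    by_cases hGa : G.Adj v w
    · exact hGa
    · rw [if_neg hGa] at h2
      omega
  set E : Fin k → SimpleGraph α := fun i =>
    { Adj := fun v w => v ≠ w ∧ (σ i v = w ∨ σ i w = v),
      symm := ⟨by
        rintro v w ⟨h1, h2 | h2⟩
        · exact ⟨h1.symm, Or.inr h2⟩
        · exact ⟨h1.symm, Or.inl h2⟩⟩,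
      loopless := ⟨fun v h => h.1 rfl⟩ } with hE'
  have hEadj : ∀ i v w, (E i).Adj v w ↔ v ≠ w ∧ (σ i v = w ∨ σ i w = v) := by
    intro i v w; rw [hE']
  -- common contradiction lemmas
  have hnot2 : ∀ (i j : Fin k) v w, v ≠ w → i ≠ j → σ i v = w → σ j v = w → False := by
    intro i j v w hvw hij h1 h2
    have hsum2 : (2 : ℕ) ≤ ∑ l, if σ l v = w then 1 else 0 := by
      have hs : ({i, j} : Finset (Fin k)).sum (fun l => if σ l v = w then (1:ℕ) else 0) = 2 := by
        rw [Finset.sum_pair hij, if_pos h1, if_pos h2]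
      calc (2:ℕ) = ({i, j} : Finset (Fin k)).sum (fun l => if σ l v = w then (1:ℕ) else 0) := hs.symm
        _ ≤ _ := Finset.sum_le_sum_of_subset (Finset.subset_univ _)
    rw [← hσ v w, hMoff v w hvw] at hsum2
    have := hM01 v w hvw
    omega
  have hnotxy : ∀ (i j : Fin k) v w, v ≠ w → σ i v = w → σ j w = v → False := by
    intro i j v w hvw h1 h2
    have ha := hperm_pos i v w hvw h1
    have hb := hperm_pos j w v hvw.symm h2
    have := hM01 v w hvw
    omega
  refine ⟨E, ?_, ?_, ?_⟩
  · intro i j hij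
    rw [← disjoint_edgeSet]
    rw [Set.disjoint_left]
    intro e he1 he2
    induction e with
    | _ v w =>
      rw [mem_edgeSet, hEadj] at he1 he2
      obtain ⟨hvw, h1 | h1⟩ := he1 <;> obtain ⟨-, h2 | h2⟩ := he2
      · exact hnot2 i j v w hvw hij h1 h2
      · exact hnotxy i j v w hvw h1 h2
      · exact hnotxy j i v w hvw h2 h1
      · exact hnot2 i j w v hvw.symm hij h1 h2
  · apply le_antisymm
    · apply iSup_le
      intro i v w hadj
      rw [hEadj] at hadj
      obtain ⟨hvw, h1 | h1⟩ := hadj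
      · exact hadj_of_pos v w (hperm_pos i v w hvw h1)
      · exact (hadj_of_pos w v (hperm_pos i w v hvw.symm h1)).symm
    · intro v w hadj
      rw [iSup_adj]
      have hvw : v ≠ w := G.ne_of_adj hadj
      have h2 := hsum v w hvw
      rw [if_pos hadj] at h2
      have h01 : M₀ v w = 1 ∨ M₀ w v = 1 := by omega
      rcases h01 with h1 | h1
      · have h3 : ∑ j, (if σ j v = w then (1:ℕ) else 0) = 1 := by
          rw [← hσ v w, hMoff v w hvw, h1]
        have h4 : ∃ i, σ i v = w := by
          by_contra hcon
          push_neg at hcon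
          rw [Finset.sum_eq_zero (fun j _ => if_neg (hcon j))] at h3
          omega
        obtain ⟨i, hi⟩ := h4
        exact ⟨i, (hEadj i v w).2 ⟨hvw, Or.inl hi⟩⟩
      · have h3 : ∑ j, (if σ j w = v then (1:ℕ) else 0) = 1 := by
          rw [← hσ w v, hMoff w v hvw.symm, h1]
        have h4 : ∃ i, σ i w = v := by
          by_contra hcon
          push_neg at hcon
          rw [Finset.sum_eq_zero (fun j _ => if_neg (hcon j))] at h3
          omega
        obtain ⟨i, hi⟩ := h4
        exact ⟨i, (hEadj i v w).2 ⟨hvw, Or.inr hi⟩⟩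
  · intro i v
    by_cases hfix : σ i v = v
    · left
      rw [degS, Set.ncard_eq_zero (Set.toFinite _)]
      ext w
      simp only [mem_neighborSet, Set.mem_empty_iff_false, iff_false]
      intro hadj
      obtain ⟨hvw, h1 | h1⟩ := hadj
      · exact hvw (hfix.symm.trans h1)
      · exact hvw (((σ i).injective (h1.trans hfix.symm)).symm)
    · right
      set a := σ i v with ha
      set b := (σ i).symm v with hb
      have hbv : σ i b = v := (σ i).apply_symm_apply v
      have hbne : b ≠ v := by
        intro h
        rw [h] at hbv
        exact hfix hbv
      have hane : a ≠ v := hfix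
      have hab : a ≠ b := by
        intro h
        have h1 : 1 ≤ M₀ v a := hperm_pos i v a (Ne.symm hane) rfl
        have h2 : 1 ≤ M₀ a v := by
          apply hperm_pos i a v hane
          rw [h]
          exact hbv
        have := hM01 v a (Ne.symm hane)
        omega
      have hset : (E i).neighborSet v = {a, b} := by
        ext w
        simp only [mem_neighborSet, Set.mem_insert_iff, Set.mem_singleton_iff]
        constructor
        · rintro ⟨hvw, h1 | h1⟩
          · left; exact h1.symm
          · right
            rw [hb]
            rw [← h1]
            exact ((σ i).symm_apply_apply w).symm
        · rintro (rfl | rfl)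
          · exact ⟨Ne.symm hane, Or.inl rfl⟩
          · exact ⟨Ne.symm hbne, Or.inr hbv⟩
      rw [degS, hset, Set.ncard_pair hab]

section CycGraph
variable {G : SimpleGraph α} {u₀ : α} {c : G.Walk u₀ u₀}

/-- the cycle walk as a standalone graph -/
def cycGraph (c : G.Walk u₀ u₀) : SimpleGraph α := SimpleGraph.fromEdgeSet {e | e ∈ c.edges}

lemma cycGraph_le (c : G.Walk u₀ u₀) : cycGraph c ≤ G := by
  intro v w hadj
  rw [cycGraph, fromEdgeSet_adj] at hadj
  exact (G.mem_edgeSet).1 (c.edges_subset_edgeSet hadj.1)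

lemma neighborSet_cycGraph (c : G.Walk u₀ u₀) (v : α) :
    (cycGraph c).neighborSet v = wNbr c v := by
  ext w
  simp only [mem_neighborSet, cycGraph, fromEdgeSet_adj, Set.mem_setOf_eq, wNbr]
  constructor
  · exact fun h => h.1
  · intro h
    exact ⟨h, G.ne_of_adj ((G.mem_edgeSet).1 (c.edges_subset_edgeSet h))⟩

lemma degS_cycGraph [Fintype α] (hc : c.IsCycle) (v : α) :
    degS (cycGraph c) v = if v ∈ c.support then 2 else 0 := by
  rw [degS, neighborSet_cycGraph, wNbr_ncard hc]

lemma isPolycycle_cycGraph [Fintype α] (hc : c.IsCycle) : IsPolycycle (cycGraph c) := by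
  intro v
  rw [degS_cycGraph hc]
  by_cases hv : v ∈ c.support
  · right; rw [if_pos hv]
  · left; rw [if_neg hv]

lemma edges_mem_cycGraph_edgeSet (c : G.Walk u₀ u₀) :
    ∀ e ∈ c.edges, e ∈ (cycGraph c).edgeSet := by
  intro e he
  rw [cycGraph, edgeSet_fromEdgeSet]
  exact ⟨he, G.not_isDiag_of_mem_edgeSet (c.edges_subset_edgeSet he)⟩

lemma isCycleGraph_cycGraph [Fintype α] (hc : c.IsCycle) : IsCycleGraph (cycGraph c) := by
  have hne : c.edges ≠ [] := by
    intro h0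
    have h1 := c.length_edges
    rw [h0] at h1
    exact hc.not_nil (SimpleGraph.Walk.nil_iff_length_eq.2 (by simpa using h1.symm))
  refine ⟨?_, fun v => isPolycycle_cycGraph hc v, ?_⟩
  · obtain ⟨e, he⟩ := List.exists_mem_of_ne_nil _ hne
    intro hbot
    have := edges_mem_cycGraph_edgeSet c e he
    rw [hbot] at this
    simpa using this
  · intro u v hu hv
    have hmem : ∀ x : α, 0 < degS (cycGraph c) x → x ∈ c.support := by
      intro x hx
      by_contra hcon
      rw [degS_cycGraph hc, if_neg hcon] at hx
      omega
    set q := c.transfer (cycGraph c) (edges_mem_cycGraph_edgeSet c) with hq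
    have hsupp : q.support = c.support := Walk.support_transfer c _
    have hreach : ∀ x, x ∈ c.support → (cycGraph c).Reachable u₀ x := by
      intro x hx
      rw [← hsupp] at hx
      exact ⟨q.takeUntil x hx⟩
    exact ((hreach u (hmem u hu)).symm).trans (hreach v (hmem v hv))

lemma sup_deleteEdges_cycGraph (c : G.Walk u₀ u₀) :
    G.deleteEdges {e | e ∈ c.edges} ⊔ cycGraph c = G := by
  ext v w
  simp only [sup_adj, deleteEdges_adj, cycGraph, fromEdgeSet_adj, Set.mem_setOf_eq]
  constructor
  · rintro (⟨h, -⟩ | ⟨h1, -⟩)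
    · exact h
    · exact (G.mem_edgeSet).1 (c.edges_subset_edgeSet h1)
  · intro h
    by_cases hmem : s(v, w) ∈ c.edges
    · exact Or.inr ⟨hmem, G.ne_of_adj h⟩
    · exact Or.inl ⟨h, hmem⟩

lemma disjoint_deleteEdges_cycGraph (c : G.Walk u₀ u₀) :
    Disjoint (G.deleteEdges {e | e ∈ c.edges}) (cycGraph c) := by
  rw [← disjoint_edgeSet, Set.disjoint_left]
  intro e he1 he2
  rw [edgeSet_deleteEdges] at he1
  rw [cycGraph, edgeSet_fromEdgeSet] at he2
  exact he1.2 he2.1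

end CycGraph
end PolyDecomp

/-- Every Eulerian graph of maximum degree at most `2k` decomposes into `k`
polycycles; moreover, if `t ≤ k` and at most one vertex has degree greater than
`2t`, the classes indexed `t, …, k-1` can be chosen empty or single cycles. -/
theorem eulerian_graph_polycycle_decomposition
    {α : Type*} [Fintype α] (G : SimpleGraph α) (k t : ℕ)
    (hEuler : ∀ v, Even (degS G v))
    (hdeg : ∀ v, degS G v ≤ 2 * k)
    (ht : t ≤ k)
    (hone : ({v | 2 * t < degS G v} : Set α).Subsingleton) :
    ∃ E : Fin k → SimpleGraph α,
      (∀ i j, i ≠ j → Disjoint (E i) (E j)) ∧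
      (⨆ i, E i) = G ∧
      (∀ i, IsPolycycle (E i)) ∧
      (∀ i : Fin k, t ≤ i.val → E i = ⊥ ∨ IsCycleGraph (E i)) := by
  classical
  induction k generalizing G with
  | zero =>
    have hG : G = ⊥ := PolyDecomp.eq_bot_of_degS (fun v => Nat.le_zero.1 (by simpa using hdeg v))
    refine ⟨fun i => i.elim0, fun i => i.elim0, ?_, fun i => i.elim0, fun i => i.elim0⟩
    rw [hG]
    exact iSup_of_empty _
  | succ k ih =>
    by_cases hall : ∀ v, degS G v ≤ 2 * t
    · obtain ⟨E'', hdisj, hsup, hpoly⟩ := PolyDecomp.polycycle_decomp G t hEuler hall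
      refine ⟨fun i => if h : i.val < t then E'' ⟨i.val, h⟩ else ⊥, ?_, ?_, ?_, ?_⟩
      · intro i j hij
        beta_reduce
        by_cases hi : i.val < t <;> by_cases hj : j.val < t
        · rw [dif_pos hi, dif_pos hj]
          apply hdisj
          intro hcon
          have hval := congrArg (fun x : Fin t => x.val) hcon
          exact hij (Fin.ext hval)
        · rw [dif_neg hj]; exact disjoint_bot_right
        · rw [dif_neg hi]; exact disjoint_bot_left
        · rw [dif_neg hi]; exact disjoint_bot_left
      · apply le_antisymm
        · apply iSup_le
          intro i
          beta_reduce
          by_cases hi : i.val < t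
          · rw [dif_pos hi, ← hsup]
            exact le_iSup E'' ⟨i.val, hi⟩
          · rw [dif_neg hi]; exact bot_le
        · rw [← hsup]
          apply iSup_le
          intro j
          have hjlt : (⟨j.val, lt_of_lt_of_le j.isLt ht⟩ : Fin (k+1)).val < t := j.isLt
          have heq : E'' j = (fun i : Fin (k+1) => if h : i.val < t then E'' ⟨i.val, h⟩ else ⊥)
              ⟨j.val, lt_of_lt_of_le j.isLt ht⟩ := by
            beta_reduce
            rw [dif_pos hjlt]
          rw [heq]
          exact le_iSup (fun i : Fin (k+1) => if h : i.val < t then E'' ⟨i.val, h⟩ else ⊥)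
            ⟨j.val, lt_of_lt_of_le j.isLt ht⟩
      · intro i v
        beta_reduce
        by_cases hi : i.val < t
        · rw [dif_pos hi]; exact hpoly _ v
        · rw [dif_neg hi]
          left
          have hns : (⊥ : SimpleGraph α).neighborSet v = ∅ := by ext w; simp
          rw [degS, hns, Set.ncard_empty]
      · intro i hti
        beta_reduce
        rw [dif_neg (by omega)]
        exact Or.inl rfl
    · push_neg at hall
      obtain ⟨v₀, hv₀⟩ := hall
      have hv₀' : 2 * t < degS G v₀ := hv₀
      have htk : t ≤ k := by
        have := hdeg v₀
        omega
      have hpos : 0 < degS G v₀ := by omega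
      obtain ⟨c, hc⟩ := PolyDecomp.exists_cycle_through hEuler hpos
      set G' := G.deleteEdges {e | e ∈ c.edges} with hG'
      have hdel : ∀ v, degS G' v = degS G v - (if v ∈ c.support then 2 else 0) :=
        fun v => PolyDecomp.degS_deleteEdges hc v
      have hE' : ∀ v, Even (degS G' v) := by
        intro v
        rw [hdel v]
        by_cases hv : v ∈ c.support
        · rw [if_pos hv, Nat.even_sub (PolyDecomp.two_le_degS_of_mem_support hc hv)]
          simp [hEuler v]
        · rw [if_neg hv]
          exact hEuler v
      have hle : ∀ v, degS G' v ≤ degS G v := by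
        intro v
        rw [hdel v]
        exact Nat.sub_le _ _
      have hdeg' : ∀ v, degS G' v ≤ 2 * k := by
        intro v
        by_cases hvt : 2 * t < degS G v
        · have hvv : v = v₀ := hone hvt hv₀'
          subst hvv
          have hvsupp : v ∈ c.support := SimpleGraph.Walk.start_mem_support c
          rw [hdel v, if_pos hvsupp]
          have := hdeg v
          omega
        · have := hle v
          omega
      have hone' : ({v | 2 * t < degS G' v} : Set α).Subsingleton := by
        intro a ha b hb
        exact hone (lt_of_lt_of_le ha (hle a)) (lt_of_lt_of_le hb (hle b))
      obtain ⟨E', hdisj', hsup', hpoly', hcyc'⟩ := ih G' hE' hdeg' htk hone'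
      set C := PolyDecomp.cycGraph c with hC
      have hEleG' : ∀ j, E' j ≤ G' := fun j => hsup' ▸ le_iSup E' j
      have hCG' : Disjoint G' C := PolyDecomp.disjoint_deleteEdges_cycGraph c
      have hdisjC : ∀ j, Disjoint C (E' j) :=
        fun j => (hCG'.symm).mono_right (hEleG' j)
      refine ⟨Fin.snoc E' C, ?_, ?_, ?_, ?_⟩
      · intro i j hij
        induction i using Fin.lastCases with
        | last =>
          induction j using Fin.lastCases with
          | last => exact absurd rfl hij
          | cast j =>
            rw [Fin.snoc_last, Fin.snoc_castSucc]
            exact hdisjC j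
        | cast i =>
          induction j using Fin.lastCases with
          | last =>
            rw [Fin.snoc_last, Fin.snoc_castSucc]
            exact (hdisjC i).symm
          | cast j =>
            rw [Fin.snoc_castSucc, Fin.snoc_castSucc]
            exact hdisj' i j (fun h => hij (congrArg Fin.castSucc h))
      · apply le_antisymm
        · apply iSup_le
          intro i
          induction i using Fin.lastCases with
          | last =>
            rw [Fin.snoc_last]
            exact PolyDecomp.cycGraph_le c
          | cast i =>
            rw [Fin.snoc_castSucc]
            exact le_trans (hEleG' i) (G.deleteEdges_le _)
        · rw [← PolyDecomp.sup_deleteEdges_cycGraph c]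
          apply sup_le
          · rw [← hG', ← hsup']
            apply iSup_le
            intro j
            have h7 := le_iSup (Fin.snoc E' C : Fin (k+1) → SimpleGraph α) (Fin.castSucc j)
            rwa [Fin.snoc_castSucc] at h7
          · have h7 := le_iSup (Fin.snoc E' C : Fin (k+1) → SimpleGraph α) (Fin.last k)
            rwa [Fin.snoc_last] at h7
      · intro i
        induction i using Fin.lastCases with
        | last =>
          rw [Fin.snoc_last]
          exact PolyDecomp.isPolycycle_cycGraph hc
        | cast i =>
          rw [Fin.snoc_castSucc]
          exact hpoly' i
      · intro i hti
        induction i using Fin.lastCases with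
        | last =>
          rw [Fin.snoc_last]
          exact Or.inr (PolyDecomp.isCycleGraph_cycGraph hc)
        | cast i =>
          rw [Fin.snoc_castSucc]
          exact hcyc' i (by simpa using hti)
end

section
/- Let p : Fin m → Fin n and let π be a p-balanced permutation of Fin m. Then there exist p-cycles σ₁ and σ₂ of Fin m such that π = σ₂ ∘ σ₁. -/
section Aux

open Equiv Equiv.Perm Finset

open Equiv Equiv.Perm Finset

variable {α : Type*} [Fintype α] [DecidableEq α]

/-- Merging two cycles whose supports intersect in exactly one point gives a cycle. -/
lemma mul_isCycle_of_inter_singleton {a b : Perm α} {t : α}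
    (ha : a.IsCycle) (hb : b.IsCycle) (hab : a.support ∩ b.support = {t}) :
    (a * b).IsCycle ∧ (a * b).support = a.support ∪ b.support := by
  have htm : t ∈ a.support ∩ b.support := by rw [hab]; exact mem_singleton_self t
  have hta : t ∈ a.support := (mem_inter.1 htm).1
  have htb : t ∈ b.support := (mem_inter.1 htm).2
  have honly : ∀ z, z ∈ a.support → z ∈ b.support → z = t := by
    intro z h1 h2
    have : z ∈ a.support ∩ b.support := mem_inter.2 ⟨h1, h2⟩
    rwa [hab, mem_singleton] at this
  set g := a * b with hg
  have hpow : ∀ (c : Perm α) (k : ℕ) (x : α), c ((c ^ k) x) = (c ^ (k+1)) x := by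
    intro c k x
    rw [← Equiv.Perm.mul_apply, ← pow_succ']
  -- support computation
  have hsupp : g.support = a.support ∪ b.support := by
    apply le_antisymm (support_mul_le a b)
    intro z hz
    rw [mem_support]
    show a (b z) ≠ z
    rcases mem_union.1 hz with h1 | h1
    · by_cases h2 : z ∈ b.support
      · have hzt : z = t := honly z h1 h2
        have hbz : b z ∈ b.support := apply_mem_support.2 h2
        have hbzt : b z ≠ z := mem_support.1 h2
        have hbza : b z ∉ a.support := by
          intro h
          have h3 := honly _ h hbz
          rw [h3, ← hzt] at hbzt
          exact hbzt rfl
        rw [notMem_support.1 hbza]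
        exact hbzt
      · rw [notMem_support.1 h2]
        exact mem_support.1 h1
    · have hbz : b z ∈ b.support := apply_mem_support.2 h1
      by_cases hbzt : b z = t
      · rw [hbzt]
        intro hatz
        have hat : a t ∈ a.support := apply_mem_support.2 hta
        rw [hatz] at hat
        have : z = t := honly z hat h1
        rw [this] at hbzt
        exact (mem_support.1 htb) hbzt
      · have hbza : b z ∉ a.support := fun h => hbzt (honly _ h hbz)
        rw [notMem_support.1 hbza]
        exact mem_support.1 h1
  refine ⟨?_, hsupp⟩
  have claimB : ∀ z ∈ b.support, g.SameCycle t z := by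
    have claimA : ∀ k : ℕ, g.SameCycle t ((b ^ k) t) := by
      intro k
      induction k with
      | zero => simpa using SameCycle.refl g t
      | succ k ih =>
        by_cases hcase : (b ^ (k+1)) t = t
        · rw [hcase]
        · have hb1 : (b ^ (k+1)) t ∈ b.support := pow_apply_mem_support.2 htb
          have hna : (b ^ (k+1)) t ∉ a.support := fun h => hcase (honly _ h hb1)
          have hgw : g ((b ^ k) t) = (b ^ (k+1)) t := by
            show a (b ((b ^ k) t)) = _
            rw [hpow b k t, notMem_support.1 hna]
          rw [← hgw]
          exact (sameCycle_apply_right).2 ih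
    intro z hz
    obtain ⟨i, _, hi⟩ :=
      (hb.sameCycle (mem_support.1 htb) (mem_support.1 hz)).exists_pow_eq'
    rw [← hi]
    exact claimA i
  have claimC : ∀ z ∈ a.support, g.SameCycle t z := by
    have claimA' : ∀ k : ℕ, g.SameCycle t ((a ^ k) t) := by
      intro k
      induction k with
      | zero => simpa using SameCycle.refl g t
      | succ k ih =>
        have hwa : (a ^ k) t ∈ a.support := pow_apply_mem_support.2 hta
        by_cases hwt : (a ^ k) t = t
        · have heq : (a ^ (k+1)) t = a t := by rw [← hpow a k t, hwt]
          rw [heq]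
          have hub : b⁻¹ t ∈ b.support := by
            rw [← support_inv] at htb ⊢
            exact apply_mem_support.2 htb
          have hgu : g (b⁻¹ t) = a t := by
            show a (b (b⁻¹ t)) = a t
            rw [show b (b⁻¹ t) = t from b.apply_symm_apply t]
          rw [← hgu]
          exact (sameCycle_apply_right).2 (claimB _ hub)
        · have hwb : (a ^ k) t ∉ b.support := fun h => hwt (honly _ hwa h)
          have hgw : g ((a ^ k) t) = (a ^ (k+1)) t := by
            show a (b ((a ^ k) t)) = _
            rw [notMem_support.1 hwb, hpow a k t]
          rw [← hgw]
          exact (sameCycle_apply_right).2 ih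
    intro z hz
    obtain ⟨i, _, hi⟩ :=
      (ha.sameCycle (mem_support.1 hta) (mem_support.1 hz)).exists_pow_eq'
    rw [← hi]
    exact claimA' i
  refine ⟨t, ?_, ?_⟩
  · exact mem_support.1 (by rw [hsupp]; exact mem_union.2 (Or.inl hta))
  · intro z hz
    have hz' : z ∈ g.support := mem_support.2 hz
    rw [hsupp, mem_union] at hz'
    exact hz'.elim (claimC z) (claimB z)

lemma exists_two_cycles (π : Perm α) :
    ∃ σ τ : Perm α, (σ = 1 ∨ σ.IsCycle) ∧ (τ = 1 ∨ τ.IsCycle) ∧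
      σ.support = π.support ∧ τ.support ⊆ π.support ∧ π = σ * τ := by
  generalize hN : π.support.card = N
  induction N using Nat.strong_induction_on generalizing π with
  | _ N ih =>
  by_cases h1 : π = 1
  · exact ⟨1, 1, Or.inl rfl, Or.inl rfl, by simp [h1], by simp, by simp [h1]⟩
  obtain ⟨x, hx⟩ : ∃ x, π x ≠ x := by
    by_contra h
    push_neg at h
    exact h1 (Equiv.ext h)
  set c := π.cycleOf x with hc
  have hcmem : c ∈ π.cycleFactorsFinset := cycleOf_mem_cycleFactorsFinset_iff.2 (mem_support.2 hx)
  have hcyc : c.IsCycle := isCycle_cycleOf π hx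
  set π' := π * c⁻¹ with hπ'
  have hdisj : Disjoint π' c := disjoint_mul_inv_of_mem_cycleFactorsFinset hcmem
  have hππ' : π = π' * c := by rw [hπ', inv_mul_cancel_right]
  have hsup : π.support = π'.support ∪ c.support := by
    conv_lhs => rw [hππ']
    exact hdisj.support_mul
  have hsupd : _root_.Disjoint π'.support c.support :=
    Equiv.Perm.disjoint_iff_disjoint_support.1 hdisj
  have hxc : x ∈ c.support := by
    rw [mem_support, hc, cycleOf_apply_self]
    exact hx
  have hlt : π'.support.card < N := by
    rw [← hN]
    apply Finset.card_lt_card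
    constructor
    · rw [hsup]; exact Finset.subset_union_left
    · intro hss
      have := hss (mem_support.2 hx)
      exact Finset.disjoint_right.1 hsupd hxc this
  obtain ⟨σ', τ', hσ'1, hτ'1, hσ's, hτ's, hfac⟩ := ih _ hlt π' rfl
  rcases hσ'1 with hσ'1 | hσ'cyc
  · -- σ' = 1, hence π' = 1 and τ' = 1
    have hps : π'.support = ∅ := by rw [← hσ's, hσ'1, support_one]
    have hp1 : π' = 1 := support_eq_empty_iff.1 hps
    refine ⟨c, 1, Or.inr hcyc, Or.inl rfl, ?_, by simp, by rw [hππ', hp1, one_mul, mul_one]⟩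
    rw [hsup, hps, Finset.empty_union]
  · -- σ' is a cycle
    have hxns : x ∉ σ'.support := by
      rw [hσ's]
      exact Finset.disjoint_right.1 hsupd hxc
    obtain ⟨y, hyτ, hyσ⟩ : ∃ y, (τ' = 1 ∨ y ∈ τ'.support) ∧ y ∈ σ'.support := by
      rcases hτ'1 with h | h
      · obtain ⟨y, hy⟩ := hσ'cyc.nonempty_support
        exact ⟨y, Or.inl h, hy⟩
      · obtain ⟨y, hy⟩ := h.nonempty_support
        exact ⟨y, Or.inr hy, by rw [hσ's]; exact hτ's hy⟩
    have hxy : x ≠ y := fun h => hxns (h ▸ hyσ)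
    set s := Equiv.swap x y with hs
    have hscyc : s.IsCycle := isCycle_swap hxy
    have hssupp : s.support = {x, y} := support_swap hxy
    have hinter1 : σ'.support ∩ s.support = {y} := by
      rw [hssupp]
      ext z
      simp only [Finset.mem_inter, Finset.mem_insert, Finset.mem_singleton]
      constructor
      · rintro ⟨hz1, rfl | rfl⟩
        · exact absurd hz1 hxns
        · rfl
      · rintro rfl
        exact ⟨hyσ, Or.inr rfl⟩
    obtain ⟨hρcyc, hρsupp⟩ := mul_isCycle_of_inter_singleton hσ'cyc hscyc hinter1
    set ρ := σ' * s with hρ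
    have hinter2 : c.support ∩ ρ.support = {x} := by
      rw [hρsupp, hssupp]
      ext z
      simp only [Finset.mem_inter, Finset.mem_union, Finset.mem_insert, Finset.mem_singleton]
      constructor
      · rintro ⟨hz1, (hz2 | rfl | rfl)⟩
        · exact absurd hz1 (Finset.disjoint_left.1 hsupd (hσ's ▸ hz2))
        · rfl
        · exact absurd hz1 (Finset.disjoint_left.1 hsupd (hσ's ▸ hyσ))
      · rintro rfl
        exact ⟨hxc, Or.inr (Or.inl rfl)⟩
    obtain ⟨hσcyc, hσsupp⟩ := mul_isCycle_of_inter_singleton hcyc hρcyc hinter2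
    set σ := c * ρ with hσd
    have hσsupp' : σ.support = π.support := by
      rw [hσsupp, hρsupp, hssupp, hsup, hσ's]
      ext z
      simp only [Finset.mem_union, Finset.mem_insert, Finset.mem_singleton]
      constructor
      · rintro (h | h | rfl | rfl)
        · exact Or.inr h
        · exact Or.inl h
        · exact Or.inr hxc
        · exact Or.inl (hσ's ▸ hyσ)
      · rintro (h | h)
        · exact Or.inr (Or.inl h)
        · exact Or.inl h
    have hcomm : π' * c = c * π' := (hdisj.commute).eq
    rcases hyτ with hτ'one | hyτ'
    · -- τ' = 1 : take τ = s
      refine ⟨σ, s, Or.inr hσcyc, Or.inr hscyc, hσsupp', ?_, ?_⟩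
      · rw [hssupp, hsup]
        intro z hz
        simp only [Finset.mem_insert, Finset.mem_singleton] at hz
        rcases hz with rfl | rfl
        · exact Finset.mem_union.2 (Or.inr hxc)
        · exact Finset.mem_union.2 (Or.inl (hσ's ▸ hyσ))
      · have hπσ' : π' = σ' := by rw [hfac, hτ'one, mul_one]
        rw [hσd, hρ, hππ', hcomm, hπσ']
        simp [hs, mul_assoc, Equiv.swap_mul_self, Equiv.swap_mul_self_mul]
    · -- τ' ≠ 1 case: take τ = s * τ'
      have hinter3 : s.support ∩ τ'.support = {y} := by
        rw [hssupp]
        ext z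
        simp only [Finset.mem_inter, Finset.mem_insert, Finset.mem_singleton]
        constructor
        · rintro ⟨rfl | rfl, hz2⟩
          · exact absurd (hτ's hz2) (by rw [hσ's] at hxns; exact hxns)
          · rfl
        · rintro rfl
          exact ⟨Or.inr rfl, hyτ'⟩
      have hτ'cyc : τ'.IsCycle := by
        rcases hτ'1 with h | h
        · rw [h] at hyτ'; simp at hyτ'
        · exact h
      obtain ⟨hτcyc, hτsupp⟩ := mul_isCycle_of_inter_singleton hscyc hτ'cyc hinter3
      refine ⟨σ, s * τ', Or.inr hσcyc, Or.inr hτcyc, hσsupp', ?_, ?_⟩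
      · rw [hτsupp, hssupp, hsup]
        intro z hz
        simp only [Finset.mem_union, Finset.mem_insert, Finset.mem_singleton] at hz
        rcases hz with (rfl | rfl) | h
        · exact Finset.mem_union.2 (Or.inr hxc)
        · exact Finset.mem_union.2 (Or.inl (hσ's ▸ hyσ))
        · exact Finset.mem_union.2 (Or.inl (hτ's h))
      · rw [hσd, hρ, hππ', hcomm, hfac]
        simp [hs, mul_assoc, Equiv.swap_mul_self, Equiv.swap_mul_self_mul]

end Aux

/-- Every `p`-balanced permutation is a product of two `p`-cycles. -/
theorem balanced_perm_eq_prod_two_pCycles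
    (m n : ℕ) (p : Fin m → Fin n) (π : Equiv.Perm (Fin m))
    (hπ : IsBalanced p π) :
    ∃ σ₁ σ₂ : Equiv.Perm (Fin m),
      IsPCycle p σ₁ ∧ IsPCycle p σ₂ ∧ π = σ₂ * σ₁ := by
  classical
  obtain ⟨σ, τ, hσ1, hτ1, hσs, hτs, heq⟩ := exists_two_cycles π
  have hps : ∀ f : Equiv.Perm (Fin m), psupp f = ↑f.support := fun f =>
    (Equiv.Perm.coe_support_eq_set_support f).symm
  refine ⟨τ, σ, ⟨?_, hτ1⟩, ⟨?_, hσ1⟩, heq⟩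
  · refine hπ.mono ?_
    rw [hps, hps]
    exact_mod_cast hτs
  · refine hπ.mono ?_
    rw [hps, hps, hσs]
end

section
/- Let n ≥ 4 and let κ₁ ≥ ⋯ ≥ κₙ ≥ 0 be integers summing to m. Define L := ⌈8(κ₂ + κ₄ + ⋯ + κₙ)/(3n)⌉ if n is even (the sum over even indices 2, 4, …, n), and L := ⌈(8(κ₂ + κ₄ + ⋯ + κ_{n−3}) + 12κₙ)/(3n+1)⌉ if n is odd (the sum over even indices 2, 4, …, n−3). Then there exist (m,n)-partitions p, p' : Fin m → Fin n, both with shape (κ₁, …, κₙ), such that every p-cycle decomposition of (p, p') has length at least L. (Equivalently, the combinatorial diameter of the partition polytope PP(κ₁, …, κₙ) is at least L.) -/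
open Finset

namespace PPD


def partnerF (n iv : ℕ) : ℕ :=
  if n % 2 = 0 then (if iv % 2 = 0 then iv + 1 else iv - 1)
  else if iv < n - 3 then (if iv % 2 = 0 then iv + 1 else iv - 1)
  else if iv = n - 3 then n - 2 else if iv = n - 2 then n - 1 else n - 3

def kap {n : ℕ} (κ : Fin n → ℕ) (j : ℕ) : ℕ := if h : j < n then κ ⟨j, h⟩ else 0

def thrF {n : ℕ} (κ : Fin n → ℕ) (iv : ℕ) : ℕ :=
  if n % 2 = 0 then (if iv % 2 = 0 then kap κ (iv + 1) else kap κ iv)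
  else if iv < n - 3 then (if iv % 2 = 0 then kap κ (iv + 1) else kap κ iv)
  else kap κ (n - 1)

def srcF (n iv : ℕ) : ℕ :=
  if n % 2 = 0 ∨ iv < n - 3 then partnerF n iv
  else if iv = n - 3 then n - 1 else iv - 1

lemma partner_lt {n iv : ℕ} (hn : 4 ≤ n) (h : iv < n) : partnerF n iv < n := by
  unfold partnerF; split_ifs <;> omega

lemma partner_ne {n iv : ℕ} (hn : 4 ≤ n) (h : iv < n) : partnerF n iv ≠ iv := by
  unfold partnerF; split_ifs <;> omega

lemma src_lt {n iv : ℕ} (hn : 4 ≤ n) (h : iv < n) : srcF n iv < n := by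
  unfold srcF partnerF; split_ifs <;> omega

lemma src_spec {n iv : ℕ} (hn : 4 ≤ n) (h : iv < n) {jv : ℕ} (hj : jv < n) :
    partnerF n jv = iv ↔ jv = srcF n iv := by
  unfold srcF partnerF; split_ifs <;> omega

lemma kap_anti {n : ℕ} {κ : Fin n → ℕ} (hmono : Antitone κ) {j k : ℕ} (h : j ≤ k) :
    kap κ k ≤ kap κ j := by
  unfold kap
  split_ifs with h1 h2 h2
  · exact hmono (by exact Fin.mk_le_mk.mpr h)
  · omega
  · exact Nat.zero_le _
  · exact Nat.zero_le _

lemma kap_val {n : ℕ} (κ : Fin n → ℕ) (i : Fin n) : kap κ i.val = κ i := by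
  simp [kap, i.isLt]

lemma thr_le {n : ℕ} {κ : Fin n → ℕ} (hmono : Antitone κ) {iv : ℕ} (h : iv < n) :
    thrF κ iv ≤ kap κ iv := by
  unfold thrF; split_ifs <;> exact kap_anti hmono (by omega)

lemma thr_src {n : ℕ} (κ : Fin n → ℕ) (hn : 4 ≤ n) {iv : ℕ} (h : iv < n) :
    thrF κ (srcF n iv) = thrF κ iv := by
  unfold thrF srcF partnerF
  split_ifs <;> first | rfl | (congr 1; omega) | omega


lemma card_filter_equiv {α β : Type*} [Fintype α] [Fintype β] (e : α ≃ β)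
    (Q : β → Prop) [DecidablePred Q] :
    (Finset.univ.filter fun a : α => Q (e a)).card = (Finset.univ.filter Q).card := by
  apply Finset.card_bij (fun a _ => e a)
  · intro a ha
    simp only [Finset.mem_filter, Finset.mem_univ, true_and] at *
    exact ha
  · intro a₁ _ a₂ _ h; exact e.injective h
  · intro b hb
    refine ⟨e.symm b, ?_, by simp⟩
    simp only [Finset.mem_filter, Finset.mem_univ, true_and] at *
    simpa using hb

lemma card_val_lt (N c : ℕ) :
    ((Finset.univ : Finset (Fin N)).filter fun a => a.val < c).card = min c N := by
  have h1 : ((Finset.univ : Finset (Fin N)).filter fun a => a.val < c).card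
      = ((Finset.range N).filter fun i => i < c).card := by
    rw [Finset.card_filter, Finset.card_filter, ← Fin.sum_univ_eq_sum_range (fun i => if i < c then 1 else 0)]
  rw [h1]
  have h2 : (Finset.range N).filter (fun i => i < c) = Finset.range (min c N) := by
    ext x; simp only [Finset.mem_filter, Finset.mem_range]; omega
  rw [h2, Finset.card_range]

lemma card_filter_ite (N t u v w : ℕ) :
    ((Finset.univ : Finset (Fin N)).filter fun a => (if a.val < t then u else v) = w).card
      = (if u = w then min t N else 0) + (if v = w then N - min t N else 0) := by
  have hsplit := Finset.card_filter_add_card_filter_not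
    (s := (Finset.univ : Finset (Fin N))) (fun a : Fin N => a.val < t)
  simp only [Finset.card_univ, Fintype.card_fin] at hsplit
  have hlt := card_val_lt N t
  by_cases hu : u = w <;> by_cases hv : v = w
  · have h : (Finset.filter (fun a : Fin N => (if a.val < t then u else v) = w) Finset.univ)
        = Finset.univ := by
      apply Finset.filter_true_of_mem; intro a _; split_ifs <;> assumption
    rw [h, Finset.card_univ, Fintype.card_fin, if_pos hu, if_pos hv]; omega
  · have h : (Finset.filter (fun a : Fin N => (if a.val < t then u else v) = w) Finset.univ)
        = (Finset.filter (fun a : Fin N => a.val < t) Finset.univ) := by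
      apply Finset.filter_congr; intro a _
      split_ifs with h' <;> simp [hu, hv, h']
    rw [h, hlt, if_pos hu, if_neg hv]; omega
  · have h : (Finset.filter (fun a : Fin N => (if a.val < t then u else v) = w) Finset.univ)
        = (Finset.filter (fun a : Fin N => ¬ a.val < t) Finset.univ) := by
      apply Finset.filter_congr; intro a _
      split_ifs with h' <;> simp [hu, hv, h']
    rw [h, if_neg hu, if_pos hv]; omega
  · have h : (Finset.filter (fun a : Fin N => (if a.val < t then u else v) = w) Finset.univ)
        = ∅ := by
      apply Finset.filter_false_of_mem; intro a _; split_ifs <;> [exact hu; exact hv]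
    rw [h, if_neg hu, if_neg hv]; simp

lemma supp_sub {α : Type*} (σ : Equiv.Perm α) (hc : σ.IsCycle) (S : Set α) (x₀ : α)
    (hx₀ : x₀ ∈ S) (hm : σ x₀ ≠ x₀) (hf : ∀ w ∈ S, σ w ∈ S) (hb : ∀ w ∈ S, σ⁻¹ w ∈ S) :
    ∀ z, σ z ≠ z → z ∈ S := by
  have hpow : ∀ i : ℤ, (σ ^ i) x₀ ∈ S := by
    intro i
    induction i using Int.induction_on with
    | zero => simpa using hx₀
    | succ k ih =>
        have h1 : (σ ^ ((k : ℤ) + 1)) x₀ = σ ((σ ^ (k : ℤ)) x₀) := by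
          rw [add_comm, zpow_add, zpow_one, Equiv.Perm.mul_apply]
        rw [h1]; exact hf _ ih
    | pred k ih =>
        have h1 : (σ ^ (-(k : ℤ) - 1)) x₀ = σ⁻¹ ((σ ^ (-(k : ℤ))) x₀) := by
          rw [show (-(k : ℤ) - 1) = -1 + -(k:ℤ) by ring, zpow_add, zpow_neg_one,
            Equiv.Perm.mul_apply]
        rw [h1]; exact hb _ ih
  intro z hz
  obtain ⟨b, hb', hall⟩ := hc
  obtain ⟨i, hi⟩ := (hall hm).symm.trans (hall hz)
  rw [← hi]; exact hpow i


section Cap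
variable {m n : ℕ}

lemma cap_lemma (hn : 4 ≤ n) (p : Fin m → Fin n) (σ : Equiv.Perm (Fin m))
    (hbal : Set.InjOn p {x | σ x ≠ x}) (hcyc : σ = 1 ∨ σ.IsCycle)
    (F : Finset (Fin m))
    (hF : ∀ x ∈ F, σ x ≠ x ∧ (p (σ x)).val = partnerF n (p x).val
          ∧ partnerF n (p x).val ≠ (p x).val) :
    2 * (Finset.univ.filter fun z => σ z ≠ z).card + 2 * F.card
      ≤ (if n % 2 = 0 then 3 * n else 3 * n + 1) := by
  rcases hcyc with h1 | hcyc
  · -- identity permutation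
    have hFe : F = ∅ := by
      apply Finset.eq_empty_of_forall_notMem
      intro x hx
      exact (hF x hx).1 (by rw [h1]; rfl)
    have hSe : (Finset.univ.filter fun z => σ z ≠ z) = ∅ := by
      apply Finset.filter_false_of_mem
      intro x _ hx
      exact hx (by rw [h1]; rfl)
    rw [hFe, hSe]; simp
  set Sf := Finset.univ.filter fun z => σ z ≠ z with hSf
  have hmemSf : ∀ z, σ z ≠ z → z ∈ Sf := by
    intro z hz; simp [hSf, hz]
  have hFS : ∀ x ∈ F, x ∈ Sf := fun x hx => hmemSf x (hF x hx).1
  -- support bounded by n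
  have hcoe : (Sf : Set (Fin m)) = {x | σ x ≠ x} := by
    ext z; simp [hSf]
  have hSfn : Sf.card ≤ n := by
    have h2 : (Sf.image p).card = Sf.card := Finset.card_image_of_injOn (by rw [hcoe]; exact hbal)
    calc Sf.card = (Sf.image p).card := h2.symm
      _ ≤ Fintype.card (Fin n) := Finset.card_le_univ _
      _ = n := Fintype.card_fin n
  -- distinct elements of F have distinct colors
  have hpdist : ∀ x ∈ F, ∀ y ∈ F, x ≠ y → (p x).val ≠ (p y).val := by
    intro x hx y hy hxy h
    exact hxy (hbal (hF x hx).1 (hF y hy).1 (Fin.val_injective h))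
  -- adjacency: if partner of color of x equals color of y then σ x = y
  have hadj : ∀ x ∈ F, ∀ y ∈ F, partnerF n (p x).val = (p y).val → σ x = y := by
    intro x hx y hy hpart
    have h1 : σ (σ x) ≠ σ x := fun h => (hF x hx).1 (σ.injective h)
    have h2 : p (σ x) = p y := Fin.val_injective (by rw [(hF x hx).2.1, hpart])
    exact hbal h1 (hF y hy).1 h2
  -- two distinct same-class mates that point at each other give a 2-elt support
  have hswap : ∀ x ∈ F, ∀ y ∈ F, x ≠ y →
      partnerF n (p x).val = (p y).val → partnerF n (p y).val = (p x).val →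
      Sf.card ≤ 2 ∧ F.card ≤ 2 := by
    intro x hx y hy hxy hp1 hp2
    have hsx : σ x = y := hadj x hx y hy hp1
    have hsy : σ y = x := hadj y hy x hx hp2
    have hsub : ∀ z, σ z ≠ z → z ∈ ({x, y} : Set (Fin m)) := by
      apply supp_sub σ hcyc _ x (by simp) (by rw [hsx]; exact hxy ∘ Eq.symm)
      · intro w hw
        rcases hw with h | h
        · subst h; rw [hsx]; right; rfl
        · rw [Set.mem_singleton_iff] at h; subst h; rw [hsy]; left; rfl
      · intro w hw
        rcases hw with h | h
        · subst h; rw [Equiv.Perm.inv_eq_iff_eq.mpr hsy.symm]; right; rfl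
        · rw [Set.mem_singleton_iff] at h; subst h
          rw [Equiv.Perm.inv_eq_iff_eq.mpr hsx.symm]; left; rfl
    have hs2 : Sf ⊆ {x, y} := by
      intro z hz
      simp only [hSf, Finset.mem_filter] at hz
      have := hsub z hz.2
      simpa using this
    have hc1 : Sf.card ≤ 2 := le_trans (Finset.card_le_card hs2)
      (le_trans (Finset.card_insert_le _ _) (by simp))
    exact ⟨hc1, le_trans (Finset.card_le_card (fun z hz => hFS z hz)) hc1⟩
  by_cases hpar : n % 2 = 0
  · -- even case
    rw [if_pos hpar]
    by_cases hcol : ∃ x ∈ F, ∃ y ∈ F, x ≠ y ∧ (p x).val / 2 = (p y).val / 2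
    · obtain ⟨x, hx, y, hy, hxy, hc⟩ := hcol
      have hne := hpdist x hx y hy hxy
      have hxlt := (p x).isLt
      have hylt := (p y).isLt
      have hp1 : partnerF n (p x).val = (p y).val := by
        unfold partnerF; split_ifs <;> omega
      have hp2 : partnerF n (p y).val = (p x).val := by
        unfold partnerF; split_ifs <;> omega
      obtain ⟨hc1, hc2⟩ := hswap x hx y hy hxy hp1 hp2
      omega
    · push_neg at hcol
      have hinj : Set.InjOn (fun x => (p x).val / 2) (F : Set (Fin m)) := by
        intro x hx y hy h
        by_contra hne
        exact hcol x hx y hy hne h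
      have himg : F.image (fun x => (p x).val / 2) ⊆ Finset.range (n / 2) := by
        intro v hv
        simp only [Finset.mem_image] at hv
        obtain ⟨x, _, hx⟩ := hv
        have := (p x).isLt
        simp only [Finset.mem_range]; omega
      have hFn : F.card ≤ n / 2 := by
        calc F.card = (F.image (fun x => (p x).val / 2)).card :=
              (Finset.card_image_of_injOn hinj).symm
          _ ≤ (Finset.range (n / 2)).card := Finset.card_le_card himg
          _ = n / 2 := Finset.card_range _
      omega
  · -- odd case
    rw [if_neg hpar]
    have hodd : n % 2 = 1 := Nat.mod_two_eq_zero_or_one n |>.resolve_left hpar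
    set Fp := F.filter (fun x => (p x).val < n - 3) with hFp
    set Ft := F.filter (fun x => ¬ (p x).val < n - 3) with hFt
    have hcards : Fp.card + Ft.card = F.card :=
      Finset.card_filter_add_card_filter_not _
    by_cases hcol : ∃ x ∈ F, ∃ y ∈ F, x ≠ y ∧ (p x).val < n - 3 ∧ (p y).val < n - 3
        ∧ (p x).val / 2 = (p y).val / 2
    · obtain ⟨x, hx, y, hy, hxy, hx3, hy3, hc⟩ := hcol
      have hne := hpdist x hx y hy hxy
      have hxlt := (p x).isLt
      have hylt := (p y).isLt
      have hp1 : partnerF n (p x).val = (p y).val := by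
        unfold partnerF; split_ifs <;> omega
      have hp2 : partnerF n (p y).val = (p x).val := by
        unfold partnerF; split_ifs <;> omega
      obtain ⟨hc1, hc2⟩ := hswap x hx y hy hxy hp1 hp2
      omega
    · by_cases htri : 2 < Ft.card
      · -- three elements in the triple: forced 3-cycle
        have hmemF : ∀ x ∈ Ft, x ∈ F ∧ n - 3 ≤ (p x).val := by
          intro x hx
          simp only [hFt, Finset.mem_filter] at hx
          exact ⟨hx.1, by omega⟩
        obtain ⟨a, b, c, ha, hb, hc, hab, hac, hbc⟩ := Finset.two_lt_card_iff.mp htri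
        have hEx : ∀ v : ℕ, n - 3 ≤ v → v < n →
            (∃ x ∈ Ft, (p x).val = v) ∨ ¬ (∃ x ∈ Ft, (p x).val = v) := fun _ _ _ => em _
        -- extract representatives of each of the three colors
        have hget : ∀ v : ℕ, n - 3 ≤ v → v < n → ∃ x ∈ Ft, (p x).val = v := by
          intro v hv1 hv2
          by_contra hnv
          push_neg at hnv
          have hva := (hmemF a ha).2; have hvb := (hmemF b hb).2; have hvc := (hmemF c hc).2
          have hda := hpdist a (hmemF a ha).1 b (hmemF b hb).1 hab
          have hdb := hpdist a (hmemF a ha).1 c (hmemF c hc).1 hac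
          have hdc := hpdist b (hmemF b hb).1 c (hmemF c hc).1 hbc
          have hna := hnv a ha; have hnb := hnv b hb; have hnc := hnv c hc
          have := (p a).isLt; have := (p b).isLt; have := (p c).isLt
          omega
        obtain ⟨x, hxT, hvx⟩ := hget (n - 3) (le_refl _) (by omega)
        obtain ⟨y, hyT, hvy⟩ := hget (n - 2) (by omega) (by omega)
        obtain ⟨z, hzT, hvz⟩ := hget (n - 1) (by omega) (by omega)
        have hxF := (hmemF x hxT).1; have hyF := (hmemF y hyT).1; have hzF := (hmemF z hzT).1
        have hxy : x ≠ y := fun h => by rw [h] at hvx; omega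
        have hyz : y ≠ z := fun h => by rw [h] at hvy; omega
        have hxz : x ≠ z := fun h => by rw [h] at hvx; omega
        have hsx : σ x = y := hadj x hxF y hyF (by unfold partnerF; split_ifs <;> omega)
        have hsy : σ y = z := hadj y hyF z hzF (by unfold partnerF; split_ifs <;> omega)
        have hsz : σ z = x := hadj z hzF x hxF (by unfold partnerF; split_ifs <;> omega)
        have hsub : ∀ w, σ w ≠ w → w ∈ ({x, y, z} : Set (Fin m)) := by
          apply supp_sub σ hcyc _ x (by simp) (by rw [hsx]; exact hxy ∘ Eq.symm)
          · intro w hw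
            rcases hw with h | h | h
            · subst h; rw [hsx]; right; left; rfl
            · subst h; rw [hsy]; right; right; rfl
            · rw [Set.mem_singleton_iff] at h; subst h; rw [hsz]; left; rfl
          · intro w hw
            rcases hw with h | h | h
            · subst h; rw [Equiv.Perm.inv_eq_iff_eq.mpr hsz.symm]; right; right; rfl
            · subst h; rw [Equiv.Perm.inv_eq_iff_eq.mpr hsx.symm]; left; rfl
            · rw [Set.mem_singleton_iff] at h; subst h
              rw [Equiv.Perm.inv_eq_iff_eq.mpr hsy.symm]; right; left; rfl
        have hs3 : Sf ⊆ {x, y, z} := by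
          intro w hw
          simp only [hSf, Finset.mem_filter] at hw
          have := hsub w hw.2
          simpa using this
        have hc1 : Sf.card ≤ 3 := le_trans (Finset.card_le_card hs3) Finset.card_le_three
        have hc2 : F.card ≤ 3 := le_trans (Finset.card_le_card (fun w hw => hFS w hw)) hc1
        omega
      · -- generic odd case
        push_neg at hcol
        have hinj : Set.InjOn (fun x => (p x).val / 2) (Fp : Set (Fin m)) := by
          intro x hx y hy h
          simp only [hFp, Finset.coe_filter, Set.mem_setOf_eq] at hx hy
          by_contra hne
          exact hcol x hx.1 y hy.1 hne hx.2 hy.2 h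
        have himg : Fp.image (fun x => (p x).val / 2) ⊆ Finset.range ((n - 3) / 2) := by
          intro v hv
          simp only [Finset.mem_image] at hv
          obtain ⟨x, hx, hxv⟩ := hv
          simp only [hFp, Finset.mem_filter] at hx
          simp only [Finset.mem_range]; omega
        have hFpn : Fp.card ≤ (n - 3) / 2 := by
          calc Fp.card = (Fp.image (fun x => (p x).val / 2)).card :=
                (Finset.card_image_of_injOn hinj).symm
            _ ≤ (Finset.range ((n - 3) / 2)).card := Finset.card_le_card himg
            _ = (n - 3) / 2 := Finset.card_range _
        omega

end Cap

section Dyn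
variable {m n : ℕ}

lemma main_dyn (hn : 4 ≤ n) (p p' : Fin m → Fin n)
    (hpp : ∀ x, p' x ≠ p x → (p' x).val = partnerF n (p x).val)
    (L : List (Equiv.Perm (Fin m))) (hL : ∀ σ ∈ L, IsPCycle p σ)
    (hprod : p' = p ∘ ⇑L.prod) :
    4 * (Finset.univ.filter fun x => p' x ≠ p x).card
      ≤ (if n % 2 = 0 then 3 * n else 3 * n + 1) * L.length := by
  classical
  set t := L.length with ht
  set Pp : ℕ → Equiv.Perm (Fin m) := fun j => (L.drop j).prod with hPp
  have hPt : Pp t = 1 := by simp [hPp, ht]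
  set sg : ℕ → Equiv.Perm (Fin m) := fun j => Pp j * (Pp (j+1))⁻¹ with hsg
  have hstep : ∀ j x, Pp j x = sg j (Pp (j+1) x) := by
    intro j x; simp [hsg]
  have hmem : ∀ j, j < t → sg j ∈ L := by
    intro j hj
    have h1 : Pp j = L[j]'(by omega) * Pp (j+1) := by
      simp only [hPp]
      rw [List.drop_eq_getElem_cons (by omega : j < L.length), List.prod_cons]
    have h2 : sg j = L[j]'(by omega) := by
      simp only [hsg]; rw [h1, mul_inv_cancel_right]
    rw [h2]; exact List.getElem_mem _
  set c : Fin m → ℕ :=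
    fun x => ((Finset.range t).filter fun j => Pp j x ≠ Pp (j+1) x).card with hc
  have htraj : ∀ x a b, a ≤ b → (∀ k, a ≤ k → k < b → Pp k x = Pp (k+1) x) →
      Pp a x = Pp b x := by
    intro x a b
    induction b with
    | zero =>
        intro hab _
        obtain rfl : a = 0 := by omega
        rfl
    | succ b ih =>
        intro hab hno
        rcases Nat.eq_or_lt_of_le hab with h | h
        · rw [h]
        · have h1 : Pp a x = Pp b x := ih (by omega) (fun k hk1 hk2 => hno k hk1 (by omega))
          rw [h1]; exact hno b (by omega) (by omega)
  have hprodPp : L.prod = Pp 0 := by simp [hPp]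
  have hmoved : ∀ x, p' x ≠ p x → 1 ≤ c x := by
    intro x hx
    by_contra h
    have hc0 : c x = 0 := by omega
    have hempty : ((Finset.range t).filter fun j => Pp j x ≠ Pp (j+1) x) = ∅ :=
      Finset.card_eq_zero.mp hc0
    have hno : ∀ k, 0 ≤ k → k < t → Pp k x = Pp (k+1) x := by
      intro k _ hk
      by_contra hne
      have hmem2 : k ∈ (Finset.range t).filter fun j => Pp j x ≠ Pp (j+1) x := by
        simp only [Finset.mem_filter, Finset.mem_range]; exact ⟨hk, hne⟩
      rw [hempty] at hmem2; simp at hmem2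
    have hfix : Pp 0 x = x := by rw [htraj x 0 t (by omega) hno, hPt]; rfl
    apply hx
    rw [hprod]; simp only [Function.comp_apply]
    rw [hprodPp, hfix]
  have hlazy : ∀ x j, j < t → c x = 1 → Pp j x ≠ Pp (j+1) x →
      Pp (j+1) x = x ∧ L.prod x = sg j x := by
    intro x j hj hcx hmove
    obtain ⟨j₀, hj₀⟩ := Finset.card_eq_one.mp hcx
    have hjmem : j ∈ ((Finset.range t).filter fun j => Pp j x ≠ Pp (j+1) x) := by
      simp only [Finset.mem_filter, Finset.mem_range]; exact ⟨hj, hmove⟩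
    rw [hj₀] at hjmem
    have hjj : j = j₀ := by simpa using hjmem
    subst hjj
    have honly : ∀ k, k < t → k ≠ j → Pp k x = Pp (k+1) x := by
      intro k hk hkj
      by_contra hne
      have hmem2 : k ∈ ((Finset.range t).filter fun j => Pp j x ≠ Pp (j+1) x) := by
        simp only [Finset.mem_filter, Finset.mem_range]; exact ⟨hk, hne⟩
      rw [hj₀] at hmem2
      exact hkj (by simpa using hmem2)
    have h1 : Pp (j+1) x = x := by
      rw [htraj x (j+1) t (by omega) (fun k hk1 hk2 => honly k hk2 (by omega)), hPt]; rfl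
    refine ⟨h1, ?_⟩
    have h2 : Pp 0 x = Pp j x :=
      htraj x 0 j (by omega) (fun k hk1 hk2 => honly k (by omega) (by omega))
    rw [hprodPp, h2, hstep j x, h1]
  set sc : ℕ → ℕ := fun j => (Finset.univ.filter fun y => sg j y ≠ y).card with hscdef
  have hA : ∑ x : Fin m, c x = ∑ j ∈ Finset.range t, sc j := by
    simp only [hc, Finset.card_filter]
    rw [Finset.sum_comm]
    apply Finset.sum_congr rfl
    intro j _
    have h1 : (∑ x : Fin m, if Pp j x ≠ Pp (j+1) x then 1 else 0)
        = ∑ x : Fin m, (if sg j (Pp (j+1) x) ≠ Pp (j+1) x then 1 else 0) := by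
      apply Finset.sum_congr rfl; intro x _
      congr 1
      rw [eq_iff_iff]
      constructor <;> intro hh <;> [rw [← hstep j x]; rw [hstep j x]] <;> exact hh
    rw [h1]
    simp only [hscdef, Finset.card_filter]
    exact Finset.sum_equiv (Pp (j+1)) (by simp) (fun x _ => rfl)
  set LZ : ℕ → Finset (Fin m) := fun j =>
    Finset.univ.filter fun x => p' x ≠ p x ∧ c x = 1 ∧ Pp j x ≠ Pp (j+1) x with hLZ
  have hB : ∑ j ∈ Finset.range t, (LZ j).card
      = (Finset.univ.filter fun x => p' x ≠ p x ∧ c x = 1).card := by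
    simp only [hLZ, Finset.card_filter]
    rw [Finset.sum_comm]
    apply Finset.sum_congr rfl
    intro x _
    by_cases hx : p' x ≠ p x ∧ c x = 1
    · have hcong : ∀ j, (p' x ≠ p x ∧ c x = 1 ∧ Pp j x ≠ Pp (j+1) x)
          ↔ (Pp j x ≠ Pp (j+1) x) := by
        intro j; constructor
        · rintro ⟨-, -, h⟩; exact h
        · intro h; exact ⟨hx.1, hx.2, h⟩
      calc ∑ j ∈ Finset.range t, (if p' x ≠ p x ∧ c x = 1 ∧ Pp j x ≠ Pp (j+1) x then 1 else 0)
          = ∑ j ∈ Finset.range t, (if Pp j x ≠ Pp (j+1) x then 1 else 0) := by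
            apply Finset.sum_congr rfl; intro j _
            congr 1; rw [eq_iff_iff]; exact hcong j
        _ = c x := by simp only [hc]; rw [Finset.card_filter]
        _ = 1 := hx.2
        _ = if p' x ≠ p x ∧ c x = 1 then 1 else 0 := by rw [if_pos hx]
    · have hz : ∀ j, ¬ (p' x ≠ p x ∧ c x = 1 ∧ Pp j x ≠ Pp (j+1) x) := by
        intro j hcon
        exact hx ⟨hcon.1, hcon.2.1⟩
      simp only [hz, if_false, Finset.sum_const_zero, if_neg hx]
  have hcap : ∀ j ∈ Finset.range t, 2 * sc j + 2 * (LZ j).card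
      ≤ (if n % 2 = 0 then 3 * n else 3 * n + 1) := by
    intro j hjr
    rw [Finset.mem_range] at hjr
    obtain ⟨hbal, hcyc⟩ := hL (sg j) (hmem j hjr)
    apply cap_lemma hn p (sg j) hbal hcyc (LZ j)
    intro x hx
    simp only [hLZ, Finset.mem_filter, Finset.mem_univ, true_and] at hx
    obtain ⟨hmv, hc1x, hmove⟩ := hx
    obtain ⟨hfix, hpix⟩ := hlazy x j hjr hc1x hmove
    have hsgx : sg j x ≠ x := by
      intro hcon
      apply hmove
      rw [hstep j x, hfix, hcon]
    refine ⟨hsgx, ?_, ?_⟩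
    · rw [← hpix]
      have : p (L.prod x) = p' x := by rw [hprod]; rfl
      rw [this]
      exact hpp x hmv
    · intro hcon
      exact hmv (Fin.val_injective ((hpp x hmv).trans hcon))
  calc 4 * (Finset.univ.filter fun x => p' x ≠ p x).card
      = ∑ _x ∈ (Finset.univ.filter fun x => p' x ≠ p x), 4 := by
        rw [Finset.sum_const, smul_eq_mul, mul_comm]
    _ ≤ ∑ x ∈ (Finset.univ.filter fun x => p' x ≠ p x),
          (2 * c x + if p' x ≠ p x ∧ c x = 1 then 2 else 0) := by
        apply Finset.sum_le_sum
        intro x hx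
        rw [Finset.mem_filter] at hx
        have h1 := hmoved x hx.2
        by_cases h2 : c x = 1
        · rw [if_pos ⟨hx.2, h2⟩]; omega
        · rw [if_neg (fun hcon => h2 hcon.2)]; omega
    _ ≤ ∑ x : Fin m, (2 * c x + if p' x ≠ p x ∧ c x = 1 then 2 else 0) := by
        apply Finset.sum_le_sum_of_subset_of_nonneg (Finset.subset_univ _)
        intro x _ _
        exact Nat.zero_le _
    _ = 2 * (∑ x : Fin m, c x)
        + 2 * (Finset.univ.filter fun x => p' x ≠ p x ∧ c x = 1).card := by
        rw [Finset.sum_add_distrib, Finset.mul_sum]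
        congr 1
        rw [Finset.card_filter, Finset.mul_sum]
        apply Finset.sum_congr rfl
        intro x _
        split_ifs <;> simp
    _ = ∑ j ∈ Finset.range t, (2 * sc j + 2 * (LZ j).card) := by
        rw [hA, ← hB, Finset.sum_add_distrib, Finset.mul_sum, Finset.mul_sum]
    _ ≤ ∑ _j ∈ Finset.range t, (if n % 2 = 0 then 3 * n else 3 * n + 1) :=
        Finset.sum_le_sum hcap
    _ = (if n % 2 = 0 then 3 * n else 3 * n + 1) * t := by
        rw [Finset.sum_const, Finset.card_range, smul_eq_mul, mul_comm]

end Dyn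

section Constr
variable {n : ℕ}

def tgt (hn : 4 ≤ n) (κ : Fin n → ℕ) (s : Σ i : Fin n, Fin (κ i)) : Fin n :=
  if s.2.val < thrF κ s.1.val then ⟨partnerF n s.1.val, partner_lt hn s.1.isLt⟩ else s.1

lemma tgt_ne (hn : 4 ≤ n) (κ : Fin n → ℕ) (s : Σ i : Fin n, Fin (κ i)) :
    tgt hn κ s ≠ s.1 ↔ s.2.val < thrF κ s.1.val := by
  unfold tgt
  split_ifs with h
  · constructor
    · intro _; exact h
    · intro _ hcon; exact partner_ne hn s.1.isLt (congrArg Fin.val hcon)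
  · simp [h]

lemma tgt_val_of_ne (hn : 4 ≤ n) (κ : Fin n → ℕ) (s : Σ i : Fin n, Fin (κ i))
    (h : tgt hn κ s ≠ s.1) : (tgt hn κ s).val = partnerF n s.1.val := by
  have h2 := (tgt_ne hn κ s).mp h
  unfold tgt
  rw [if_pos h2]

lemma card_fst (κ : Fin n → ℕ) (i : Fin n) :
    ((Finset.univ : Finset (Σ i : Fin n, Fin (κ i))).filter fun s => s.1 = i).card = κ i := by
  rw [Finset.card_filter, ← Finset.univ_sigma_univ, Finset.sum_sigma]
  have h1 : ∀ i' : Fin n, (∑ a : Fin (κ i'), if ((⟨i', a⟩ : Σ i : Fin n, Fin (κ i))).1 = i then 1 else 0)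
      = if i' = i then κ i' else 0 := by
    intro i'
    by_cases h : i' = i <;> simp [h]
  rw [Finset.sum_congr rfl fun i' _ => h1 i', Finset.sum_ite_eq' Finset.univ i (fun i' => κ i')]
  simp

lemma card_tgt (hn : 4 ≤ n) (κ : Fin n → ℕ) (hmono : Antitone κ) (i : Fin n) :
    ((Finset.univ : Finset (Σ i : Fin n, Fin (κ i))).filter fun s => tgt hn κ s = i).card
      = κ i := by
  rw [Finset.card_filter, ← Finset.univ_sigma_univ, Finset.sum_sigma]
  have h1 : ∀ i' : Fin n, (∑ a : Fin (κ i'), if tgt hn κ ((⟨i', a⟩ : Σ i : Fin n, Fin (κ i))) = i then 1 else 0)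
      = (if partnerF n i'.val = i.val then thrF κ i'.val else 0)
        + (if i'.val = i.val then κ i' - thrF κ i'.val else 0) := by
    intro i'
    have hthr : min (thrF κ i'.val) (κ i') = thrF κ i'.val := by
      have h := thr_le hmono i'.isLt
      rw [kap_val] at h
      omega
    have h2 : ∀ a : Fin (κ i'), (tgt hn κ ((⟨i', a⟩ : Σ i : Fin n, Fin (κ i))) = i)
        ↔ ((if a.val < thrF κ i'.val then partnerF n i'.val else i'.val) = i.val) := by
      intro a
      unfold tgt
      simp only
      split_ifs with h
      · exact ⟨fun hh => congrArg Fin.val hh, fun hh => Fin.val_injective hh⟩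
      · exact ⟨fun hh => congrArg Fin.val hh, fun hh => Fin.val_injective hh⟩
    calc (∑ a : Fin (κ i'), if tgt hn κ ((⟨i', a⟩ : Σ i : Fin n, Fin (κ i))) = i then 1 else 0)
        = ∑ a : Fin (κ i'), (if (if a.val < thrF κ i'.val then partnerF n i'.val else i'.val)
            = i.val then 1 else 0) := by
          apply Finset.sum_congr rfl; intro a _
          congr 1; rw [eq_iff_iff]; exact h2 a
      _ = ((Finset.univ : Finset (Fin (κ i'))).filter fun a =>
            (if a.val < thrF κ i'.val then partnerF n i'.val else i'.val) = i.val).card :=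
          (Finset.card_filter _ _).symm
      _ = _ := by rw [card_filter_ite, hthr]
  rw [Finset.sum_congr rfl fun i' _ => h1 i', Finset.sum_add_distrib]
  have hsecond : (∑ i' : Fin n, if i'.val = i.val then κ i' - thrF κ i'.val else 0)
      = κ i - thrF κ i.val := by
    have hcng : ∀ i' : Fin n, (if i'.val = i.val then κ i' - thrF κ i'.val else 0)
        = (if i' = i then κ i' - thrF κ i'.val else 0) := by
      intro i'; congr 1; rw [eq_iff_iff]
      exact ⟨fun h => Fin.val_injective h, fun h => congrArg Fin.val h⟩
    rw [Finset.sum_congr rfl fun i' _ => hcng i',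
      Finset.sum_ite_eq' Finset.univ i (fun i' => κ i' - thrF κ i'.val)]
    simp
  have hfirst : (∑ i' : Fin n, if partnerF n i'.val = i.val then thrF κ i'.val else 0)
      = thrF κ i.val := by
    have hcng : ∀ i' : Fin n, (if partnerF n i'.val = i.val then thrF κ i'.val else 0)
        = (if i' = (⟨srcF n i.val, src_lt hn i.isLt⟩ : Fin n) then thrF κ i'.val else 0) := by
      intro i'; congr 1; rw [eq_iff_iff]
      rw [src_spec hn i.isLt i'.isLt]
      constructor
      · intro h; exact Fin.val_injective h
      · intro h; exact congrArg Fin.val h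
    rw [Finset.sum_congr rfl fun i' _ => hcng i',
      Finset.sum_ite_eq' Finset.univ (⟨srcF n i.val, src_lt hn i.isLt⟩ : Fin n)
        (fun i' => thrF κ i'.val)]
    simp only [Finset.mem_univ, if_true]
    exact thr_src κ hn i.isLt
  rw [hfirst, hsecond]
  have h := thr_le hmono i.isLt
  rw [kap_val] at h
  omega

lemma card_mv (hn : 4 ≤ n) (κ : Fin n → ℕ) (hmono : Antitone κ) :
    ((Finset.univ : Finset (Σ i : Fin n, Fin (κ i))).filter fun s => tgt hn κ s ≠ s.1).card
      = ∑ iv ∈ Finset.range n, thrF κ iv := by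
  rw [Finset.card_filter, ← Finset.univ_sigma_univ, Finset.sum_sigma]
  have h1 : ∀ i' : Fin n,
      (∑ a : Fin (κ i'), if tgt hn κ ((⟨i', a⟩ : Σ i : Fin n, Fin (κ i))) ≠ ((⟨i', a⟩ : Σ i : Fin n, Fin (κ i))).1 then 1 else 0)
        = thrF κ i'.val := by
    intro i'
    calc (∑ a : Fin (κ i'), if tgt hn κ ((⟨i', a⟩ : Σ i : Fin n, Fin (κ i))) ≠ ((⟨i', a⟩ : Σ i : Fin n, Fin (κ i))).1 then 1 else 0)
        = ∑ a : Fin (κ i'), (if a.val < thrF κ i'.val then 1 else 0) := by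
          apply Finset.sum_congr rfl; intro a _
          congr 1; rw [eq_iff_iff]; exact tgt_ne hn κ ((⟨i', a⟩ : Σ i : Fin n, Fin (κ i)))
      _ = ((Finset.univ : Finset (Fin (κ i'))).filter fun a => a.val < thrF κ i'.val).card :=
          (Finset.card_filter _ _).symm
      _ = min (thrF κ i'.val) (κ i') := card_val_lt _ _
      _ = thrF κ i'.val := by
          have h := thr_le hmono i'.isLt
          rw [kap_val] at h
          omega
  rw [Finset.sum_congr rfl fun i' _ => h1 i']
  exact Fin.sum_univ_eq_sum_range (fun iv => thrF κ iv) n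

lemma sum_pairs (f g : ℕ → ℕ) : ∀ h : ℕ,
    (∀ q, q < h → f (2*q) + f (2*q+1) = 2 * (g (2*q) + g (2*q+1))) →
    ∑ iv ∈ Finset.range (2*h), f iv = 2 * ∑ iv ∈ Finset.range (2*h), g iv := by
  intro h
  induction h with
  | zero => intro _; simp
  | succ h ih =>
      intro hq
      have h2 : Finset.range (2 * (h+1)) = Finset.range ((2*h) + 1 + 1) :=
        congrArg _ (by ring)
      rw [h2, Finset.sum_range_succ, Finset.sum_range_succ, Finset.sum_range_succ,
        Finset.sum_range_succ]
      have hih := ih (fun q hql => hq q (by omega))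
      have hlast := hq h (by omega)
      omega

lemma sum_thr_even (hn : 4 ≤ n) (hpar : n % 2 = 0) (κ : Fin n → ℕ) :
    ∑ iv ∈ Finset.range n, thrF κ iv
      = 2 * ∑ i ∈ Finset.univ.filter (fun i : Fin n => i.val % 2 = 1), κ i := by
  have hrhs : (∑ i ∈ Finset.univ.filter (fun i : Fin n => i.val % 2 = 1), κ i)
      = ∑ iv ∈ Finset.range n, (if iv % 2 = 1 then kap κ iv else 0) := by
    rw [Finset.sum_filter,
      ← Fin.sum_univ_eq_sum_range (fun iv => if iv % 2 = 1 then kap κ iv else 0) n]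
    apply Finset.sum_congr rfl; intro i _
    by_cases h : i.val % 2 = 1 <;> simp [h, kap_val]
  rw [hrhs]
  have hr : Finset.range n = Finset.range (2 * (n / 2)) := congrArg _ (by omega)
  rw [hr]
  apply sum_pairs
  intro q hq
  have e1 : (2*q) % 2 = 0 := by omega
  have e2 : (2*q+1) % 2 = 1 := by omega
  simp only [thrF, hpar, e1, e2]
  norm_num
  try omega

lemma sum_thr_odd (hn : 4 ≤ n) (hpar : n % 2 = 1) (κ : Fin n → ℕ) :
    ∑ iv ∈ Finset.range n, thrF κ iv
      = 2 * (∑ i ∈ Finset.univ.filter (fun i : Fin n => i.val % 2 = 1 ∧ i.val ≤ n - 4), κ i)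
        + 3 * kap κ (n-1) := by
  have hrhs : (∑ i ∈ Finset.univ.filter (fun i : Fin n => i.val % 2 = 1 ∧ i.val ≤ n - 4), κ i)
      = ∑ iv ∈ Finset.range (n-3), (if iv % 2 = 1 then kap κ iv else 0) := by
    calc (∑ i ∈ Finset.univ.filter (fun i : Fin n => i.val % 2 = 1 ∧ i.val ≤ n - 4), κ i)
        = ∑ i : Fin n, (if i.val % 2 = 1 ∧ i.val ≤ n - 4 then κ i else 0) :=
          Finset.sum_filter _ _
      _ = ∑ iv ∈ Finset.range n, (if iv % 2 = 1 ∧ iv ≤ n - 4 then kap κ iv else 0) := by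
          rw [← Fin.sum_univ_eq_sum_range
            (fun iv => if iv % 2 = 1 ∧ iv ≤ n - 4 then kap κ iv else 0) n]
          apply Finset.sum_congr rfl; intro i _
          by_cases h : i.val % 2 = 1 ∧ i.val ≤ n - 4 <;> simp [h, kap_val]
      _ = ∑ iv ∈ Finset.range (n-3), (if iv % 2 = 1 ∧ iv ≤ n - 4 then kap κ iv else 0) := by
          have hr : Finset.range n = Finset.range ((n-3) + 1 + 1 + 1) := congrArg _ (by omega)
          rw [hr, Finset.sum_range_succ, Finset.sum_range_succ, Finset.sum_range_succ]
          rw [if_neg (by omega), if_neg (by omega), if_neg (by omega)]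
          omega
      _ = ∑ iv ∈ Finset.range (n-3), (if iv % 2 = 1 then kap κ iv else 0) := by
          apply Finset.sum_congr rfl; intro iv hiv
          rw [Finset.mem_range] at hiv
          by_cases h : iv % 2 = 1
          · rw [if_pos h, if_pos ⟨h, by omega⟩]
          · rw [if_neg h, if_neg (fun hc => h hc.1)]
  rw [hrhs]
  have hr : Finset.range n = Finset.range ((n-3) + 1 + 1 + 1) := congrArg _ (by omega)
  rw [hr, Finset.sum_range_succ, Finset.sum_range_succ, Finset.sum_range_succ]
  have hv1 : thrF κ (n-3) = kap κ (n-1) := by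
    have hc : ¬ (n - 3 < n - 3) := by omega
    simp [thrF, hpar, hc]
  have hv2 : thrF κ (n-3+1) = kap κ (n-1) := by
    have hc : ¬ (n - 3 + 1 < n - 3) := by omega
    simp [thrF, hpar, hc]
  have hv3 : thrF κ (n-3+1+1) = kap κ (n-1) := by
    have hc : ¬ (n - 3 + 1 + 1 < n - 3) := by omega
    simp [thrF, hpar, hc]
  rw [hv1, hv2, hv3]
  have hpairs : ∑ iv ∈ Finset.range (n-3), thrF κ iv
      = 2 * ∑ iv ∈ Finset.range (n-3), (if iv % 2 = 1 then kap κ iv else 0) := by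
    have hr2 : Finset.range (n-3) = Finset.range (2 * ((n-3) / 2)) := congrArg _ (by omega)
    rw [hr2]
    apply sum_pairs
    intro q hq
    have e0 : ¬ (n % 2 = 0) := by omega
    have e1 : (2*q) % 2 = 0 := by omega
    have e2 : (2*q+1) % 2 = 1 := by omega
    have e3 : 2*q < n - 3 := by omega
    have e4 : 2*q+1 < n - 3 := by omega
    simp only [thrF, if_neg e0, if_pos e3, if_pos e4, e1, e2]
    norm_num
    try omega
  omega

end Constr
end PPD

/-- Lower bound on diameters of partition polytopes: for `n ≥ 4` and a
nonincreasing shape `κ` summing to `m`, there are two partitions of shape `κ`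
such that any `p`-cycle decomposition between them has length at least
`⌈8(κ₂+κ₄+⋯+κₙ)/(3n)⌉` (`n` even), resp.
`⌈(8(κ₂+κ₄+⋯+κ_{n-3}) + 12κₙ)/(3n+1)⌉` (`n` odd).
(Indices are 1-based in the informal statement; here `κ ⟨j-1,_⟩ = κⱼ`.) -/
theorem partition_polytope_diameter_lower_bound
    (m n : ℕ) (hn : 4 ≤ n) (κ : Fin n → ℕ) (hmono : Antitone κ)
    (hsum : ∑ i, κ i = m) :
    ∃ p p' : Fin m → Fin n,
      (∀ i, fiberCard p i = κ i) ∧ (∀ i, fiberCard p' i = κ i) ∧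
      ∀ L : List (Equiv.Perm (Fin m)),
        (∀ σ ∈ L, IsPCycle p σ) → p' = p ∘ ⇑L.prod →
        (if n % 2 = 0 then
          (8 * (∑ i ∈ Finset.univ.filter (fun i : Fin n => i.val % 2 = 1), κ i)
              + (3 * n - 1)) / (3 * n)
        else
          (8 * (∑ i ∈ Finset.univ.filter
                  (fun i : Fin n => i.val % 2 = 1 ∧ i.val ≤ n - 4), κ i)
              + 12 * κ ⟨n - 1, by omega⟩ + 3 * n) / (3 * n + 1))
        ≤ L.length := by
  classical
  have hm : Fintype.card (Σ i : Fin n, Fin (κ i)) = m := by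
    rw [Fintype.card_sigma]; simpa using hsum
  set e := Fintype.equivFinOfCardEq hm with he
  refine ⟨fun x => (e.symm x).1, fun x => PPD.tgt hn κ (e.symm x), ?_, ?_, ?_⟩
  · intro i
    unfold fiberCard
    rw [PPD.card_filter_equiv e.symm (fun s => s.1 = i)]
    exact PPD.card_fst κ i
  · intro i
    unfold fiberCard
    rw [PPD.card_filter_equiv e.symm (fun s => PPD.tgt hn κ s = i)]
    exact PPD.card_tgt hn κ hmono i
  · intro L hL hprod
    have hpp : ∀ x : Fin m, PPD.tgt hn κ (e.symm x) ≠ (e.symm x).1 →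
        (PPD.tgt hn κ (e.symm x)).val = PPD.partnerF n ((e.symm x).1).val :=
      fun x hx => PPD.tgt_val_of_ne hn κ _ hx
    have hdyn := PPD.main_dyn hn (fun x => (e.symm x).1) (fun x => PPD.tgt hn κ (e.symm x))
      hpp L hL hprod
    have hM : (Finset.univ.filter fun x =>
        PPD.tgt hn κ (e.symm x) ≠ (e.symm x).1).card
        = ∑ iv ∈ Finset.range n, PPD.thrF κ iv := by
      rw [PPD.card_filter_equiv e.symm (fun s => PPD.tgt hn κ s ≠ s.1)]
      exact PPD.card_mv hn κ hmono
    rw [hM] at hdyn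
    obtain ⟨T, hT⟩ : ∃ T, T = (if n % 2 = 0 then 3 * n else 3 * n + 1) * L.length := ⟨_, rfl⟩
    rw [← hT] at hdyn
    by_cases hpar : n % 2 = 0
    · rw [if_pos hpar] at hT ⊢
      rw [PPD.sum_thr_even hn hpar κ] at hdyn
      refine Nat.lt_succ_iff.mp ?_
      have hden : 0 < 3 * n := by omega
      rw [Nat.div_lt_iff_lt_mul hden]
      have h2 : (L.length + 1) * (3 * n) = T + 3 * n := by rw [hT]; ring
      rw [Nat.succ_eq_add_one, h2]
      omega
    · rw [if_neg hpar] at hT ⊢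
      rw [PPD.sum_thr_odd hn (by omega) κ] at hdyn
      have hkap : PPD.kap κ (n - 1) = κ ⟨n - 1, by omega⟩ := by
        unfold PPD.kap
        rw [dif_pos (by omega : n - 1 < n)]
      rw [hkap] at hdyn
      refine Nat.lt_succ_iff.mp ?_
      have hden : 0 < 3 * n + 1 := by omega
      rw [Nat.div_lt_iff_lt_mul hden]
      have h2 : (L.length + 1) * (3 * n + 1) = T + (3 * n + 1) := by rw [hT]; ring
      rw [Nat.succ_eq_add_one, h2]
      omega
end

section
/- Let G be a simple graph on a finite vertex type α in which every vertex has even degree and whose maximum degree equals 4, and let {F₁, F₂, F₃} be a linear forest odd-cover of G, where each F_i has no isolated vertices. For distinct i, j ∈ {1,2,3}, let R_{ij} := end(F_i) ∩ end(F_j) and r_{ij} := |R_{ij}|, where end(F) is the set of vertices of degree 1 in F. For distinct i, j, k ∈ {1,2,3}, let t_i be the number of connected components of F_i having one degree-1 vertex in R_{ij} and the other degree-1 vertex in R_{ik}. Then r₁₂ ≡ r₁₃ ≡ r₂₃ ≡ t₁ ≡ t₂ ≡ t₃ (mod 2). -/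
/-- The set of endpoints (degree-1 vertices) of a linear forest. -/
noncomputable def endSet {α : Type*} (F : SimpleGraph α) : Set α :=
  {v | degS F v = 1}

/-- The number of connected components of `F` having one degree-1 vertex in
`end(F) ∩ end(Fj)` and another in `end(F) ∩ end(Fk)`. -/
noncomputable def tcount {α : Type*} (F Fj Fk : SimpleGraph α) : ℕ :=
  {c : F.ConnectedComponent | ∃ a b, a ≠ b ∧ a ∈ c.supp ∧ b ∈ c.supp ∧
    a ∈ endSet F ∩ endSet Fj ∧ b ∈ endSet F ∩ endSet Fk}.ncard

open Finset SimpleGraph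

theorem Set.ncard_symmDiff_add_two_mul_ncard_inter {α : Type*} (s t : Set α)
    (hs : s.Finite := by toFinite_tac) (ht : t.Finite := by toFinite_tac) :
    (symmDiff s t).ncard + 2 * (s ∩ t).ncard = s.ncard + t.ncard := by
  have hsub : s ∩ t ⊆ s ∪ t := Set.inter_subset_left.trans Set.subset_union_left
  have := Set.ncard_sdiff_add_ncard_of_subset hsub (hs.union ht)
  rw [symmDiff_eq_sup_sdiff_inf, ← ncard_union_add_ncard_inter s t hs ht]
  simp only [Set.sup_eq_union, Set.inf_eq_inter] at this ⊢
  omega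

theorem degS_eq_degree {α : Type*} [Fintype α] (G : SimpleGraph α) [DecidableRel G.Adj] (v : α) :
    degS G v = G.degree v := by
  rw [degS, ← card_neighborSet_eq_degree, Set.ncard_eq_toFinset_card', Set.toFinset_card]

theorem degS_symmDiff_mod_two {α : Type*} [Finite α] (A B : SimpleGraph α) (v : α) :
    degS (symmDiff A B) v % 2 = (degS A v + degS B v) % 2 := by
  have hnbr : (symmDiff A B).neighborSet v = symmDiff (A.neighborSet v) (B.neighborSet v) := by
    ext w
    simp [symmDiff_def]
  have := Set.ncard_symmDiff_add_two_mul_ncard_inter (A.neighborSet v) (B.neighborSet v)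
  rw [degS, degS, degS, hnbr]
  omega

theorem SimpleGraph.IsTree.ncard_endSet_eq_zero_or_two {V : Type*} [Fintype V]
    {H : SimpleGraph V} (hH : H.IsTree) (hdeg : ∀ v, degS H v ≤ 2) :
    (endSet H).ncard = 0 ∨ (endSet H).ncard = 2 := by
  classical
  have hdeg' (v : V) : H.degree v ≤ 2 := degS_eq_degree H v ▸ hdeg v
  have hend : endSet H = ↑({v | Odd (H.degree v)} : Finset V) := by
    ext v
    have := hdeg' v
    simp only [endSet, degS_eq_degree, coe_filter, Nat.odd_iff, mem_univ, true_and,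
      Set.mem_ofPred_eq]
    exact ⟨fun h => by omega, fun h => by omega⟩
  have heven := H.even_card_odd_degree_vertices
  -- `deg v + [deg v odd] ≤ 2` everywhere, while `∑ deg = 2 (#V - 1)`: at most two odd vertices.
  have hsum : ∑ v, (H.degree v + if Odd (H.degree v) then 1 else 0) ≤ ∑ _v : V, 2 :=
    sum_le_sum fun v _ => by
      have := hdeg' v
      split_ifs <;> grind
  rw [sum_add_distrib, sum_boole, sum_degrees_eq_twice_card_edges, sum_const, card_univ,
    ← hH.card_edgeFinset] at hsum
  rw [hend, Set.ncard_coe_finset]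
  simp only [smul_eq_mul, Nat.cast_id] at hsum
  obtain ⟨k, hk⟩ := heven
  omega

namespace SimpleGraph.ConnectedComponent

variable {α : Type*} {F : SimpleGraph α}

theorem degS_toSimpleGraph (c : F.ConnectedComponent) (v : c) :
    degS c.toSimpleGraph v = degS F v := by
  have hnbr : F.neighborSet v = Subtype.val '' c.toSimpleGraph.neighborSet v := by
    ext w
    refine ⟨fun hw => ⟨⟨w, c.mem_supp_of_adj_mem_supp v.2 hw⟩, hw, rfl⟩, ?_⟩
    rintro ⟨w, hw, rfl⟩
    exact hw
  rw [degS, degS, hnbr, Set.ncard_image_of_injective _ Subtype.val_injective]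

theorem endSet_inter_supp (c : F.ConnectedComponent) :
    endSet F ∩ c.supp = Subtype.val '' endSet c.toSimpleGraph := by
  ext v
  constructor
  · rintro ⟨hv, hc⟩
    exact ⟨⟨v, hc⟩, (degS_toSimpleGraph c ⟨v, hc⟩).trans hv, rfl⟩
  · rintro ⟨w, hw, rfl⟩
    exact ⟨(degS_toSimpleGraph c w).symm.trans hw, w.2⟩

theorem ncard_endSet_inter_supp_eq_zero_or_two [Fintype α] (hF : IsLinearForest F)
    (c : F.ConnectedComponent) :
    (endSet F ∩ c.supp).ncard = 0 ∨ (endSet F ∩ c.supp).ncard = 2 := by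
  classical
  rw [endSet_inter_supp, Set.ncard_image_of_injective _ Subtype.val_injective]
  exact (hF.1.isTree_connectedComponent c).ncard_endSet_eq_zero_or_two
    fun v => (degS_toSimpleGraph c v).trans_le (hF.2 v)

end SimpleGraph.ConnectedComponent

namespace SimpleGraph

variable {α : Type*} {F : SimpleGraph α} {P Q : Set α}

def crossComponents (F : SimpleGraph α) (P Q : Set α) : Set F.ConnectedComponent :=
  {c | ∃ a b, a ≠ b ∧ a ∈ c.supp ∧ b ∈ c.supp ∧ a ∈ P ∧ b ∈ Q}

theorem crossComponents_comm (F : SimpleGraph α) (P Q : Set α) :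
    F.crossComponents P Q = F.crossComponents Q P := by
  ext c
  constructor <;> rintro ⟨a, b, hab, ha, hb, haP, hbQ⟩ <;> exact ⟨b, a, hab.symm, hb, ha, hbQ, haP⟩

theorem ncard_eq_sum_ncard_inter_supp [Fintype α] [Fintype F.ConnectedComponent] (P : Set α) :
    P.ncard = ∑ c : F.ConnectedComponent, (P ∩ c.supp).ncard := by
  classical
  simp only [Set.ncard_eq_toFinset_card']
  rw [card_eq_sum_card_fiberwise (f := F.connectedComponentMk) (t := univ) fun _ _ => mem_univ _]
  refine sum_congr rfl fun c _ => congrArg card ?_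
  ext v
  simp [ConnectedComponent.mem_supp_iff]

theorem odd_ncard_inter_supp_iff [Fintype α] (hF : IsLinearForest F) (hPQ : Disjoint P Q)
    (hunion : P ∪ Q = endSet F) (c : F.ConnectedComponent) :
    Odd (P ∩ c.supp).ncard ↔ c ∈ F.crossComponents P Q := by
  have hsplit : (P ∩ c.supp).ncard + (Q ∩ c.supp).ncard = (endSet F ∩ c.supp).ncard := by
    rw [← Set.ncard_union_eq (hPQ.mono Set.inter_subset_left Set.inter_subset_left),
      ← Set.union_inter_distrib_right, hunion]
  have hend := c.ncard_endSet_inter_supp_eq_zero_or_two hF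
  rw [Nat.odd_iff]
  constructor
  · intro hodd
    obtain ⟨a, haP, ha⟩ := (Set.ncard_pos (s := P ∩ c.supp)).1 (by omega)
    obtain ⟨b, hbQ, hb⟩ := (Set.ncard_pos (s := Q ∩ c.supp)).1 (by omega)
    exact ⟨a, b, hPQ.ne_of_mem haP hbQ, ha, hb, haP, hbQ⟩
  · rintro ⟨a, b, -, ha, hb, haP, hbQ⟩
    have := (Set.ncard_pos (s := P ∩ c.supp)).2 ⟨a, haP, ha⟩
    have := (Set.ncard_pos (s := Q ∩ c.supp)).2 ⟨b, hbQ, hb⟩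
    omega

theorem even_ncard_iff_even_ncard_crossComponents [Fintype α] (hF : IsLinearForest F)
    (hPQ : Disjoint P Q) (hunion : P ∪ Q = endSet F) :
    Even P.ncard ↔ Even (F.crossComponents P Q).ncard := by
  classical
  rw [ncard_eq_sum_ncard_inter_supp (F := F), even_sum_iff_even_card_odd,
    ← Set.ncard_coe_finset]
  simp only [odd_ncard_inter_supp_iff hF hPQ hunion, coe_filter_univ]
  rfl

end SimpleGraph

section OddCover

variable {α : Type*} {F A B : SimpleGraph α}

theorem endSet_inter_union_endSet_inter (hA : ∀ v, degS A v ≤ 2) (hB : ∀ v, degS B v ≤ 2)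
    (hd : ∀ v, (degS F v + degS A v + degS B v) % 2 = 0) :
    endSet F ∩ endSet A ∪ endSet F ∩ endSet B = endSet F := by
  ext v
  have := hd v; have := hA v; have := hB v
  simp only [endSet, Set.mem_union, Set.mem_inter_iff, Set.mem_ofPred_eq]
  omega

theorem disjoint_endSet_inter_endSet_inter
    (hd : ∀ v, (degS F v + degS A v + degS B v) % 2 = 0) :
    Disjoint (endSet F ∩ endSet A) (endSet F ∩ endSet B) := by
  refine Set.disjoint_left.2 fun v ⟨hF, hA⟩ ⟨_, hB⟩ => ?_
  have := hd v
  simp only [endSet, Set.mem_ofPred_eq] at hF hA hB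
  omega

theorem ncard_endSet_inter_mod_two_eq_tcount [Fintype α] (hF : IsLinearForest F)
    (hA : ∀ v, degS A v ≤ 2) (hB : ∀ v, degS B v ≤ 2)
    (hd : ∀ v, (degS F v + degS A v + degS B v) % 2 = 0) :
    (endSet F ∩ endSet A).ncard % 2 = tcount F A B % 2 ∧
      (endSet F ∩ endSet B).ncard % 2 = tcount F A B % 2 := by
  have hunion := endSet_inter_union_endSet_inter hA hB hd
  have hdisj := disjoint_endSet_inter_endSet_inter (A := A) (B := B) hd
  have hPA := F.even_ncard_iff_even_ncard_crossComponents hF hdisj hunion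
  have hPB := F.even_ncard_iff_even_ncard_crossComponents hF hdisj.symm
    ((Set.union_comm _ _).trans hunion)
  rw [F.crossComponents_comm] at hPB
  change _ ↔ Even (tcount F A B) at hPA hPB
  simp only [Nat.even_iff] at hPA hPB
  omega

end OddCover

theorem linear_forest_oddCover_parity_general
    {α : Type*} [Fintype α] (G F₁ F₂ F₃ : SimpleGraph α)
    (hEuler : ∀ v, Even (degS G v))
    (h₁ : IsLinearForest F₁) (h₂ : IsLinearForest F₂) (h₃ : IsLinearForest F₃)
    (hcov : symmDiff F₁ (symmDiff F₂ F₃) = G) :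
    (endSet F₁ ∩ endSet F₂).ncard % 2 = (endSet F₁ ∩ endSet F₃).ncard % 2 ∧
    (endSet F₁ ∩ endSet F₃).ncard % 2 = (endSet F₂ ∩ endSet F₃).ncard % 2 ∧
    (endSet F₂ ∩ endSet F₃).ncard % 2 = tcount F₁ F₂ F₃ % 2 ∧
    tcount F₁ F₂ F₃ % 2 = tcount F₂ F₁ F₃ % 2 ∧
    tcount F₂ F₁ F₃ % 2 = tcount F₃ F₁ F₂ % 2 := by
  have hd (v : α) : (degS F₁ v + degS F₂ v + degS F₃ v) % 2 = 0 := by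
    have h₁₂₃ := degS_symmDiff_mod_two F₁ (symmDiff F₂ F₃) v
    have h₂₃ := degS_symmDiff_mod_two F₂ F₃ v
    have hG := Nat.even_iff.1 (hEuler v)
    rw [hcov] at h₁₂₃
    omega
  obtain ⟨h₁₂, h₁₃⟩ := ncard_endSet_inter_mod_two_eq_tcount h₁ h₂.2 h₃.2 hd
  obtain ⟨h₂₁, h₂₃⟩ := ncard_endSet_inter_mod_two_eq_tcount (B := F₃) h₂ h₁.2 h₃.2
    fun v => by have := hd v; omega
  obtain ⟨h₃₁, h₃₂⟩ := ncard_endSet_inter_mod_two_eq_tcount h₃ h₁.2 h₂.2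
    fun v => by have := hd v; omega
  rw [Set.inter_comm] at h₂₁ h₃₁ h₃₂
  omega

/-- Parity control for linear forest odd-covers of an Eulerian graph of maximum
degree 4: all the quantities `r₁₂, r₁₃, r₂₃, t₁, t₂, t₃` have the same parity. -/
theorem linear_forest_oddCover_parity
    {α : Type*} [Fintype α] (G F₁ F₂ F₃ : SimpleGraph α)
    (hEuler : ∀ v, Even (degS G v))
    (hle : ∀ v, degS G v ≤ 4) (hmax : ∃ v, degS G v = 4)
    (h₁ : IsLinearForest F₁) (h₂ : IsLinearForest F₂) (h₃ : IsLinearForest F₃)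
    (hcov : symmDiff F₁ (symmDiff F₂ F₃) = G) :
    (endSet F₁ ∩ endSet F₂).ncard % 2 = (endSet F₁ ∩ endSet F₃).ncard % 2 ∧
    (endSet F₁ ∩ endSet F₃).ncard % 2 = (endSet F₂ ∩ endSet F₃).ncard % 2 ∧
    (endSet F₂ ∩ endSet F₃).ncard % 2 = tcount F₁ F₂ F₃ % 2 ∧
    tcount F₁ F₂ F₃ % 2 = tcount F₂ F₁ F₃ % 2 ∧
    tcount F₂ F₁ F₃ % 2 = tcount F₃ F₁ F₂ % 2 :=
  linear_forest_oddCover_parity_general G F₁ F₂ F₃ hEuler h₁ h₂ h₃ hcov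
end

section
/- Let α be a finite type, let C be a cycle in the complete graph on α, let x and z be distinct elements of α with x a vertex of C, and let V ⊆ α be a set of vertices with x ∈ V and z ∉ V. Then C is flexible with respect to V, or C is flexible with respect to (V ∪ {z}) \ {x}. -/
/-- A cycle `C` is flexible with respect to `V` if some edge of `C` meets `V` in
an even number of endpoints and some edge of `C` meets `V` in an odd number of
endpoints. -/
def Flexible {α : Type*} (C : SimpleGraph α) (V : Set α) : Prop :=
  (∃ u v, C.Adj u v ∧ (u ∈ V ↔ v ∈ V)) ∧
  (∃ u v, C.Adj u v ∧ ¬(u ∈ V ↔ v ∈ V))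

lemma deg_pos_of_adj' {α : Type*} [Fintype α] {G : SimpleGraph α} {u v : α}
    (h : G.Adj u v) : 0 < degS G u :=
  (Set.ncard_pos (Set.toFinite _)).2 ⟨v, h⟩

lemma exists_other_neighbor' {α : Type*} [Fintype α] {G : SimpleGraph α} {u v : α}
    (hdeg : degS G u = 2) (h : G.Adj u v) : ∃ m, G.Adj u m ∧ m ≠ v := by
  have hv : v ∈ G.neighborSet u := h
  have h1 : ((G.neighborSet u) \ {v}).ncard = degS G u - 1 :=
    Set.ncard_diff_singleton_of_mem hv
  have hpos : 0 < ((G.neighborSet u) \ {v}).ncard := by rw [h1, hdeg]; omega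
  obtain ⟨m, hm⟩ := (Set.ncard_pos (Set.toFinite _)).1 hpos
  exact ⟨m, hm.1, hm.2⟩

lemma walk_mem' {α : Type*} {G : SimpleGraph α} {V : Set α}
    (heven : ∀ u v, G.Adj u v → (u ∈ V ↔ v ∈ V)) {a b : α}
    (p : G.Walk a b) (ha : a ∈ V) : b ∈ V := by
  induction p with
  | nil => exact ha
  | cons h p ih => exact ih ((heven _ _ h).1 ha)

/-- Exchanging one vertex of `V` makes a cycle flexible: if `x ∈ V ∩ V(C)` and
`z ∉ V`, `z ≠ x`, then `C` is flexible with respect to `V` or to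
`(V ∪ {z}) \ {x}`. -/
theorem cycle_flexible_of_exchange
    {α : Type*} [Fintype α] (C : SimpleGraph α) (hC : IsCycleGraph C)
    (x z : α) (hxz : x ≠ z) (hx : 0 < degS C x)
    (V : Set α) (hxV : x ∈ V) (hzV : z ∉ V) :
    Flexible C V ∨ Flexible C ((V ∪ {z}) \ {x}) := by
  set V' : Set α := (V ∪ {z}) \ {x} with hV'
  have hmemV' : ∀ u, u ∈ V' ↔ (u ∈ V ∨ u = z) ∧ u ≠ x := by
    intro u
    rw [hV', Set.mem_diff, Set.mem_union, Set.mem_singleton_iff, Set.mem_singleton_iff]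
  have hxV' : x ∉ V' := fun h => ((hmemV' x).1 h).2 rfl
  have hzV' : z ∈ V' := (hmemV' z).2 ⟨Or.inr rfl, Ne.symm hxz⟩
  have mem_of : ∀ u, u ∈ V → u ≠ x → u ∈ V' := fun u h hne => (hmemV' u).2 ⟨Or.inl h, hne⟩
  have notmem_of : ∀ u, u ∉ V → u ≠ z → u ∉ V' := by
    intro u h hne h'
    rcases ((hmemV' u).1 h').1 with h1 | h1
    · exact h h1
    · exact hne h1
  have hdegx : degS C x = 2 := by
    rcases hC.2.1 x with h | h
    · omega
    · exact h
  obtain ⟨n1, hn1⟩ : ∃ n, C.Adj x n := by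
    by_contra hne
    push_neg at hne
    have : (C.neighborSet x) = ∅ := by
      ext w; simp only [SimpleGraph.mem_neighborSet, Set.mem_empty_iff_false, iff_false]
      exact hne w
    rw [degS, this, Set.ncard_empty] at hdegx
    omega
  obtain ⟨n2, hn2, hn12⟩ := exists_other_neighbor' hdegx hn1
  by_cases hF : Flexible C V
  · exact Or.inl hF
  right
  rw [Flexible, not_and_or] at hF
  rcases hF with hodd | heven
  · -- every edge of C is odd w.r.t. V
    have hodd' : ∀ u v, C.Adj u v → ¬(u ∈ V ↔ v ∈ V) := fun u v h hiff => hodd ⟨u, v, h, hiff⟩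
    have hn1V : n1 ∉ V := fun h => hodd' x n1 hn1 ⟨fun _ => h, fun _ => hxV⟩
    have hn2V : n2 ∉ V := fun h => hodd' x n2 hn2 ⟨fun _ => h, fun _ => hxV⟩
    by_cases hz1 : n1 = z
    · have hz2 : n2 ≠ z := fun h => hn12 (h.trans hz1.symm)
      exact ⟨⟨x, n2, hn2, iff_of_false hxV' (notmem_of n2 hn2V hz2)⟩,
             ⟨x, n1, hn1, fun hiff => hxV' (hiff.2 (hz1 ▸ hzV'))⟩⟩
    · by_cases hz2 : n2 = z
      · exact ⟨⟨x, n1, hn1, iff_of_false hxV' (notmem_of n1 hn1V hz1)⟩,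
               ⟨x, n2, hn2, fun hiff => hxV' (hiff.2 (hz2 ▸ hzV'))⟩⟩
      · have hdegn1 : degS C n1 = 2 := by
          rcases hC.2.1 n1 with h | h
          · have := deg_pos_of_adj' hn1.symm; omega
          · exact h
        obtain ⟨m, hm, hmx⟩ := exists_other_neighbor' hdegn1 hn1.symm
        have hmV : m ∈ V := by
          by_contra hmV
          exact hodd' n1 m hm ⟨fun h => absurd h hn1V, fun h => absurd h hmV⟩
        exact ⟨⟨x, n1, hn1, iff_of_false hxV' (notmem_of n1 hn1V hz1)⟩,
               ⟨n1, m, hm, fun hiff =>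
                 (notmem_of n1 hn1V hz1) (hiff.2 (mem_of m hmV hmx))⟩⟩
  · -- every edge of C is even w.r.t. V
    have heven' : ∀ u v, C.Adj u v → (u ∈ V ↔ v ∈ V) := by
      intro u v h
      by_contra hne
      exact heven ⟨u, v, h, hne⟩
    have hinV : ∀ u, 0 < degS C u → u ∈ V := by
      intro u hu
      obtain ⟨p⟩ := hC.2.2 x u hx hu
      exact walk_mem' heven' p hxV
    have hzadj : ∀ u, ¬ C.Adj u z := by
      intro u hadj
      exact hzV (hinV z (deg_pos_of_adj' hadj.symm))
    have hdegn1 : degS C n1 = 2 := by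
      rcases hC.2.1 n1 with h | h
      · have := deg_pos_of_adj' hn1.symm; omega
      · exact h
    obtain ⟨m, hm, hmx⟩ := exists_other_neighbor' hdegn1 hn1.symm
    have hn1V : n1 ∈ V := (heven' x n1 hn1).1 hxV
    have hmV : m ∈ V := (heven' n1 m hm).1 hn1V
    have hn1x : n1 ≠ x := fun h => C.irrefl (h ▸ hn1)
    exact ⟨⟨n1, m, hm, iff_of_true (mem_of n1 hn1V hn1x) (mem_of m hmV hmx)⟩,
           ⟨x, n1, hn1, fun hiff => hxV' (hiff.2 (mem_of n1 hn1V hn1x))⟩⟩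
end

section
/- Let H₁ and H₂ be polycycles on a finite vertex type such that some vertex is incident to an edge of H₁ and to an edge of H₂ (i.e., V(H₁) ∩ V(H₂) ≠ ∅). Then there exists a transversal pair (M₁, M₂) of matchings for (H₁, H₂) — each M_i consisting of exactly one edge from each connected component of H_i — such that |V(M₁) ∩ V(M₂)| is odd, where V(M) denotes the set of vertices incident to an edge of M. -/
/-- A matching: every vertex has degree at most 1. -/
def IsMatchingG {α : Type*} (M : SimpleGraph α) : Prop := ∀ v, degS M v ≤ 1

/-- `M` is transversal to `H`: `M ⊆ H` and `M` contains exactly one edge from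
each connected component of `H` (containing an edge). -/
def Transversal {α : Type*} (M H : SimpleGraph α) : Prop :=
  M ≤ H ∧ ∀ u v, H.Adj u v →
    ∃! e : Sym2 α, e ∈ M.edgeSet ∧ ∃ w, w ∈ e ∧ H.Reachable u w

section Helpers

open SimpleGraph

variable {α : Type*}

lemma degS_pos_iff [Fintype α] (G : SimpleGraph α) (v : α) :
    0 < degS G v ↔ (G.neighborSet v).Nonempty := by
  rw [degS, Set.ncard_pos (Set.toFinite _)]

lemma degS_pos_of_adj [Fintype α] {G : SimpleGraph α} {v w : α} (h : G.Adj v w) :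
    0 < degS G v := (degS_pos_iff G v).2 ⟨w, h⟩

lemma degS_pos_of_reachable [Fintype α] {G : SimpleGraph α} {u w : α}
    (h : G.Reachable u w) (hu : 0 < degS G u) : 0 < degS G w := by
  obtain ⟨p⟩ := h.symm
  cases p with
  | nil => exact hu
  | cons h q => exact degS_pos_of_adj h

/-- a default neighbor -/
noncomputable def nbr (G : SimpleGraph α) (w : α) : α :=
  @Classical.epsilon α ⟨w⟩ (G.Adj w)

lemma nbr_adj [Fintype α] {G : SimpleGraph α} {w : α} (hw : 0 < degS G w) :
    G.Adj w (nbr G w) := by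
  have h := (degS_pos_iff G w).1 hw
  exact Classical.epsilon_spec_aux ⟨w⟩ _ (⟨h.choose, h.choose_spec⟩ : ∃ z, G.Adj w z)

/-- a representative of the connected component -/
noncomputable def repc (G : SimpleGraph α) (u : α) : α := (G.connectedComponentMk u).out

lemma repc_reachable (G : SimpleGraph α) (u : α) : G.Reachable (repc G u) u := by
  rw [← SimpleGraph.ConnectedComponent.eq]
  exact (G.connectedComponentMk u).out_eq

lemma repc_eq_of_reachable {G : SimpleGraph α} {u u' : α} (h : G.Reachable u u') :
    repc G u = repc G u' := by
  unfold repc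
  rw [SimpleGraph.ConnectedComponent.sound h]

/-- the default chosen edge in the component of `u` -/
noncomputable def pk (G : SimpleGraph α) (u : α) : Sym2 α :=
  s(repc G u, nbr G (repc G u))

lemma repc_degS_pos [Fintype α] {G : SimpleGraph α} {u : α} (hu : 0 < degS G u) :
    0 < degS G (repc G u) :=
  degS_pos_of_reachable (repc_reachable G u).symm hu

lemma pk_mem_edgeSet [Fintype α] {G : SimpleGraph α} {u : α} (hu : 0 < degS G u) :
    pk G u ∈ G.edgeSet := (nbr_adj (repc_degS_pos hu))

lemma pk_reach [Fintype α] {G : SimpleGraph α} {u : α} (hu : 0 < degS G u)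
    {w : α} (hw : w ∈ pk G u) : G.Reachable u w := by
  rw [pk, Sym2.mem_iff] at hw
  rcases hw with rfl | rfl
  · exact (repc_reachable G u).symm
  · exact (repc_reachable G u).symm.trans (nbr_adj (repc_degS_pos hu)).reachable

lemma pk_eq_of_reachable {G : SimpleGraph α} {u u' : α} (h : G.Reachable u u') :
    pk G u = pk G u' := by
  rw [pk, pk, repc_eq_of_reachable h]

/-- The transversal matching built from an edge-choice function `g`. -/
noncomputable def Mof [Fintype α] (G : SimpleGraph α) (g : α → Sym2 α) : SimpleGraph α :=
  SimpleGraph.fromEdgeSet {e | ∃ u, 0 < degS G u ∧ e = g u}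

lemma Mof_props [Fintype α] (G : SimpleGraph α) (g : α → Sym2 α)
    (h1 : ∀ u, 0 < degS G u → g u ∈ G.edgeSet)
    (h2 : ∀ u, 0 < degS G u → ∀ w ∈ g u, G.Reachable u w)
    (h3 : ∀ ⦃u u'⦄, 0 < degS G u → G.Reachable u u' → g u = g u') :
    IsMatchingG (Mof G g) ∧ Transversal (Mof G g) G ∧
      {w | 0 < degS (Mof G g) w} = {w | ∃ u, 0 < degS G u ∧ w ∈ g u} := by
  have hadj : ∀ {a b : α}, (Mof G g).Adj a b ↔ (∃ u, 0 < degS G u ∧ s(a, b) = g u) ∧ a ≠ b := by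
    intro a b; exact SimpleGraph.fromEdgeSet_adj _
  have hle : Mof G g ≤ G := by
    intro a b hab
    rcases hadj.1 hab with ⟨⟨u, hu, he⟩, _⟩
    have := h1 u hu
    rw [← he] at this
    exact this
  have hedge : ∀ {e : Sym2 α}, e ∈ (Mof G g).edgeSet ↔ (∃ u, 0 < degS G u ∧ e = g u) ∧ ¬e.IsDiag := by
    intro e
    rw [Mof, SimpleGraph.edgeSet_fromEdgeSet]
    exact Set.mem_diff _
  refine ⟨?_, ⟨hle, ?_⟩, ?_⟩
  · -- matching
    intro w
    rw [degS, Set.ncard_le_one (Set.toFinite _)]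
    intro z₁ hz₁ z₂ hz₂
    rcases hadj.1 hz₁ with ⟨⟨u₁, hu₁, he₁⟩, _⟩
    rcases hadj.1 hz₂ with ⟨⟨u₂, hu₂, he₂⟩, _⟩
    have hw₁ : G.Reachable u₁ w := h2 u₁ hu₁ w (by rw [← he₁]; exact Sym2.mem_mk_left w z₁)
    have hw₂ : G.Reachable u₂ w := h2 u₂ hu₂ w (by rw [← he₂]; exact Sym2.mem_mk_left w z₂)
    have : g u₁ = g u₂ := h3 hu₁ (hw₁.trans hw₂.symm)
    have : s(w, z₁) = s(w, z₂) := by rw [he₁, he₂, this]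
    exact Sym2.congr_right.1 this
  · -- transversal uniqueness
    intro u w0 huw
    have hu : 0 < degS G u := degS_pos_of_adj huw
    refine ⟨g u, ⟨hedge.2 ⟨⟨u, hu, rfl⟩, G.not_isDiag_of_mem_edgeSet (h1 u hu)⟩, ?_⟩, ?_⟩
    · exact ⟨(Quot.out (g u)).1, Sym2.out_fst_mem _, h2 u hu _ (Sym2.out_fst_mem _)⟩
    · rintro e' ⟨he', w, hw, hrw⟩
      rcases (hedge.1 he').1 with ⟨u', hu', rfl⟩
      have : G.Reachable u' w := h2 u' hu' w hw
      exact (h3 hu (hrw.trans this.symm)).symm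
  · -- vertex set
    ext w
    simp only [Set.mem_setOf_eq]
    constructor
    · intro hw
      rcases (degS_pos_iff _ w).1 hw with ⟨z, hz⟩
      rcases hadj.1 hz with ⟨⟨u, hu, he⟩, _⟩
      exact ⟨u, hu, by rw [← he]; exact Sym2.mem_mk_left w z⟩
    · rintro ⟨u, hu, hw⟩
      have hE : g u ∈ (Mof G g).edgeSet :=
        hedge.2 ⟨⟨u, hu, rfl⟩, G.not_isDiag_of_mem_edgeSet (h1 u hu)⟩
      rcases Sym2.mem_iff_exists.1 hw with ⟨z, hz⟩
      have : (Mof G g).Adj w z := by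
        rw [← SimpleGraph.mem_edgeSet, ← hz]; exact hE
      exact degS_pos_of_adj this

/-- Build a transversal using edge `s(y,z)` in the component of `v` and default
edges elsewhere. -/
lemma build [Fintype α] (G : SimpleGraph α) (v y z : α)
    (hyz : G.Adj y z) (hvy : G.Reachable v y) (hvz : G.Reachable v z) :
    ∃ M : SimpleGraph α, IsMatchingG M ∧ Transversal M G ∧
      {w | 0 < degS M w} =
        {w | ∃ u, 0 < degS G u ∧ ¬G.Reachable u v ∧ w ∈ pk G u} ∪ ({y, z} : Set α) := by
  classical
  set g : α → Sym2 α := fun u => if G.Reachable u v then s(y, z) else pk G u with hg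
  have h1 : ∀ u, 0 < degS G u → g u ∈ G.edgeSet := by
    intro u hu
    by_cases h : G.Reachable u v
    · simp only [hg, if_pos h]; exact hyz
    · simp only [hg, if_neg h]; exact pk_mem_edgeSet hu
  have h2 : ∀ u, 0 < degS G u → ∀ w ∈ g u, G.Reachable u w := by
    intro u hu w hw
    by_cases h : G.Reachable u v
    · simp only [hg, if_pos h, Sym2.mem_iff] at hw
      rcases hw with rfl | rfl
      · exact h.trans hvy
      · exact h.trans hvz
    · simp only [hg, if_neg h] at hw
      exact pk_reach hu hw
  have h3 : ∀ ⦃u u'⦄, 0 < degS G u → G.Reachable u u' → g u = g u' := by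
    intro u u' _ hr
    by_cases h : G.Reachable u v
    · simp only [hg, if_pos h, if_pos (hr.symm.trans h)]
    · have h' : ¬G.Reachable u' v := fun hc => h (hr.trans hc)
      simp only [hg, if_neg h, if_neg h']
      exact pk_eq_of_reachable hr
  obtain ⟨hm, ht, hV⟩ := Mof_props G g h1 h2 h3
  refine ⟨Mof G g, hm, ht, ?_⟩
  rw [hV]
  ext w
  simp only [Set.mem_setOf_eq, Set.mem_union, Set.mem_insert_iff, Set.mem_singleton_iff]
  constructor
  · rintro ⟨u, hu, hw⟩
    by_cases h : G.Reachable u v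
    · simp only [hg, if_pos h, Sym2.mem_iff] at hw
      exact Or.inr hw
    · simp only [hg, if_neg h] at hw
      exact Or.inl ⟨u, hu, h, hw⟩
  · rintro (⟨u, hu, h, hw⟩ | hw)
    · exact ⟨u, hu, by simp only [hg, if_neg h]; exact hw⟩
    · have hv : 0 < degS G v := degS_pos_of_reachable hvy.symm (degS_pos_of_adj hyz)
      refine ⟨v, hv, ?_⟩
      simp only [hg, if_pos (SimpleGraph.Reachable.refl v : G.Reachable v v), Sym2.mem_iff]
      exact hw

lemma other_nbr [Fintype α] {G : SimpleGraph α} (hG : IsPolycycle G) {a b : α}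
    (hab : G.Adj a b) : ∃ c, G.Adj b c ∧ c ≠ a := by
  have hb : degS G b = 2 := by
    rcases hG b with h | h
    · exfalso
      have := degS_pos_of_adj hab.symm
      omega
    · exact h
  rw [degS, Set.ncard_eq_two] at hb
  rcases hb with ⟨x, y, hxy, hset⟩
  have ha : a ∈ ({x, y} : Set α) := by rw [← hset]; exact hab.symm
  by_cases hx : x = a
  · refine ⟨y, ?_, by rw [← hx]; exact hxy.symm⟩
    have : y ∈ G.neighborSet b := by rw [hset]; exact Or.inr rfl
    exact this
  · refine ⟨x, ?_, hx⟩
    have : x ∈ G.neighborSet b := by rw [hset]; exact Or.inl rfl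
    exact this

lemma ncard_pair_inter [Fintype α] {x y : α} (hxy : x ≠ y) (T : Set α)
    [Decidable (x ∈ T)] [Decidable (y ∈ T)] :
    (({x, y} : Set α) ∩ T).ncard =
      (if x ∈ T then 1 else 0) + (if y ∈ T then 1 else 0) := by
  by_cases hx : x ∈ T <;> by_cases hy : y ∈ T
  · rw [if_pos hx, if_pos hy]
    have : ({x, y} : Set α) ∩ T = {x, y} := by
      apply Set.inter_eq_left.2
      rintro w (rfl | rfl); exact hx; exact hy
    rw [this, Set.ncard_pair hxy]
  · rw [if_pos hx, if_neg hy]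
    have : ({x, y} : Set α) ∩ T = {x} := by
      ext w
      constructor
      · rintro ⟨rfl | rfl, hw⟩; rfl; exact absurd hw hy
      · rintro rfl; exact ⟨Or.inl rfl, hx⟩
    rw [this, Set.ncard_singleton]
  · rw [if_neg hx, if_pos hy]
    have : ({x, y} : Set α) ∩ T = {y} := by
      ext w
      constructor
      · rintro ⟨rfl | rfl, hw⟩; exact absurd hw hx; rfl
      · rintro rfl; exact ⟨Or.inr rfl, hy⟩
    rw [this, Set.ncard_singleton]
  · rw [if_neg hx, if_neg hy]
    have : ({x, y} : Set α) ∩ T = ∅ := by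
      ext w
      simp only [Set.mem_inter_iff, Set.mem_insert_iff, Set.mem_singleton_iff,
        Set.mem_empty_iff_false, iff_false, not_and]
      rintro (rfl | rfl) hw; exact hx hw; exact hy hw
    rw [this, Set.ncard_empty]

end Helpers

/-- For two polycycles sharing a vertex, there is a transversal pair of
matchings whose vertex sets intersect in an odd number of vertices. -/
theorem transversal_matchings_with_odd_intersection
    {α : Type*} [Fintype α] (H₁ H₂ : SimpleGraph α)
    (hH₁ : IsPolycycle H₁) (hH₂ : IsPolycycle H₂)
    (hmeet : ∃ v, 0 < degS H₁ v ∧ 0 < degS H₂ v) :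
    ∃ M₁ M₂ : SimpleGraph α,
      IsMatchingG M₁ ∧ IsMatchingG M₂ ∧
      Transversal M₁ H₁ ∧ Transversal M₂ H₂ ∧
      Odd (({v | 0 < degS M₁ v} ∩ {v | 0 < degS M₂ v}).ncard) := by
  classical
  by_contra hcon
  push_neg at hcon
  obtain ⟨v, hv1, hv2⟩ := hmeet
  obtain ⟨x₁, hx₁⟩ := (degS_pos_iff H₁ v).1 hv1
  rw [SimpleGraph.mem_neighborSet] at hx₁
  obtain ⟨x₂, hx₂, hx₂v⟩ := other_nbr hH₁ hx₁
  obtain ⟨b, hb⟩ := (degS_pos_iff H₂ v).1 hv2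
  rw [SimpleGraph.mem_neighborSet] at hb
  obtain ⟨c, hc, hcv⟩ := other_nbr hH₂ hb
  obtain ⟨Ma, hMam, hMat, hMaV⟩ :=
    build H₁ v v x₁ hx₁ (SimpleGraph.Reachable.refl v) hx₁.reachable
  obtain ⟨Mb, hMbm, hMbt, hMbV⟩ :=
    build H₁ v x₁ x₂ hx₂ hx₁.reachable (hx₁.reachable.trans hx₂.reachable)
  obtain ⟨Mc, hMcm, hMct, hMcV⟩ :=
    build H₂ v v b hb (SimpleGraph.Reachable.refl v) hb.reachable
  obtain ⟨Md, hMdm, hMdt, hMdV⟩ :=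
    build H₂ v b c hc hb.reachable (hb.reachable.trans hc.reachable)
  set B₁ : Set α := {w | ∃ u, 0 < degS H₁ u ∧ ¬H₁.Reachable u v ∧ w ∈ pk H₁ u} with hB₁def
  set B₂ : Set α := {w | ∃ u, 0 < degS H₂ u ∧ ¬H₂.Reachable u v ∧ w ∈ pk H₂ u} with hB₂def
  set T : Set α := B₂ ∪ ({v, b} : Set α) with hTdef
  set T' : Set α := B₂ ∪ ({b, c} : Set α) with hT'def
  -- no vertex reachable from v lies in B₁ (resp. B₂)
  have hvB₁ : ∀ w, H₁.Reachable v w → w ∉ B₁ := by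
    rintro w hr ⟨u, hu, hnr, hw⟩
    exact hnr ((pk_reach hu hw).trans hr.symm)
  have hvB₂ : ∀ w, H₂.Reachable v w → w ∉ B₂ := by
    rintro w hr ⟨u, hu, hnr, hw⟩
    exact hnr ((pk_reach hu hw).trans hr.symm)
  -- splitting lemma
  have split : ∀ (P S : Set α), (∀ w ∈ B₁, w ∉ P) →
      ((B₁ ∪ P) ∩ S).ncard = (B₁ ∩ S).ncard + (P ∩ S).ncard := by
    intro P S hP
    rw [Set.union_inter_distrib_right]
    refine Set.ncard_union_eq ?_ (Set.toFinite _) (Set.toFinite _)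
    rw [Set.disjoint_left]
    rintro w ⟨hw, -⟩ ⟨hw', -⟩
    exact hP w hw hw'
  have hP1 : ∀ w ∈ B₁, w ∉ ({v, x₁} : Set α) := by
    rintro w hw (rfl | rfl)
    · exact hvB₁ w (SimpleGraph.Reachable.refl w) hw
    · exact hvB₁ w hx₁.reachable hw
  have hP2 : ∀ w ∈ B₁, w ∉ ({x₁, x₂} : Set α) := by
    rintro w hw (rfl | rfl)
    · exact hvB₁ w hx₁.reachable hw
    · exact hvB₁ w (hx₁.reachable.trans hx₂.reachable) hw
  -- the four parity facts
  have mkEven : ∀ (M N : SimpleGraph α), IsMatchingG M → IsMatchingG N →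
      Transversal M H₁ → Transversal N H₂ →
      Even (({w | 0 < degS M w} ∩ {w | 0 < degS N w}).ncard) := by
    intro M N h1 h2 h3 h4
    exact Nat.not_odd_iff_even.1 (hcon M N h1 h2 h3 h4)
  have E1 : Even ((B₁ ∩ T).ncard + ((({v, x₁} : Set α)) ∩ T).ncard) := by
    have h := mkEven Ma Mc hMam hMcm hMat hMct
    rw [hMaV, hMcV, split _ _ hP1] at h
    exact h
  have E2 : Even ((B₁ ∩ T).ncard + ((({x₁, x₂} : Set α)) ∩ T).ncard) := by
    have h := mkEven Mb Mc hMbm hMcm hMbt hMct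
    rw [hMbV, hMcV, split _ _ hP2] at h
    exact h
  have E3 : Even ((B₁ ∩ T').ncard + ((({v, x₁} : Set α)) ∩ T').ncard) := by
    have h := mkEven Ma Md hMam hMdm hMat hMdt
    rw [hMaV, hMdV, split _ _ hP1] at h
    exact h
  have E4 : Even ((B₁ ∩ T').ncard + ((({x₁, x₂} : Set α)) ∩ T').ncard) := by
    have h := mkEven Mb Md hMbm hMdm hMbt hMdt
    rw [hMbV, hMdV, split _ _ hP2] at h
    exact h
  -- extract the key iff
  have hiff : ∀ (S : Set α),
      Even ((B₁ ∩ S).ncard + ((({v, x₁} : Set α)) ∩ S).ncard) →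
      Even ((B₁ ∩ S).ncard + ((({x₁, x₂} : Set α)) ∩ S).ncard) →
      (v ∈ S ↔ x₂ ∈ S) := by
    intro S h1 h2
    rw [ncard_pair_inter hx₁.ne S] at h1
    rw [ncard_pair_inter hx₂.ne S] at h2
    obtain ⟨k1, hk1⟩ := h1
    obtain ⟨k2, hk2⟩ := h2
    by_cases hv : v ∈ S <;> by_cases h1' : x₁ ∈ S <;> by_cases h2' : x₂ ∈ S <;>
      simp only [hv, h1', h2', if_true, if_false, iff_true, iff_false] at hk1 hk2 ⊢ <;>
      first | trivial | omega
  have hTT : v ∈ T ↔ x₂ ∈ T := hiff T E1 E2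
  have hTT' : v ∈ T' ↔ x₂ ∈ T' := hiff T' E3 E4
  -- final contradiction
  have hvT : v ∈ T := Or.inr (Set.mem_insert v _)
  have hvT' : v ∉ T' := by
    rintro (hB | (rfl | rfl))
    · exact hvB₂ v (SimpleGraph.Reachable.refl v) hB
    · exact hb.ne rfl
    · exact hcv rfl
  have hx₂T : x₂ ∈ T := hTT.1 hvT
  have hx₂T' : x₂ ∈ T' := by
    rcases hx₂T with hB | (rfl | rfl)
    · exact Or.inl hB
    · exact absurd rfl hx₂v
    · exact Or.inr (Set.mem_insert x₂ _)
  exact hvT' (hTT'.2 hx₂T')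
end
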